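/- arXiv:1607.01156 — 3 statements merged into one kernel-verified Lean document; each statement's English description precedes it below -/
import Mathlib

section
/- Let τ ∈ [0,1], c ∈ ℝ, and let (u,v) be a nonnegative classical (C² up to the boundary) solution, L-periodic in x, on Ω = (-a,a)×ℝ of the first-homotopy system L_ε u - c u_s = u[r_u - γ_u(u + τv + (1-τ)q/K)] + μ(v - u), L_ε v - c v_s = v[r_v - γ_v(τu + (1-τ)p/K + v)] + μ(u - v), with boundary conditions (u,v)(-a,x) = (Kp(x), Kq(x)) and (u,v)(a,x) = (0,0). Then u(s,x) + v(s,x) ≤ C := max(2r^∞/γ⁰, K·max_x(p(x)+q(x))) for all (s,x) ∈ [-a,a]×ℝ, and u(s,x) > 0 and v(s,x) > 0 for all (s,x) ∈ (-a,a)×ℝ. -/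
open Set Filter Topology

noncomputable def pds (u : ℝ → ℝ → ℝ) (s x : ℝ) : ℝ := deriv (fun s' => u s' x) s
noncomputable def pdss (u : ℝ → ℝ → ℝ) (s x : ℝ) : ℝ := deriv (deriv (fun s' => u s' x)) s
noncomputable def pdxx (u : ℝ → ℝ → ℝ) (s x : ℝ) : ℝ := deriv (deriv (u s)) x
noncomputable def pdxs (u : ℝ → ℝ → ℝ) (s x : ℝ) : ℝ :=
  deriv (fun x' => deriv (fun s' => u s' x') s) x

/-- 1-D second derivative test at a local min. -/
lemma oneDimTest {g φ : ℝ → ℝ} {m : ℝ}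
    (hg : ∀ᶠ t in 𝓝 (0:ℝ), HasDerivAt g (φ t) t)
    (hφ : HasDerivAt φ m 0) (hmin : IsLocalMin g 0) : 0 ≤ m := by
  by_contra hm
  push_neg at hm
  have hφ0 : φ 0 = 0 := by
    have h1 : deriv g 0 = φ 0 := hg.self_of_nhds.deriv
    have h2 : deriv g 0 = 0 := hmin.deriv_eq_zero
    linarith [h1, h2]
  have hslope : Tendsto (fun t => φ t / t) (𝓝[>] (0:ℝ)) (𝓝 m) := by
    have := hasDerivAt_iff_tendsto_slope.1 hφ
    have h := this.mono_left (nhdsWithin_mono 0 (by intro t ht; exact ne_of_gt ht : Ioi (0:ℝ) ⊆ {0}ᶜ))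
    convert h using 1
    funext t
    simp [slope, hφ0, div_eq_inv_mul]
  have hEneg : ∀ᶠ t in 𝓝[>] (0:ℝ), φ t < 0 := by
    have h1 : ∀ᶠ t in 𝓝[>] (0:ℝ), φ t / t < m / 2 :=
      hslope.eventually_lt_const (by linarith)
    filter_upwards [h1, self_mem_nhdsWithin] with t ht ht'
    have ht0 : 0 < t := ht'
    have : φ t < m / 2 * t := by
      have := (div_lt_iff₀ ht0).1 ht
      linarith
    nlinarith
  have hEg : ∀ᶠ t in 𝓝[>] (0:ℝ), HasDerivAt g (φ t) t :=
    hg.filter_mono nhdsWithin_le_nhds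
  obtain ⟨sE, hsE, hsub⟩ := (hEneg.and hEg).exists_mem
  obtain ⟨δ, hδ0, hδsub⟩ := mem_nhdsGT_iff_exists_Ioc_subset.1 hsE
  have hEmin : ∀ᶠ t in 𝓝[>] (0:ℝ), g 0 ≤ g t := hmin.filter_mono nhdsWithin_le_nhds
  have hIoc : ∀ᶠ t in 𝓝[>] (0:ℝ), t ∈ Ioc 0 δ :=
    eventually_of_mem (mem_nhdsGT_iff_exists_Ioc_subset.2 ⟨δ, hδ0, subset_rfl⟩) (fun _ h => h)
  obtain ⟨t₀, ht₀, ht₀mem⟩ := (hEmin.and hIoc).exists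
  have ht₀0 : 0 < t₀ := ht₀mem.1
  have hanti : StrictAntiOn g (Icc 0 t₀) := by
    apply strictAntiOn_of_deriv_neg (convex_Icc _ _)
    · intro t ht
      rcases eq_or_lt_of_le ht.1 with h0 | h0
      · cases h0
        exact hg.self_of_nhds.continuousAt.continuousWithinAt
      · exact ((hsub _ (hδsub ⟨h0, le_trans ht.2 ht₀mem.2⟩)).2.continuousAt).continuousWithinAt
    · intro t ht
      rw [interior_Icc] at ht
      have htm : t ∈ Ioc 0 δ := ⟨ht.1, le_trans ht.2.le ht₀mem.2⟩
      have := hsub _ (hδsub htm)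
      rw [this.2.deriv]
      exact this.1
  have : g t₀ < g 0 := hanti ⟨le_refl 0, ht₀0.le⟩ ⟨ht₀0.le, le_refl t₀⟩ ht₀0
  linarith

/-- At an interior local minimum, the first derivative vanishes and the second
derivative is nonnegative in every direction. -/
lemma minHessian {F : ℝ × ℝ → ℝ} {f' : ℝ × ℝ → (ℝ × ℝ →L[ℝ] ℝ)}
    {H : (ℝ × ℝ) →L[ℝ] ((ℝ × ℝ) →L[ℝ] ℝ)} {z : ℝ × ℝ}
    (hev : ∀ᶠ y in 𝓝 z, HasFDerivAt F (f' y) y)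
    (hH : HasFDerivAt f' H z) (hmin : IsLocalMin F z) (d : ℝ × ℝ) :
    f' z d = 0 ∧ 0 ≤ H d d := by
  set ℓ : ℝ → ℝ × ℝ := fun t => z + t • d with hℓ
  have hline : ∀ t : ℝ, HasDerivAt ℓ d t := by
    intro t
    have h1 : HasDerivAt (fun t : ℝ => t • d) ((1:ℝ) • d) t := (hasDerivAt_id t).smul_const d
    have h2 := h1.const_add z
    rw [one_smul] at h2
    exact h2
  have hℓ0 : ℓ 0 = z := by simp [hℓ]
  have htend : Tendsto ℓ (𝓝 0) (𝓝 z) := by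
    have := (hline 0).continuousAt.tendsto
    rwa [hℓ0] at this
  set g : ℝ → ℝ := fun t => F (ℓ t) with hgdef
  set φ : ℝ → ℝ := fun t => f' (ℓ t) d with hφdef
  have hgev : ∀ᶠ t in 𝓝 (0:ℝ), HasDerivAt g (φ t) t := by
    filter_upwards [htend.eventually hev] with t ht
    exact ht.comp_hasDerivAt t (hline t)
  have hc : HasDerivAt (fun t => f' (ℓ t)) (H d) 0 := by
    have hH' : HasFDerivAt f' H (ℓ 0) := by rwa [hℓ0]
    exact hH'.comp_hasDerivAt 0 (hline 0)
  have hφ : HasDerivAt φ (H d d) 0 := by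
    have := hc.clm_apply (hasDerivAt_const 0 d)
    simpa using this
  have hgmin : IsLocalMin g 0 := by
    have : ∀ᶠ t in 𝓝 (0:ℝ), F z ≤ F (ℓ t) := htend.eventually hmin
    simpa [IsLocalMin, IsMinFilter, hgdef, hℓ0] using this
  constructor
  · have h1 : deriv g 0 = φ 0 := hgev.self_of_nhds.deriv
    have h2 : deriv g 0 = 0 := hgmin.deriv_eq_zero
    have : φ 0 = f' z d := by simp [hφdef, hℓ0]
    linarith [h1, h2, this]
  · exact oneDimTest hgev hφ hgmin

/-- Representation of slice partial derivatives via the Fréchet derivatives,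
for a function that is C² on the open strip `Ioo (-b) b ×ˢ univ`. -/
lemma reprPartials {u : ℝ → ℝ → ℝ} {b : ℝ} {s₀ x₀ : ℝ}
    (hreg : ContDiffOn ℝ 2 (Function.uncurry u) (Ioo (-b) b ×ˢ univ))
    (hs₀ : s₀ ∈ Ioo (-b) b) :
    let F := Function.uncurry u
    let f' := fderiv ℝ F
    let H := fderiv ℝ f' (s₀, x₀)
    (∀ᶠ y in 𝓝 (s₀, x₀), HasFDerivAt F (f' y) y) ∧
    HasFDerivAt f' H (s₀, x₀) ∧
    pds u s₀ x₀ = f' (s₀, x₀) (1, 0) ∧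
    pdss u s₀ x₀ = H (1, 0) (1, 0) ∧
    pdxs u s₀ x₀ = H (0, 1) (1, 0) ∧
    pdxx u s₀ x₀ = H (0, 1) (0, 1) ∧
    H (1, 0) (0, 1) = H (0, 1) (1, 0) := by
  intro F f' H
  have hU : IsOpen (Ioo (-b) b ×ˢ (univ : Set ℝ)) := isOpen_Ioo.prod isOpen_univ
  have hz : (s₀, x₀) ∈ Ioo (-b) b ×ˢ (univ : Set ℝ) := ⟨hs₀, mem_univ _⟩
  have hdiff : ∀ y ∈ Ioo (-b) b ×ˢ (univ : Set ℝ), HasFDerivAt F (f' y) y := by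
    intro y hy
    have : DifferentiableAt ℝ F y :=
      ((hreg.differentiableOn (by norm_num)) y hy).differentiableAt (hU.mem_nhds hy)
    exact this.hasFDerivAt
  have hev : ∀ᶠ y in 𝓝 (s₀, x₀), HasFDerivAt F (f' y) y := by
    filter_upwards [hU.mem_nhds hz] with y hy using hdiff y hy
  have hCA : ContDiffAt ℝ 2 F (s₀, x₀) := hreg.contDiffAt (hU.mem_nhds hz)
  have hf'CA : ContDiffAt ℝ 1 f' (s₀, x₀) := hCA.fderiv_right (by norm_num)
  have hH : HasFDerivAt f' H (s₀, x₀) :=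
    (hf'CA.differentiableAt (by norm_num)).hasFDerivAt
  have hslice_s : ∀ s ∈ Ioo (-b) b, ∀ x : ℝ,
      HasDerivAt (fun s' => u s' x) (f' (s, x) (1, 0)) s := by
    intro s hs x
    have hline : HasDerivAt (fun s' : ℝ => ((s', x) : ℝ × ℝ)) ((1:ℝ), (0:ℝ)) s :=
      (hasDerivAt_id s).prodMk (hasDerivAt_const s x)
    exact (hdiff (s, x) ⟨hs, mem_univ _⟩).comp_hasDerivAt s hline
  have hslice_x : ∀ x : ℝ, HasDerivAt (u s₀) (f' (s₀, x) (0, 1)) x := by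
    intro x
    have hline : HasDerivAt (fun x' : ℝ => ((s₀, x') : ℝ × ℝ)) ((0:ℝ), (1:ℝ)) x :=
      (hasDerivAt_const x s₀).prodMk (hasDerivAt_id x)
    exact (hdiff (s₀, x) ⟨hs₀, mem_univ _⟩).comp_hasDerivAt x hline
  have hHs : HasDerivAt (fun s => f' (s, x₀)) (H (1, 0)) s₀ := by
    have hline : HasDerivAt (fun s' : ℝ => ((s', x₀) : ℝ × ℝ)) ((1:ℝ), (0:ℝ)) s₀ :=
      (hasDerivAt_id s₀).prodMk (hasDerivAt_const s₀ x₀)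
    exact hH.comp_hasDerivAt s₀ hline
  have hHx : HasDerivAt (fun x => f' (s₀, x)) (H (0, 1)) x₀ := by
    have hline : HasDerivAt (fun x' : ℝ => ((s₀, x') : ℝ × ℝ)) ((0:ℝ), (1:ℝ)) x₀ :=
      (hasDerivAt_const x₀ s₀).prodMk (hasDerivAt_id x₀)
    exact hH.comp_hasDerivAt x₀ hline
  refine ⟨hev, hH, ?_, ?_, ?_, ?_, ?_⟩
  · exact (hslice_s s₀ hs₀ x₀).deriv
  · have heq : (fun s => deriv (fun s' => u s' x₀) s) =ᶠ[𝓝 s₀]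
        fun s => f' (s, x₀) (1, 0) := by
      filter_upwards [isOpen_Ioo.mem_nhds hs₀] with s hs
      exact (hslice_s s hs x₀).deriv
    have h2 : HasDerivAt (fun s => f' (s, x₀) (1, 0)) (H (1, 0) (1, 0)) s₀ := by
      have := hHs.clm_apply (hasDerivAt_const s₀ ((1:ℝ), (0:ℝ)))
      simpa using this
    rw [pdss, heq.deriv_eq, h2.deriv]
  · have heq : (fun x => deriv (fun s' => u s' x) s₀) = fun x => f' (s₀, x) (1, 0) := by
      funext x
      exact (hslice_s s₀ hs₀ x).deriv
    have h2 : HasDerivAt (fun x => f' (s₀, x) (1, 0)) (H (0, 1) (1, 0)) x₀ := by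
      have := hHx.clm_apply (hasDerivAt_const x₀ ((1:ℝ), (0:ℝ)))
      simpa using this
    rw [pdxs, heq, h2.deriv]
  · have heq : deriv (u s₀) = fun x => f' (s₀, x) (0, 1) := by
      funext x
      exact (hslice_x x).deriv
    have h2 : HasDerivAt (fun x => f' (s₀, x) (0, 1)) (H (0, 1) (0, 1)) x₀ := by
      have := hHx.clm_apply (hasDerivAt_const x₀ ((0:ℝ), (1:ℝ)))
      simpa using this
    rw [pdxx, heq, h2.deriv]
  · exact second_derivative_symmetric_of_eventually hev hH (1, 0) (0, 1)

/-- Bilinear expansion of the `(1,1)` direction. -/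
lemma expand11 (H : (ℝ × ℝ) →L[ℝ] ((ℝ × ℝ) →L[ℝ] ℝ))
    (hsym : H (1, 0) (0, 1) = H (0, 1) (1, 0)) :
    H (1, 1) (1, 1) = H (1, 0) (1, 0) + 2 * H (0, 1) (1, 0) + H (0, 1) (0, 1) := by
  have h1 : ((1:ℝ), (1:ℝ)) = ((1:ℝ), (0:ℝ)) + ((0:ℝ), (1:ℝ)) := by
    simp [Prod.ext_iff]
  rw [h1]
  simp only [map_add, ContinuousLinearMap.add_apply]
  rw [hsym]
  ring

/-- Reduce any real to a representative in `[0, L]` simultaneously for all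
`L`-periodic functions. -/
lemma reduce_mod {L : ℝ} (hL : 0 < L) (x : ℝ) :
    ∃ y ∈ Icc 0 L, ∀ f : ℝ → ℝ, (∀ t, f (t + L) = f t) → f x = f y := by
  refine ⟨x - ⌊x / L⌋ * L, ⟨Int.sub_floor_div_mul_nonneg x hL,
    (Int.sub_floor_div_mul_lt x hL).le⟩, ?_⟩
  intro f hf
  have hper : Function.Periodic f L := hf
  exact (hper.sub_int_mul_eq ⌊x / L⌋).symm

/-- A continuous periodic function attains a global max over `ℝ` on `[0,L]`. -/
lemma periodic_ub {L : ℝ} (hL : 0 < L) {f : ℝ → ℝ} (hf : Continuous f)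
    (hper : ∀ t, f (t + L) = f t) : ∃ y, ∀ x, f x ≤ f y := by
  obtain ⟨y, hy, hmax⟩ := isCompact_Icc.exists_isMaxOn (⟨0, le_refl _, hL.le⟩ : (Icc (0:ℝ) L).Nonempty)
    hf.continuousOn
  refine ⟨y, fun x => ?_⟩
  obtain ⟨z, hz, hred⟩ := reduce_mod hL x
  rw [hred f hper]
  exact isMaxOn_iff.1 hmax z hz

lemma periodic_lb {L : ℝ} (hL : 0 < L) {f : ℝ → ℝ} (hf : Continuous f)
    (hper : ∀ t, f (t + L) = f t) : ∃ y, ∀ x, f y ≤ f x := by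
  obtain ⟨y, hy⟩ := periodic_ub hL hf.neg (fun t => by simp [hper t])
  exact ⟨y, fun x => by have := hy x; simpa using this⟩
set_option maxHeartbeats 2000000 in
/-- a priori bound and positivity along the first homotopy. -/
theorem stmt9
    (L : ℝ) (hL : 0 < L)
    (ru rv γu γv μ : ℝ → ℝ)
    (hru : ContDiff ℝ (⊤ : ℕ∞) ru) (hrv : ContDiff ℝ (⊤ : ℕ∞) rv)
    (hγu : ContDiff ℝ (⊤ : ℕ∞) γu) (hγv : ContDiff ℝ (⊤ : ℕ∞) γv) (hμ : ContDiff ℝ (⊤ : ℕ∞) μ)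
    (hru_per : ∀ x, ru (x + L) = ru x) (hrv_per : ∀ x, rv (x + L) = rv x)
    (hγu_per : ∀ x, γu (x + L) = γu x) (hγv_per : ∀ x, γv (x + L) = γv x)
    (hμ_per : ∀ x, μ (x + L) = μ x)
    (hγu_pos : ∀ x, 0 < γu x) (hγv_pos : ∀ x, 0 < γv x) (hμ_pos : ∀ x, 0 < μ x)
    -- bounds on the coefficients
    (γ0 rinfty : ℝ) (hγ0 : 0 < γ0)
    (hγ0_le : ∀ x, γ0 ≤ γu x ∧ γ0 ≤ γv x)
    (hr_le : ∀ x, ru x ≤ rinfty ∧ rv x ≤ rinfty)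
    -- a positive L-periodic C² steady state (p,q)
    (p q : ℝ → ℝ)
    (hp : ContDiff ℝ 2 p) (hq : ContDiff ℝ 2 q)
    (hp_per : ∀ x, p (x + L) = p x) (hq_per : ∀ x, q (x + L) = q x)
    (hp_pos : ∀ x, 0 < p x) (hq_pos : ∀ x, 0 < q x)
    (hp_eq : ∀ x, -(deriv (deriv p) x)
        = (ru x - γu x * (p x + q x)) * p x + μ x * (q x - p x))
    (hq_eq : ∀ x, -(deriv (deriv q) x)
        = (rv x - γv x * (p x + q x)) * q x + μ x * (p x - q x))
    -- the parameters
    (K a ε : ℝ) (hK : 0 < K) (ha : 0 < a) (hε : ε ∈ Ioo (0:ℝ) 1)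
    (τ : ℝ) (hτ : τ ∈ Icc (0:ℝ) 1) (c : ℝ)
    -- a nonnegative classical solution of the first-homotopy problem
    (u v : ℝ → ℝ → ℝ)
    (hu_reg : ContDiffOn ℝ 2 (Function.uncurry u) (Icc (-a) a ×ˢ univ))
    (hv_reg : ContDiffOn ℝ 2 (Function.uncurry v) (Icc (-a) a ×ˢ univ))
    (h_per : ∀ s x, u s (x + L) = u s x ∧ v s (x + L) = v s x)
    (h_nonneg : ∀ s ∈ Icc (-a) a, ∀ x : ℝ, 0 ≤ u s x ∧ 0 ≤ v s x)
    (hu_eq : ∀ s ∈ Ioo (-a) a, ∀ x : ℝ,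
      -(pdxx u s x) - 2 * pdxs u s x - (1 + ε) * pdss u s x - c * pds u s x
        = u s x * (ru x - γu x * (u s x + (τ * v s x + (1 - τ) * q x / K)))
          + μ x * (v s x - u s x))
    (hv_eq : ∀ s ∈ Ioo (-a) a, ∀ x : ℝ,
      -(pdxx v s x) - 2 * pdxs v s x - (1 + ε) * pdss v s x - c * pds v s x
        = v s x * (rv x - γv x * ((τ * u s x + (1 - τ) * p x / K) + v s x))
          + μ x * (u s x - v s x))
    (h_bc_left : ∀ x : ℝ, u (-a) x = K * p x ∧ v (-a) x = K * q x)
    (h_bc_right : ∀ x : ℝ, u a x = 0 ∧ v a x = 0) :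
    (∀ s ∈ Icc (-a) a, ∀ x : ℝ,
        u s x + v s x ≤ max (2 * rinfty / γ0) (K * sSup (range fun y => p y + q y))) ∧
    (∀ s ∈ Ioo (-a) a, ∀ x : ℝ, 0 < u s x ∧ 0 < v s x) := by
  obtain ⟨hε0, hε1⟩ := hε
  obtain ⟨hτ0, hτ1⟩ := hτ
  have hu_reg' : ContDiffOn ℝ 2 (Function.uncurry u) (Ioo (-a) a ×ˢ univ) :=
    hu_reg.mono (prod_mono Ioo_subset_Icc_self subset_rfl)
  have hv_reg' : ContDiffOn ℝ 2 (Function.uncurry v) (Ioo (-a) a ×ˢ univ) :=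
    hv_reg.mono (prod_mono Ioo_subset_Icc_self subset_rfl)
  -- the sup of p + q
  have hpqc : Continuous (fun y => p y + q y) := hp.continuous.add hq.continuous
  have hpq_per : ∀ t, p (t + L) + q (t + L) = p t + q t := fun t => by
    rw [hp_per, hq_per]
  obtain ⟨ypq, hypq⟩ := periodic_ub hL hpqc hpq_per
  have hbddS : BddAbove (range fun y => p y + q y) := ⟨p ypq + q ypq, by
    rintro _ ⟨x, rfl⟩; exact hypq x⟩
  set S := sSup (range fun y => p y + q y) with hSdef
  have hSx : ∀ x, p x + q x ≤ S := fun x => le_csSup hbddS ⟨x, rfl⟩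
  have hS0 : 0 < S := lt_of_lt_of_le (add_pos (hp_pos 0) (hq_pos 0)) (hSx 0)
  set C := max (2 * rinfty / γ0) (K * S) with hCdef
  have hC0 : 0 < C := lt_of_lt_of_le (mul_pos hK hS0) (le_max_right _ _)
  -- max of u + v over the compact period cell
  have hWcont : ContinuousOn (fun y : ℝ × ℝ => u y.1 y.2 + v y.1 y.2)
      (Icc (-a) a ×ˢ univ) := hu_reg.continuousOn.add hv_reg.continuousOn
  have hDc : IsCompact (Icc (-a) a ×ˢ Icc (0:ℝ) L) := isCompact_Icc.prod isCompact_Icc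
  have hDne : (Icc (-a) a ×ˢ Icc (0:ℝ) L).Nonempty := by
    refine ⟨(-a, 0), ⟨⟨le_rfl, ?_⟩, ⟨le_rfl, hL.le⟩⟩⟩
    show -a ≤ a
    linarith
  have hDsub : Icc (-a) a ×ˢ Icc (0:ℝ) L ⊆ Icc (-a) a ×ˢ (univ : Set ℝ) :=
    prod_mono subset_rfl (subset_univ _)
  obtain ⟨⟨s₀, x₀⟩, hz₀D, hz₀max⟩ := hDc.exists_isMaxOn hDne (hWcont.mono hDsub)
  have hglobmax : ∀ s ∈ Icc (-a) a, ∀ x : ℝ, u s x + v s x ≤ u s₀ x₀ + v s₀ x₀ := by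
    intro s hs x
    obtain ⟨y, hy, hred⟩ := reduce_mod hL x
    have h2 : u s x + v s x = u s y + v s y :=
      hred (fun t => u s t + v s t) (fun t => by
        show u s (t + L) + v s (t + L) = u s t + v s t
        rw [(h_per s t).1, (h_per s t).2])
    rw [h2]
    exact isMaxOn_iff.1 hz₀max (s, y) ⟨hs, hy⟩
  have hs₀Icc : s₀ ∈ Icc (-a) a := hz₀D.1
  -- Part 1: the maximum is at most C
  have hMle : u s₀ x₀ + v s₀ x₀ ≤ C := by
    by_contra hMC
    push_neg at hMC
    have hMpos : 0 < u s₀ x₀ + v s₀ x₀ := lt_trans hC0 hMC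
    rcases eq_or_lt_of_le hs₀Icc.1 with hb1 | hb1
    · have h1 : u s₀ x₀ = K * p x₀ := by rw [← hb1]; exact (h_bc_left x₀).1
      have h2 : v s₀ x₀ = K * q x₀ := by rw [← hb1]; exact (h_bc_left x₀).2
      have h3 : u s₀ x₀ + v s₀ x₀ ≤ K * S := by
        rw [h1, h2, ← mul_add]
        exact mul_le_mul_of_nonneg_left (hSx x₀) hK.le
      have h4 : K * S ≤ C := le_max_right _ _
      linarith
    rcases eq_or_lt_of_le hs₀Icc.2 with hb2 | hb2
    · have h1 : u s₀ x₀ = 0 := by rw [hb2]; exact (h_bc_right x₀).1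
      have h2 : v s₀ x₀ = 0 := by rw [hb2]; exact (h_bc_right x₀).2
      linarith
    have hs₀ : s₀ ∈ Ioo (-a) a := ⟨hb1, hb2⟩
    obtain ⟨hevu, hHu, hpdsu, hpdssu, hpdxsu, hpdxxu, hsymu⟩ :=
      reprPartials (x₀ := x₀) hu_reg' hs₀
    obtain ⟨hevv, hHv, hpdsv, hpdssv, hpdxsv, hpdxxv, hsymv⟩ :=
      reprPartials (x₀ := x₀) hv_reg' hs₀
    have hlocmin : IsLocalMin
        (fun y : ℝ × ℝ => -(Function.uncurry u y + Function.uncurry v y)) (s₀, x₀) := by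
      have hnb : (Icc (-a) a ×ˢ (univ : Set ℝ)) ∈ 𝓝 ((s₀, x₀) : ℝ × ℝ) :=
        mem_of_superset ((isOpen_Ioo.prod isOpen_univ).mem_nhds ⟨hs₀, mem_univ _⟩)
          (prod_mono Ioo_subset_Icc_self subset_rfl)
      filter_upwards [hnb] with y hy
      have := hglobmax y.1 hy.1 y.2
      show -(u s₀ x₀ + v s₀ x₀) ≤ -(u y.1 y.2 + v y.1 y.2)
      linarith
    have hevs : ∀ᶠ y in 𝓝 ((s₀, x₀) : ℝ × ℝ), HasFDerivAt
        (fun y => -(Function.uncurry u y + Function.uncurry v y))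
        (-(fderiv ℝ (Function.uncurry u) y + fderiv ℝ (Function.uncurry v) y)) y := by
      filter_upwards [hevu, hevv] with y h1 h2
      exact (h1.add h2).neg
    have hHs : HasFDerivAt
        (fun y => -(fderiv ℝ (Function.uncurry u) y + fderiv ℝ (Function.uncurry v) y))
        (-(fderiv ℝ (fderiv ℝ (Function.uncurry u)) (s₀, x₀)
          + fderiv ℝ (fderiv ℝ (Function.uncurry v)) (s₀, x₀))) (s₀, x₀) :=
      (hHu.add hHv).neg
    obtain ⟨hd11, hE11s⟩ := minHessian hevs hHs hlocmin (1, 1)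
    obtain ⟨hd10, hAs⟩ := minHessian hevs hHs hlocmin (1, 0)
    simp only [ContinuousLinearMap.neg_apply, ContinuousLinearMap.add_apply] at hd11 hE11s hd10 hAs
    have hEu := expand11 _ hsymu
    have hEv := expand11 _ hsymv
    have hueq := hu_eq s₀ hs₀ x₀
    rw [hpdxxu, hpdxsu, hpdssu, hpdsu] at hueq
    have hveq := hv_eq s₀ hs₀ x₀
    rw [hpdxxv, hpdxsv, hpdssv, hpdsv] at hveq
    set Au := fderiv ℝ (fderiv ℝ (Function.uncurry u)) (s₀, x₀) (1, 0) (1, 0) with hAudef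
    set Bu := fderiv ℝ (fderiv ℝ (Function.uncurry u)) (s₀, x₀) (0, 1) (1, 0) with hBudef
    set Cu := fderiv ℝ (fderiv ℝ (Function.uncurry u)) (s₀, x₀) (0, 1) (0, 1) with hCudef
    set Eu := fderiv ℝ (fderiv ℝ (Function.uncurry u)) (s₀, x₀) (1, 1) (1, 1) with hEudef
    set Du := fderiv ℝ (Function.uncurry u) (s₀, x₀) (1, 0) with hDudef
    set Av := fderiv ℝ (fderiv ℝ (Function.uncurry v)) (s₀, x₀) (1, 0) (1, 0) with hAvdef
    set Bv := fderiv ℝ (fderiv ℝ (Function.uncurry v)) (s₀, x₀) (0, 1) (1, 0) with hBvdef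
    set Cv := fderiv ℝ (fderiv ℝ (Function.uncurry v)) (s₀, x₀) (0, 1) (0, 1) with hCvdef
    set Ev := fderiv ℝ (fderiv ℝ (Function.uncurry v)) (s₀, x₀) (1, 1) (1, 1) with hEvdef
    set Dv := fderiv ℝ (Function.uncurry v) (s₀, x₀) (1, 0) with hDvdef
    have hDsum : Du + Dv = 0 := by linarith [hd10]
    have hEsum : Eu + Ev ≤ 0 := by linarith [hE11s]
    have hAsum : Au + Av ≤ 0 := by linarith [hAs]
    have hu0 := (h_nonneg s₀ hs₀Icc x₀).1
    have hv0 := (h_nonneg s₀ hs₀Icc x₀).2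
    have hRHS : 0 ≤ u s₀ x₀ * (ru x₀ - γu x₀ * (u s₀ x₀ + (τ * v s₀ x₀ + (1 - τ) * q x₀ / K)))
        + μ x₀ * (v s₀ x₀ - u s₀ x₀)
        + (v s₀ x₀ * (rv x₀ - γv x₀ * ((τ * u s₀ x₀ + (1 - τ) * p x₀ / K) + v s₀ x₀))
          + μ x₀ * (u s₀ x₀ - v s₀ x₀)) := by
      have hh : ε * (Au + Av) ≤ 0 := mul_nonpos_of_nonneg_of_nonpos hε0.le hAsum
      have hcD : c * (Du + Dv) = 0 := by rw [hDsum]; ring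
      linarith only [hueq, hveq, hEu, hEv, hEsum, hcD, hh]
    have hXu : u s₀ x₀ ≤ u s₀ x₀ + (τ * v s₀ x₀ + (1 - τ) * q x₀ / K) := by
      have h1 : 0 ≤ τ * v s₀ x₀ := mul_nonneg hτ0 hv0
      have h2 : 0 ≤ (1 - τ) * q x₀ / K :=
        div_nonneg (mul_nonneg (by linarith) (hq_pos x₀).le) hK.le
      linarith
    have hYv : v s₀ x₀ ≤ (τ * u s₀ x₀ + (1 - τ) * p x₀ / K) + v s₀ x₀ := by
      have h1 : 0 ≤ τ * u s₀ x₀ := mul_nonneg hτ0 hu0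
      have h2 : 0 ≤ (1 - τ) * p x₀ / K :=
        div_nonneg (mul_nonneg (by linarith) (hp_pos x₀).le) hK.le
      linarith
    have h1 : γ0 * u s₀ x₀ ≤ γu x₀ * (u s₀ x₀ + (τ * v s₀ x₀ + (1 - τ) * q x₀ / K)) :=
      mul_le_mul (hγ0_le x₀).1 hXu hu0 (hγu_pos x₀).le
    have h2 : u s₀ x₀ * (ru x₀ - γu x₀ * (u s₀ x₀ + (τ * v s₀ x₀ + (1 - τ) * q x₀ / K)))
        ≤ u s₀ x₀ * (rinfty - γ0 * u s₀ x₀) :=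
      mul_le_mul_of_nonneg_left (by linarith [(hr_le x₀).1]) hu0
    have h3 : γ0 * v s₀ x₀ ≤ γv x₀ * ((τ * u s₀ x₀ + (1 - τ) * p x₀ / K) + v s₀ x₀) :=
      mul_le_mul (hγ0_le x₀).2 hYv hv0 (hγv_pos x₀).le
    have h4 : v s₀ x₀ * (rv x₀ - γv x₀ * ((τ * u s₀ x₀ + (1 - τ) * p x₀ / K) + v s₀ x₀))
        ≤ v s₀ x₀ * (rinfty - γ0 * v s₀ x₀) :=
      mul_le_mul_of_nonneg_left (by linarith [(hr_le x₀).2]) hv0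
    have h5 : 2 * rinfty / γ0 < u s₀ x₀ + v s₀ x₀ := lt_of_le_of_lt (le_max_left _ _) hMC
    have h6 : 2 * rinfty < (u s₀ x₀ + v s₀ x₀) * γ0 := (div_lt_iff₀ hγ0).1 h5
    have hT : 0 ≤ u s₀ x₀ * (rinfty - γ0 * u s₀ x₀) + v s₀ x₀ * (rinfty - γ0 * v s₀ x₀) := by
      linarith only [hRHS, h2, h4]
    have hp1 : 0 ≤ γ0 * (u s₀ x₀ - v s₀ x₀) ^ 2 := mul_nonneg hγ0.le (sq_nonneg _)
    have hp2 : 0 < ((u s₀ x₀ + v s₀ x₀) * γ0 - 2 * rinfty) * (u s₀ x₀ + v s₀ x₀) :=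
      mul_pos (by linarith only [h6]) hMpos
    linarith only [hT, hp1, hp2]
  have part1 : ∀ s ∈ Icc (-a) a, ∀ x : ℝ, u s x + v s x ≤ C :=
    fun s hs x => le_trans (hglobmax s hs x) hMle
  refine ⟨part1, ?_⟩
  -- ===== Part 2 : positivity =====
  have hub : ∀ s ∈ Icc (-a) a, ∀ x : ℝ, u s x ≤ C := by
    intro s hs x
    have h1 := part1 s hs x
    linarith [(h_nonneg s hs x).2]
  have hvb : ∀ s ∈ Icc (-a) a, ∀ x : ℝ, v s x ≤ C := by
    intro s hs x
    have h1 := part1 s hs x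
    linarith [(h_nonneg s hs x).1]
  obtain ⟨ym, hym⟩ := periodic_lb hL hpqc hpq_per
  have hm₀ : 0 < p ym + q ym := add_pos (hp_pos ym) (hq_pos ym)
  set B : ℝ → ℝ := fun x => |ru x| + |rv x| + (γu x + γv x) * (2 * C + (p x + q x) / K)
    with hBdef
  have hBc : Continuous B := by
    refine ((hru.continuous.abs.add hrv.continuous.abs).add ?_)
    exact (hγu.continuous.add hγv.continuous).mul
      (continuous_const.add ((hp.continuous.add hq.continuous).div_const K))
  have hBper : ∀ t, B (t + L) = B t := by
    intro t
    simp only [hBdef]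
    rw [hru_per, hrv_per, hγu_per, hγv_per, hp_per, hq_per]
  obtain ⟨yB, hyB⟩ := periodic_ub hL hBc hBper
  set Λ := max (B yB) 0 with hΛdef
  have hΛ : ∀ x, B x ≤ Λ := fun x => le_trans (hyB x) (le_max_left _ _)
  have hΛ0 : 0 ≤ Λ := le_max_right _ _
  set lam := 1 + |c| + Λ with hlamdef
  have hlam1 : 1 ≤ lam := by
    have := abs_nonneg c
    simp only [hlamdef]
    linarith
  have hlam0 : 0 < lam := by linarith
  set δ := K * (p ym + q ym) * Real.exp (-(lam * (2 * a))) with hδdef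
  have hδ : 0 < δ := mul_pos (mul_pos hK hm₀) (Real.exp_pos _)
  set ψ : ℝ → ℝ := fun s => δ * (Real.exp (lam * (a - s)) - 1) with hψdef
  set ψd : ℝ → ℝ := fun s => -(δ * lam * Real.exp (lam * (a - s))) with hψddef
  set ψdd : ℝ → ℝ := fun s => δ * lam * lam * Real.exp (lam * (a - s)) with hψdddef
  have hinner : ∀ s : ℝ, HasDerivAt (fun t : ℝ => Real.exp (lam * (a - t)))
      (Real.exp (lam * (a - s)) * -lam) s := by
    intro s
    have h1 : HasDerivAt (fun t : ℝ => lam * (a - t)) (lam * -1) s :=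
      ((hasDerivAt_id s).const_sub a).const_mul lam
    have h2 := h1.exp
    simpa using h2
  have hψderiv : ∀ s, HasDerivAt ψ (ψd s) s := by
    intro s
    have h3 := ((hinner s).sub_const 1).const_mul δ
    have h4 : δ * (Real.exp (lam * (a - s)) * -lam) = ψd s := by
      simp only [hψddef]; ring
    rw [h4] at h3
    exact h3
  have hψdderiv : ∀ s, HasDerivAt ψd (ψdd s) s := by
    intro s
    have h3 := ((hinner s).const_mul (δ * lam)).neg
    have h4 : -(δ * lam * (Real.exp (lam * (a - s)) * -lam)) = ψdd s := by
      simp only [hψdddef]; ring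
    rw [h4] at h3
    exact h3
  have hψc : Continuous ψ :=
    continuous_iff_continuousAt.2 fun s => (hψderiv s).continuousAt
  set fstL := ContinuousLinearMap.fst ℝ ℝ ℝ with hfstLdef
  have hΨf : ∀ z : ℝ × ℝ, HasFDerivAt (fun y : ℝ × ℝ => ψ y.1) (ψd z.1 • fstL) z :=
    fun z => (hψderiv z.1).comp_hasFDerivAt z hasFDerivAt_fst
  have hΨdf : ∀ z : ℝ × ℝ, HasFDerivAt (fun y : ℝ × ℝ => ψd y.1 • fstL)
      ((ψdd z.1 • fstL).smulRight fstL) z :=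
    fun z => ((hψdderiv z.1).comp_hasFDerivAt z hasFDerivAt_fst).smul_const fstL
  -- the barrier inequality
  have hbar : ∀ s ∈ Icc (-a) a, ∀ x : ℝ, ψ s ≤ u s x + v s x := by
    have hhcont : ContinuousOn (fun y : ℝ × ℝ => u y.1 y.2 + v y.1 y.2 - ψ y.1)
        (Icc (-a) a ×ˢ univ) := hWcont.sub (hψc.comp continuous_fst).continuousOn
    obtain ⟨⟨s₁, x₁⟩, hz₁D, hz₁min⟩ := hDc.exists_isMinOn hDne (hhcont.mono hDsub)
    have hglobmin : ∀ s ∈ Icc (-a) a, ∀ x : ℝ,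
        u s₁ x₁ + v s₁ x₁ - ψ s₁ ≤ u s x + v s x - ψ s := by
      intro s hs x
      obtain ⟨y, hy, hred⟩ := reduce_mod hL x
      have h2 : u s x + v s x = u s y + v s y :=
        hred (fun t => u s t + v s t) (fun t => by
          show u s (t + L) + v s (t + L) = u s t + v s t
          rw [(h_per s t).1, (h_per s t).2])
      rw [h2]
      exact isMinOn_iff.1 hz₁min (s, y) ⟨hs, hy⟩
    have hkey : 0 ≤ u s₁ x₁ + v s₁ x₁ - ψ s₁ := by
      by_contra hneg
      push_neg at hneg
      have hs₁Icc : s₁ ∈ Icc (-a) a := hz₁D.1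
      rcases eq_or_lt_of_le hs₁Icc.1 with hb1 | hb1
      · have h1 : u s₁ x₁ = K * p x₁ := by rw [← hb1]; exact (h_bc_left x₁).1
        have h2 : v s₁ x₁ = K * q x₁ := by rw [← hb1]; exact (h_bc_left x₁).2
        have h3 : ψ s₁ = δ * Real.exp (lam * (2 * a)) - δ := by
          rw [← hb1]
          simp only [hψdef]
          have h5 : lam * (a - -a) = lam * (2 * a) := by ring
          rw [h5]
          ring
        have h4 : δ * Real.exp (lam * (2 * a)) = K * (p ym + q ym) := by
          rw [hδdef, mul_assoc, ← Real.exp_add]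
          simp
        have h5 : K * (p ym + q ym) ≤ K * (p x₁ + q x₁) :=
          mul_le_mul_of_nonneg_left (hym x₁) hK.le
        rw [h1, h2, h3] at hneg
        linarith only [h4, h5, hδ, hneg]
      rcases eq_or_lt_of_le hs₁Icc.2 with hb2 | hb2
      · have h1 : u s₁ x₁ = 0 := by rw [hb2]; exact (h_bc_right x₁).1
        have h2 : v s₁ x₁ = 0 := by rw [hb2]; exact (h_bc_right x₁).2
        have h3 : ψ s₁ = 0 := by rw [hb2]; simp [hψdef]
        rw [h1, h2, h3] at hneg
        norm_num at hneg
      have hs₁ : s₁ ∈ Ioo (-a) a := ⟨hb1, hb2⟩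
      obtain ⟨hevu, hHu, hpdsu, hpdssu, hpdxsu, hpdxxu, hsymu⟩ :=
        reprPartials (x₀ := x₁) hu_reg' hs₁
      obtain ⟨hevv, hHv, hpdsv, hpdssv, hpdxsv, hpdxxv, hsymv⟩ :=
        reprPartials (x₀ := x₁) hv_reg' hs₁
      have hlocmin : IsLocalMin
          (fun y : ℝ × ℝ => Function.uncurry u y + Function.uncurry v y - ψ y.1) (s₁, x₁) := by
        have hnb : (Icc (-a) a ×ˢ (univ : Set ℝ)) ∈ 𝓝 ((s₁, x₁) : ℝ × ℝ) :=
          mem_of_superset ((isOpen_Ioo.prod isOpen_univ).mem_nhds ⟨hs₁, mem_univ _⟩)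
            (prod_mono Ioo_subset_Icc_self subset_rfl)
        filter_upwards [hnb] with y hy
        have := hglobmin y.1 hy.1 y.2
        show u s₁ x₁ + v s₁ x₁ - ψ s₁ ≤ u y.1 y.2 + v y.1 y.2 - ψ y.1
        linarith
      have hevs : ∀ᶠ y in 𝓝 ((s₁, x₁) : ℝ × ℝ), HasFDerivAt
          (fun y => Function.uncurry u y + Function.uncurry v y - ψ y.1)
          (fderiv ℝ (Function.uncurry u) y + fderiv ℝ (Function.uncurry v) y
            - ψd y.1 • fstL) y := by
        filter_upwards [hevu, hevv] with y h1 h2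
        exact (h1.add h2).sub (hΨf y)
      have hHs : HasFDerivAt
          (fun y => fderiv ℝ (Function.uncurry u) y + fderiv ℝ (Function.uncurry v) y
            - ψd y.1 • fstL)
          (fderiv ℝ (fderiv ℝ (Function.uncurry u)) (s₁, x₁)
            + fderiv ℝ (fderiv ℝ (Function.uncurry v)) (s₁, x₁)
            - (ψdd s₁ • fstL).smulRight fstL) (s₁, x₁) :=
        (hHu.add hHv).sub (hΨdf (s₁, x₁))
      obtain ⟨hd11, hE11s⟩ := minHessian hevs hHs hlocmin (1, 1)
      obtain ⟨hd10, hAs⟩ := minHessian hevs hHs hlocmin (1, 0)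
      simp only [hfstLdef, ContinuousLinearMap.add_apply, ContinuousLinearMap.sub_apply,
        ContinuousLinearMap.smul_apply, ContinuousLinearMap.smulRight_apply,
        ContinuousLinearMap.coe_fst', smul_eq_mul] at hd11 hE11s hd10 hAs
      set Au := fderiv ℝ (fderiv ℝ (Function.uncurry u)) (s₁, x₁) (1, 0) (1, 0) with hAudef
      set Bu := fderiv ℝ (fderiv ℝ (Function.uncurry u)) (s₁, x₁) (0, 1) (1, 0) with hBudef
      set Cu := fderiv ℝ (fderiv ℝ (Function.uncurry u)) (s₁, x₁) (0, 1) (0, 1) with hCudef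
      set Eu := fderiv ℝ (fderiv ℝ (Function.uncurry u)) (s₁, x₁) (1, 1) (1, 1) with hEudef
      set Du := fderiv ℝ (Function.uncurry u) (s₁, x₁) (1, 0) with hDudef
      set Av := fderiv ℝ (fderiv ℝ (Function.uncurry v)) (s₁, x₁) (1, 0) (1, 0) with hAvdef
      set Bv := fderiv ℝ (fderiv ℝ (Function.uncurry v)) (s₁, x₁) (0, 1) (1, 0) with hBvdef
      set Cv := fderiv ℝ (fderiv ℝ (Function.uncurry v)) (s₁, x₁) (0, 1) (0, 1) with hCvdef
      set Ev := fderiv ℝ (fderiv ℝ (Function.uncurry v)) (s₁, x₁) (1, 1) (1, 1) with hEvdef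
      set Dv := fderiv ℝ (Function.uncurry v) (s₁, x₁) (1, 0) with hDvdef
      have hueq := hu_eq s₁ hs₁ x₁
      rw [hpdxxu, hpdxsu, hpdssu, hpdsu] at hueq
      have hveq := hv_eq s₁ hs₁ x₁
      rw [hpdxxv, hpdxsv, hpdssv, hpdsv] at hveq
      have hEu := expand11 _ hsymu
      have hEv := expand11 _ hsymv
      have hDsum : Du + Dv = ψd s₁ := by linarith only [hd10]
      have hAsum : ψdd s₁ ≤ Au + Av := by linarith only [hAs]
      have hEsum : ψdd s₁ ≤ Eu + Ev := by linarith only [hE11s]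
      simp only [hψddef] at hDsum
      simp only [hψdddef] at hAsum hEsum
      simp only [hψdef] at hneg
      set E := Real.exp (lam * (a - s₁)) with hEdef
      have hE : 0 < E := Real.exp_pos _
      -- lower bound on the right-hand side
      have hu₁0 := (h_nonneg s₁ hs₁Icc x₁).1
      have hv₁0 := (h_nonneg s₁ hs₁Icc x₁).2
      have hu₁C := hub s₁ hs₁Icc x₁
      have hv₁C := hvb s₁ hs₁Icc x₁
      have hτv : τ * v s₁ x₁ ≤ v s₁ x₁ := by
        have := mul_nonneg (by linarith : (0:ℝ) ≤ 1 - τ) hv₁0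
        linarith
      have hτu : τ * u s₁ x₁ ≤ u s₁ x₁ := by
        have := mul_nonneg (by linarith : (0:ℝ) ≤ 1 - τ) hu₁0
        linarith
      have hq1 : (1 - τ) * q x₁ / K ≤ q x₁ / K := by
        have h0 : (1 - τ) * q x₁ ≤ q x₁ := by
          have := mul_nonneg hτ0 (hq_pos x₁).le
          linarith
        exact (div_le_div_iff_of_pos_right hK).2 h0
      have hp1 : (1 - τ) * p x₁ / K ≤ p x₁ / K := by
        have h0 : (1 - τ) * p x₁ ≤ p x₁ := by
          have := mul_nonneg hτ0 (hp_pos x₁).le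
          linarith
        exact (div_le_div_iff_of_pos_right hK).2 h0
      have hpK : 0 ≤ p x₁ / K := div_nonneg (hp_pos x₁).le hK.le
      have hqK : 0 ≤ q x₁ / K := div_nonneg (hq_pos x₁).le hK.le
      have hsplit : (p x₁ + q x₁) / K = p x₁ / K + q x₁ / K := by ring
      have hαu : -Λ ≤ ru x₁ - γu x₁ * (u s₁ x₁ + (τ * v s₁ x₁ + (1 - τ) * q x₁ / K)) := by
        have hX0 : 0 ≤ u s₁ x₁ + (τ * v s₁ x₁ + (1 - τ) * q x₁ / K) := by
          have h6 := mul_nonneg hτ0 hv₁0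
          have h7 : 0 ≤ (1 - τ) * q x₁ / K :=
            div_nonneg (mul_nonneg (by linarith) (hq_pos x₁).le) hK.le
          linarith
        have hXle : u s₁ x₁ + (τ * v s₁ x₁ + (1 - τ) * q x₁ / K)
            ≤ 2 * C + (p x₁ + q x₁) / K := by
          rw [hsplit]
          linarith only [hτv, hq1, hu₁C, hv₁C, hpK]
        have h1 : γu x₁ * (u s₁ x₁ + (τ * v s₁ x₁ + (1 - τ) * q x₁ / K))
            ≤ (γu x₁ + γv x₁) * (2 * C + (p x₁ + q x₁) / K) :=
          mul_le_mul (by linarith [hγv_pos x₁]) hXle hX0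
            (by linarith [hγu_pos x₁, hγv_pos x₁])
        have h2 := hΛ x₁
        simp only [hBdef] at h2
        have h3 := neg_abs_le (ru x₁)
        have h4 := abs_nonneg (rv x₁)
        linarith
      have hαv : -Λ ≤ rv x₁ - γv x₁ * ((τ * u s₁ x₁ + (1 - τ) * p x₁ / K) + v s₁ x₁) := by
        have hX0 : 0 ≤ (τ * u s₁ x₁ + (1 - τ) * p x₁ / K) + v s₁ x₁ := by
          have h6 := mul_nonneg hτ0 hu₁0
          have h7 : 0 ≤ (1 - τ) * p x₁ / K :=
            div_nonneg (mul_nonneg (by linarith) (hp_pos x₁).le) hK.le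
          linarith
        have hXle : (τ * u s₁ x₁ + (1 - τ) * p x₁ / K) + v s₁ x₁
            ≤ 2 * C + (p x₁ + q x₁) / K := by
          rw [hsplit]
          linarith only [hτu, hp1, hu₁C, hv₁C, hqK]
        have h1 : γv x₁ * ((τ * u s₁ x₁ + (1 - τ) * p x₁ / K) + v s₁ x₁)
            ≤ (γu x₁ + γv x₁) * (2 * C + (p x₁ + q x₁) / K) :=
          mul_le_mul (by linarith [hγu_pos x₁]) hXle hX0
            (by linarith [hγu_pos x₁, hγv_pos x₁])
        have h2 := hΛ x₁
        simp only [hBdef] at h2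
        have h3 := neg_abs_le (rv x₁)
        have h4 := abs_nonneg (ru x₁)
        linarith
      have hlb1 : u s₁ x₁ * (-Λ) ≤ u s₁ x₁
          * (ru x₁ - γu x₁ * (u s₁ x₁ + (τ * v s₁ x₁ + (1 - τ) * q x₁ / K))) :=
        mul_le_mul_of_nonneg_left hαu hu₁0
      have hlb2 : v s₁ x₁ * (-Λ) ≤ v s₁ x₁
          * (rv x₁ - γv x₁ * ((τ * u s₁ x₁ + (1 - τ) * p x₁ / K) + v s₁ x₁)) :=
        mul_le_mul_of_nonneg_left hαv hv₁0
      -- combine everything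
      have hεA : ε * (δ * lam * lam * E) ≤ ε * (Au + Av) :=
        mul_le_mul_of_nonneg_left hAsum hε0.le
      have hΛw : Λ * (u s₁ x₁ + v s₁ x₁) ≤ Λ * (δ * (E - 1)) :=
        mul_le_mul_of_nonneg_left (by linarith only [hneg]) hΛ0
      have hcD : c * (Du + Dv) = -(c * (δ * lam * E)) := by rw [hDsum]; ring
      have hfinal : δ * lam * lam * E + ε * (δ * lam * lam * E) - c * (δ * lam * E)
          ≤ Λ * (δ * (E - 1)) := by
        linarith only [hueq, hveq, hEu, hEv, hεA, hΛw, hcD, hEsum, hlb1, hlb2]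
      have hscal : 1 ≤ lam * lam - c * lam - Λ := by
        have h1 : c * lam ≤ |c| * lam := mul_le_mul_of_nonneg_right (le_abs_self c) hlam0.le
        have h2 : Λ * 1 ≤ Λ * lam := mul_le_mul_of_nonneg_left hlam1 hΛ0
        have h3 : lam * lam = (1 + |c| + Λ) * lam := by rw [← hlamdef]
        linarith only [h1, h2, h3, hlam1, hΛ0]
      have hpos1 : 0 < δ * E := mul_pos hδ hE
      have h9 : δ * E * 1 ≤ δ * E * (lam * lam - c * lam - Λ) :=
        mul_le_mul_of_nonneg_left hscal hpos1.le
      have h10 : 0 ≤ ε * (δ * lam * lam * E) :=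
        mul_nonneg hε0.le (mul_pos (mul_pos (mul_pos hδ hlam0) hlam0) hE).le
      have h11 : 0 ≤ Λ * δ := mul_nonneg hΛ0 hδ.le
      linarith only [hfinal, h9, h10, h11, hpos1]
    intro s hs x
    have := hglobmin s hs x
    linarith only [hkey, this]
  -- positivity of u and v in the interior
  intro s hs x
  have hsIcc : s ∈ Icc (-a) a := Ioo_subset_Icc_self hs
  have hψpos : 0 < ψ s := by
    have h1 : lam * (a - s) + 1 ≤ Real.exp (lam * (a - s)) := Real.add_one_le_exp _
    have h2 : 0 < lam * (a - s) := mul_pos hlam0 (by linarith [hs.2])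
    have h3 : 0 < Real.exp (lam * (a - s)) - 1 := by linarith
    simp only [hψdef]
    exact mul_pos hδ h3
  have hnb : (Icc (-a) a ×ˢ (univ : Set ℝ)) ∈ 𝓝 ((s, x) : ℝ × ℝ) :=
    mem_of_superset ((isOpen_Ioo.prod isOpen_univ).mem_nhds ⟨hs, mem_univ _⟩)
      (prod_mono Ioo_subset_Icc_self subset_rfl)
  constructor
  · by_contra hcon
    push_neg at hcon
    have hu0 : u s x = 0 := le_antisymm hcon (h_nonneg s hsIcc x).1
    obtain ⟨hevu, hHu, hpdsu, hpdssu, hpdxsu, hpdxxu, hsymu⟩ :=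
      reprPartials (x₀ := x) hu_reg' hs
    have hlocmin : IsLocalMin (Function.uncurry u) (s, x) := by
      filter_upwards [hnb] with y hy
      have h0 := (h_nonneg y.1 hy.1 y.2).1
      show u s x ≤ u y.1 y.2
      rw [hu0]; exact h0
    obtain ⟨hd10, hAs⟩ := minHessian hevu hHu hlocmin (1, 0)
    obtain ⟨_, hE11s⟩ := minHessian hevu hHu hlocmin (1, 1)
    have hEu := expand11 _ hsymu
    have hueq := hu_eq s hs x
    rw [hpdxxu, hpdxsu, hpdssu, hpdsu, hu0] at hueq
    have hv1 : ψ s ≤ v s x := by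
      have h1 := hbar s hsIcc x
      rw [hu0, zero_add] at h1
      exact h1
    have hμv : 0 < μ x * v s x := mul_pos (hμ_pos x) (lt_of_lt_of_le hψpos hv1)
    have hεA : 0 ≤ ε * fderiv ℝ (fderiv ℝ (Function.uncurry u)) (s, x) (1, 0) (1, 0) :=
      mul_nonneg hε0.le hAs
    have hcD : c * fderiv ℝ (Function.uncurry u) (s, x) (1, 0) = 0 := by
      rw [hd10]; ring
    linarith only [hueq, hEu, hE11s, hεA, hcD, hμv]
  · by_contra hcon
    push_neg at hcon
    have hv0 : v s x = 0 := le_antisymm hcon (h_nonneg s hsIcc x).2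
    obtain ⟨hevv, hHv, hpdsv, hpdssv, hpdxsv, hpdxxv, hsymv⟩ :=
      reprPartials (x₀ := x) hv_reg' hs
    have hlocmin : IsLocalMin (Function.uncurry v) (s, x) := by
      filter_upwards [hnb] with y hy
      have h0 := (h_nonneg y.1 hy.1 y.2).2
      show v s x ≤ v y.1 y.2
      rw [hv0]; exact h0
    obtain ⟨hd10, hAs⟩ := minHessian hevv hHv hlocmin (1, 0)
    obtain ⟨_, hE11s⟩ := minHessian hevv hHv hlocmin (1, 1)
    have hEv := expand11 _ hsymv
    have hveq := hv_eq s hs x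
    rw [hpdxxv, hpdxsv, hpdssv, hpdsv, hv0] at hveq
    have hu1 : ψ s ≤ u s x := by
      have h1 := hbar s hsIcc x
      rw [hv0, add_zero] at h1
      exact h1
    have hμu : 0 < μ x * u s x := mul_pos (hμ_pos x) (lt_of_lt_of_le hψpos hu1)
    have hεA : 0 ≤ ε * fderiv ℝ (fderiv ℝ (Function.uncurry v)) (s, x) (1, 0) (1, 0) :=
      mul_nonneg hε0.le hAs
    have hcD : c * fderiv ℝ (Function.uncurry v) (s, x) (1, 0) = 0 := by
      rw [hd10]; ring
    linarith only [hveq, hEv, hE11s, hεA, hcD, hμu]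
end

section
/- Let c̄ ≥ 0, λ₀ > 0 and Φ₀ = (Φ_u, Φ_v) a positive L-periodic C² pair with -Φ₀'' + 2λ₀Φ₀' + λ₀(c̄ - (1+ε)λ₀)Φ₀ - A(x)Φ₀ = 0 on ℝ and max(sup Φ_u, sup Φ_v) = 1. Set ā := max(-(1/λ₀)·log(ν·min_x min(Φ_u(x),Φ_v(x)) / (4K·max_x max(p(x),q(x)))), 1). If a ≥ a₀ + ā and c ≥ c̄, then any nonnegative classical solution (u,v), L-periodic in x, of the first-homotopy system (any τ ∈ [0,1]) L_ε u - c u_s = u[r_u - γ_u(u + τv + (1-τ)q/K)] + μ(v - u), L_ε v - c v_s = v[r_v - γ_v(τu + (1-τ)p/K + v)] + μ(u - v) on (-a,a)×ℝ with (u,v)(-a,x) = (Kp(x), Kq(x)) and (u,v)(a,x) = (0,0), satisfies sup_{(s,x) ∈ (-a₀,a₀)×ℝ}(u(s,x)+v(s,x)) < ν/2. -/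
open Set

private lemma periodic_reduce {L : ℝ} (hL : 0 < L) (x : ℝ) :
    ∃ y ∈ Icc (0:ℝ) L, ∀ f : ℝ → ℝ, (∀ t, f (t + L) = f t) → f x = f y := by
  refine ⟨x - ⌊x / L⌋ * L, ⟨Int.sub_floor_div_mul_nonneg x hL,
    (Int.sub_floor_div_mul_lt x hL).le⟩, ?_⟩
  intro f hf
  exact ((show Function.Periodic f L from hf).sub_int_mul_eq _).symm

private lemma periodic_max {L : ℝ} (hL : 0 < L) {f : ℝ → ℝ} (hf : Continuous f)
    (hper : ∀ t, f (t + L) = f t) : ∃ x₀, (∀ x, f x ≤ f x₀) ∧ sSup (range f) = f x₀ := by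
  obtain ⟨x₀, -, hx₀⟩ := (isCompact_Icc (a := (0:ℝ)) (b := L)).exists_isMaxOn
    (nonempty_Icc.2 hL.le) hf.continuousOn
  have hub : ∀ x, f x ≤ f x₀ := by
    intro x
    obtain ⟨y, hy, hred⟩ := periodic_reduce hL x
    rw [hred f hper]; exact hx₀ hy
  refine ⟨x₀, hub, ?_⟩
  exact csSup_eq_of_forall_le_of_forall_lt_exists_gt (range_nonempty f)
    (by rintro _ ⟨x, rfl⟩; exact hub x) (fun w hw => ⟨f x₀, mem_range_self _, hw⟩)

private lemma periodic_min {L : ℝ} (hL : 0 < L) {f : ℝ → ℝ} (hf : Continuous f)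
    (hper : ∀ t, f (t + L) = f t) : ∃ x₀, (∀ x, f x₀ ≤ f x) ∧ sInf (range f) = f x₀ := by
  obtain ⟨x₀, -, hx₀⟩ := (isCompact_Icc (a := (0:ℝ)) (b := L)).exists_isMinOn
    (nonempty_Icc.2 hL.le) hf.continuousOn
  have hub : ∀ x, f x₀ ≤ f x := by
    intro x
    obtain ⟨y, hy, hred⟩ := periodic_reduce hL x
    rw [hred f hper]; exact hx₀ hy
  refine ⟨x₀, hub, ?_⟩
  exact csInf_eq_of_forall_ge_of_forall_gt_exists_lt (range_nonempty f)
    (by rintro _ ⟨x, rfl⟩; exact hub x) (fun w hw => ⟨f x₀, mem_range_self _, hw⟩)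

private lemma strip_max {L b : ℝ} (hL : 0 < L) (hb : -b ≤ b) {F : ℝ × ℝ → ℝ}
    (hF : ContinuousOn F (Icc (-b) b ×ˢ univ))
    (hper : ∀ s x, F (s, x + L) = F (s, x)) :
    ∃ z₀ ∈ Icc (-b) b ×ˢ Icc (0:ℝ) L, ∀ s ∈ Icc (-b) b, ∀ x : ℝ, F (s, x) ≤ F z₀ := by
  have hcpt : IsCompact (Icc (-b) b ×ˢ Icc (0:ℝ) L) := isCompact_Icc.prod isCompact_Icc
  have hne : (Icc (-b) b ×ˢ Icc (0:ℝ) L).Nonempty :=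
    (nonempty_Icc.2 hb).prod (nonempty_Icc.2 hL.le)
  obtain ⟨z₀, hz₀, hmax⟩ := hcpt.exists_isMaxOn hne
    (hF.mono (by exact prod_mono_right (subset_univ _)))
  refine ⟨z₀, hz₀, fun s hs x => ?_⟩
  obtain ⟨y, hy, hred⟩ := periodic_reduce hL x
  rw [hred (fun t => F (s, t)) (fun t => hper s t)]
  exact hmax ⟨hs, hy⟩

private lemma strip_min {L b : ℝ} (hL : 0 < L) (hb : -b ≤ b) {F : ℝ × ℝ → ℝ}
    (hF : ContinuousOn F (Icc (-b) b ×ˢ univ))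
    (hper : ∀ s x, F (s, x + L) = F (s, x)) :
    ∃ z₀ ∈ Icc (-b) b ×ˢ Icc (0:ℝ) L, ∀ s ∈ Icc (-b) b, ∀ x : ℝ, F z₀ ≤ F (s, x) := by
  obtain ⟨z₀, hz₀, hmax⟩ := strip_max hL hb (F := fun z => -F z) hF.neg
    (fun s t => by simp [hper s t])
  exact ⟨z₀, hz₀, fun s hs x => by have := hmax s hs x; simpa using this⟩
open Set Filter

private lemma hasDerivAt_slice {F : ℝ × ℝ → ℝ} {z : ℝ × ℝ}
    (hF : DifferentiableAt ℝ F z) {c : ℝ → ℝ × ℝ} {c' : ℝ × ℝ} {t : ℝ}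
    (hc : HasDerivAt c c' t) (hct : c t = z) :
    HasDerivAt (fun t' => F (c t')) (fderiv ℝ F z c') t := by
  subst hct
  exact hF.hasFDerivAt.comp_hasDerivAt t hc

-- second level: derivative of w ↦ fderiv F w d along a curve
private lemma hasDerivAt_fderiv_slice {F : ℝ × ℝ → ℝ} {z : ℝ × ℝ}
    (hF : DifferentiableAt ℝ (fderiv ℝ F) z) (d : ℝ × ℝ)
    {c : ℝ → ℝ × ℝ} {c' : ℝ × ℝ} {t : ℝ}
    (hc : HasDerivAt c c' t) (hct : c t = z) :
    HasDerivAt (fun t' => fderiv ℝ F (c t') d) (fderiv ℝ (fderiv ℝ F) z c' d) t := by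
  have hA : HasFDerivAt (fun w => fderiv ℝ F w d)
      (((ContinuousLinearMap.apply ℝ ℝ d)).comp (fderiv ℝ (fderiv ℝ F) z)) z :=
    ((ContinuousLinearMap.apply ℝ ℝ d).hasFDerivAt).comp z hF.hasFDerivAt
  subst hct
  exact hA.comp_hasDerivAt t hc

private lemma curve_s (s x : ℝ) : HasDerivAt (fun s' => ((s', x) : ℝ × ℝ)) (1, 0) s :=
  (hasDerivAt_id s).prodMk (hasDerivAt_const s x)

private lemma curve_x (s x : ℝ) : HasDerivAt (fun x' => ((s, x') : ℝ × ℝ)) (0, 1) x :=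
  (hasDerivAt_const x s).prodMk (hasDerivAt_id x)

private lemma curve_d (z : ℝ × ℝ) (d : ℝ × ℝ) (t : ℝ) :
    HasDerivAt (fun t' => z + t' • d) d t := by
  simpa using (((hasDerivAt_id t).smul_const d).const_add z)


private lemma second_deriv_test {ψ g : ℝ → ℝ} {q : ℝ}
    (hmin : IsLocalMin ψ 0) (hcont : ContinuousAt ψ 0)
    (hg : ∀ᶠ t in nhds (0:ℝ), HasDerivAt ψ (g t) t)
    (h2 : HasDerivAt g q 0) : 0 ≤ q := by
  by_contra hq
  push_neg at hq
  have hg0 : g 0 = 0 := by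
    have h1 : HasDerivAt ψ (g 0) 0 := hg.self_of_nhds
    exact hmin.hasDerivAt_eq_zero h1
  -- slope of g tends to q < 0, so g t < 0 for small t > 0
  have hslope : Tendsto (fun t => g t / t) (nhdsWithin 0 (Ioi 0)) (nhds q) := by
    have h0 := hasDerivAt_iff_tendsto_slope.1 h2
    have h' := h0.mono_left (nhdsWithin_mono 0 (by intro t ht; exact ne_of_gt ht))
    refine h'.congr (fun t => ?_)
    simp [slope, hg0, div_eq_inv_mul]
  have hneg : ∀ᶠ t in nhdsWithin 0 (Ioi 0), g t / t < q / 2 :=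
    hslope.eventually_lt_const (by linarith)
  have hgev : ∀ᶠ t in nhdsWithin 0 (Ioi 0), g t < 0 := by
    filter_upwards [hneg, self_mem_nhdsWithin] with t ht ht'
    have ht'' : (0:ℝ) < t := ht'
    have := (div_lt_iff₀ ht'').1 ht
    nlinarith
  have hgder : ∀ᶠ t in nhdsWithin 0 (Ioi 0), HasDerivAt ψ (g t) t :=
    nhdsWithin_le_nhds hg
  have hminev : ∀ᶠ t in nhdsWithin 0 (Ioi 0), ψ 0 ≤ ψ t :=
    nhdsWithin_le_nhds hmin
  obtain ⟨δ, hδ, hδprop⟩ := (mem_nhdsGT_iff_exists_Ioo_subset).1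
    (hgev.and (hgder.and hminev))
  -- ψ is strictly decreasing on [0, δ/2]
  have hδ' : (0:ℝ) < δ := hδ
  set t₀ := δ / 2 with ht₀def
  have ht₀ : 0 < t₀ := by rw [ht₀def]; linarith
  have ht₀δ : t₀ < δ := by rw [ht₀def]; linarith
  have hsub : Ioo (0:ℝ) δ ⊆ {t | g t < 0 ∧ HasDerivAt ψ (g t) t ∧ ψ 0 ≤ ψ t} := hδprop
  have hanti : StrictAntiOn ψ (Icc 0 t₀) := by
    apply strictAntiOn_of_deriv_neg (convex_Icc 0 t₀)
    · intro t ht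
      rcases eq_or_lt_of_le ht.1 with h | h
      · exact (h ▸ hcont).continuousWithinAt
      · exact ((hsub ⟨h, lt_of_le_of_lt ht.2 ht₀δ⟩).2.1.differentiableAt.continuousAt).continuousWithinAt
    · intro t ht
      rw [interior_Icc] at ht
      have hmem := hsub ⟨ht.1, lt_trans ht.2 ht₀δ⟩
      rw [hmem.2.1.deriv]
      exact hmem.1
  have h1 : ψ t₀ < ψ 0 := hanti ⟨le_refl 0, ht₀.le⟩ ⟨ht₀.le, le_refl t₀⟩ ht₀
  have h2' : ψ 0 ≤ ψ t₀ := (hsub ⟨ht₀, ht₀δ⟩).2.2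
  linarith

-- gradient vanishing at interior local min along direction d
private lemma localmin_comp_line {F : ℝ × ℝ → ℝ} {z : ℝ × ℝ}
    (hmin : IsLocalMin F z) (d : ℝ × ℝ) :
    IsLocalMin (fun t : ℝ => F (z + t • d)) 0 := by
  have hc : Filter.Tendsto (fun t : ℝ => z + t • d) (nhds 0) (nhds z) := by
    have h : Continuous (fun t : ℝ => z + t • d) := by fun_prop
    simpa using h.tendsto (0:ℝ)
  have hev := hc.eventually hmin
  refine hev.mono (fun t ht => ?_)
  simpa using ht

private lemma fderiv_zero_at_min {F : ℝ × ℝ → ℝ} {z : ℝ × ℝ}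
    (hF : DifferentiableAt ℝ F z) (hmin : IsLocalMin F z) (d : ℝ × ℝ) :
    fderiv ℝ F z d = 0 := by
  have hder : HasDerivAt (fun t : ℝ => F (z + t • d)) (fderiv ℝ F z d) 0 :=
    hasDerivAt_slice hF (curve_d z d 0) (by simp)
  exact (localmin_comp_line hmin d).hasDerivAt_eq_zero hder

private lemma quad_nonneg_at_min {F : ℝ × ℝ → ℝ} {U : Set (ℝ × ℝ)} (hU : IsOpen U)
    (hF : ContDiffOn ℝ 2 F U) {z : ℝ × ℝ} (hz : z ∈ U) (hmin : IsLocalMin F z)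
    (d : ℝ × ℝ) : 0 ≤ fderiv ℝ (fderiv ℝ F) z d d := by
  have hdiffat : ∀ w ∈ U, DifferentiableAt ℝ F w := fun w hw =>
    ((hF.contDiffAt (hU.mem_nhds hw)).differentiableAt two_ne_zero)
  have hfd : DifferentiableAt ℝ (fderiv ℝ F) z := by
    have h1 : ContDiffAt ℝ 2 F z := hF.contDiffAt (hU.mem_nhds hz)
    exact (h1.fderiv_right (m := 1) (by norm_num)).differentiableAt one_ne_zero
  -- the slice function along the line through z in direction d
  have hcurve : ∀ t : ℝ, HasDerivAt (fun t' => z + t' • d) d t := curve_d z d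
  have hmemev : ∀ᶠ t in nhds (0:ℝ), z + t • d ∈ U := by
    have hc : Filter.Tendsto (fun t : ℝ => z + t • d) (nhds 0) (nhds z) := by
      have h : Continuous (fun t : ℝ => z + t • d) := by fun_prop
      simpa using h.tendsto (0:ℝ)
    exact hc.eventually (hU.mem_nhds hz)
  have hg : ∀ᶠ t in nhds (0:ℝ), HasDerivAt (fun t' : ℝ => F (z + t' • d))
      (fderiv ℝ F (z + t • d) d) t := by
    filter_upwards [hmemev] with t ht
    exact hasDerivAt_slice (hdiffat _ ht) (hcurve t) rfl
  have h2 : HasDerivAt (fun t : ℝ => fderiv ℝ F (z + t • d) d)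
      (fderiv ℝ (fderiv ℝ F) z d d) 0 :=
    hasDerivAt_fderiv_slice hfd d (hcurve 0) (by simp)
  have hcont : ContinuousAt (fun t : ℝ => F (z + t • d)) (0:ℝ) := by
    have := hg.self_of_nhds
    simpa using this.differentiableAt.continuousAt
  exact second_deriv_test (localmin_comp_line hmin d) hcont hg h2

private lemma pd_repr {u : ℝ → ℝ → ℝ} {b : ℝ}
    (hreg : ContDiffOn ℝ 2 (Function.uncurry u) (Ioo (-b) b ×ˢ univ))
    {s x : ℝ} (hs : s ∈ Ioo (-b) b) :
    pds u s x = fderiv ℝ (Function.uncurry u) (s, x) (1, 0) ∧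
    pdss u s x = fderiv ℝ (fderiv ℝ (Function.uncurry u)) (s, x) (1, 0) (1, 0) ∧
    pdxx u s x = fderiv ℝ (fderiv ℝ (Function.uncurry u)) (s, x) (0, 1) (0, 1) ∧
    pdxs u s x = fderiv ℝ (fderiv ℝ (Function.uncurry u)) (s, x) (0, 1) (1, 0) := by
  set F := Function.uncurry u with hFdef
  have hU : IsOpen (Ioo (-b) b ×ˢ (univ : Set ℝ)) := isOpen_Ioo.prod isOpen_univ
  have hmem : ∀ s' ∈ Ioo (-b) b, ∀ x' : ℝ, ((s', x') : ℝ × ℝ) ∈ Ioo (-b) b ×ˢ (univ : Set ℝ) :=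
    fun s' hs' x' => ⟨hs', mem_univ _⟩
  have hdiff : ∀ s' ∈ Ioo (-b) b, ∀ x' : ℝ, DifferentiableAt ℝ F (s', x') := fun s' hs' x' =>
    (hreg.contDiffAt (hU.mem_nhds (hmem s' hs' x'))).differentiableAt two_ne_zero
  have hfd : ∀ s' ∈ Ioo (-b) b, ∀ x' : ℝ, DifferentiableAt ℝ (fderiv ℝ F) (s', x') :=
    fun s' hs' x' =>
    ((hreg.contDiffAt (hU.mem_nhds (hmem s' hs' x'))).fderiv_right (m := 1)
      (by norm_num)).differentiableAt one_ne_zero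
  have h1 : ∀ s' ∈ Ioo (-b) b, ∀ x' : ℝ,
      deriv (fun t => u t x') s' = fderiv ℝ F (s', x') (1, 0) := by
    intro s' hs' x'
    exact (hasDerivAt_slice (hdiff s' hs' x') (curve_s s' x') rfl).deriv
  have h2 : ∀ s' ∈ Ioo (-b) b, ∀ x' : ℝ,
      deriv (u s') x' = fderiv ℝ F (s', x') (0, 1) := by
    intro s' hs' x'
    exact (hasDerivAt_slice (hdiff s' hs' x') (curve_x s' x') rfl).deriv
  refine ⟨h1 s hs x, ?_, ?_, ?_⟩
  · show deriv (deriv (fun s' => u s' x)) s = _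
    have hev : (deriv (fun t => u t x)) =ᶠ[nhds s] fun s' => fderiv ℝ F (s', x) (1, 0) := by
      filter_upwards [Ioo_mem_nhds hs.1 hs.2] with s' hs'
      exact h1 s' hs' x
    rw [hev.deriv_eq]
    exact (hasDerivAt_fderiv_slice (hfd s hs x) (1,0) (curve_s s x) rfl).deriv
  · show deriv (deriv (u s)) x = _
    have hfun : deriv (u s) = fun x' => fderiv ℝ F (s, x') (0, 1) :=
      funext (fun x' => h2 s hs x')
    rw [hfun]
    exact (hasDerivAt_fderiv_slice (hfd s hs x) (0,1) (curve_x s x) rfl).deriv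
  · show deriv (fun x' => deriv (fun s' => u s' x') s) x = _
    have hfun : (fun x' => deriv (fun s' => u s' x') s) = fun x' => fderiv ℝ F (s, x') (1, 0) :=
      funext (fun x' => h1 s hs x')
    rw [hfun]
    exact (hasDerivAt_fderiv_slice (hfd s hs x) (1,0) (curve_x s x) rfl).deriv

private lemma W_calc (lam aa : ℝ) {φ : ℝ → ℝ} (hφ : ContDiff ℝ 2 φ) (s x : ℝ) :
    ContDiff ℝ 2 (fun w : ℝ × ℝ => Real.exp (-lam * (w.1 + aa)) * φ w.2) ∧
    fderiv ℝ (fun w : ℝ × ℝ => Real.exp (-lam * (w.1 + aa)) * φ w.2) (s, x) (1, 0)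
      = -lam * (Real.exp (-lam * (s + aa)) * φ x) ∧
    fderiv ℝ (fun w : ℝ × ℝ => Real.exp (-lam * (w.1 + aa)) * φ w.2) (s, x) (0, 1)
      = Real.exp (-lam * (s + aa)) * deriv φ x ∧
    fderiv ℝ (fderiv ℝ (fun w : ℝ × ℝ => Real.exp (-lam * (w.1 + aa)) * φ w.2)) (s, x) (1, 0) (1, 0)
      = lam ^ 2 * (Real.exp (-lam * (s + aa)) * φ x) ∧
    fderiv ℝ (fderiv ℝ (fun w : ℝ × ℝ => Real.exp (-lam * (w.1 + aa)) * φ w.2)) (s, x) (0, 1) (1, 0)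
      = -lam * (Real.exp (-lam * (s + aa)) * deriv φ x) ∧
    fderiv ℝ (fderiv ℝ (fun w : ℝ × ℝ => Real.exp (-lam * (w.1 + aa)) * φ w.2)) (s, x) (1, 0) (0, 1)
      = -lam * (Real.exp (-lam * (s + aa)) * deriv φ x) ∧
    fderiv ℝ (fderiv ℝ (fun w : ℝ × ℝ => Real.exp (-lam * (w.1 + aa)) * φ w.2)) (s, x) (0, 1) (0, 1)
      = Real.exp (-lam * (s + aa)) * deriv (deriv φ) x := by
  set W : ℝ × ℝ → ℝ := fun w => Real.exp (-lam * (w.1 + aa)) * φ w.2 with hWdef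
  have hφ1 : Differentiable ℝ φ := hφ.differentiable two_ne_zero
  have hφ' : ContDiff ℝ 1 (deriv φ) := by
    have h2 : ContDiff ℝ (1 + 1 : ℕ) φ := by exact_mod_cast hφ
    exact (contDiff_succ_iff_deriv.1 h2).2.2
  have hφ'1 : Differentiable ℝ (deriv φ) := hφ'.differentiable one_ne_zero
  have hW2 : ContDiff ℝ 2 W := by
    refine ContDiff.mul ?_ (hφ.comp contDiff_snd)
    exact (Real.contDiff_exp.of_le le_top).comp
      (contDiff_const.mul (contDiff_fst.add contDiff_const))
  have hWd : Differentiable ℝ W := hW2.differentiable two_ne_zero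
  have hfd : ∀ z : ℝ × ℝ, DifferentiableAt ℝ (fderiv ℝ W) z := fun z =>
    ((hW2.fderiv_right (m := 1) (by norm_num)).differentiable one_ne_zero) z
  have hE' : ∀ t : ℝ, HasDerivAt (fun t' => Real.exp (-lam * (t' + aa)))
      (-lam * Real.exp (-lam * (t + aa))) t := by
    intro t
    have h := (((hasDerivAt_id t).add_const aa).const_mul (-lam)).exp
    simpa [mul_comm] using h
  -- first partials, at every point
  have hW10 : ∀ s' x' : ℝ, fderiv ℝ W (s', x') (1, 0)
      = -lam * (Real.exp (-lam * (s' + aa)) * φ x') := by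
    intro s' x'
    have ha := hasDerivAt_slice (hWd (s', x')) (curve_s s' x') rfl
    have hb := (hE' s').mul_const (φ x')
    have := ha.unique hb
    rw [this]; ring
  have hW01 : ∀ s' x' : ℝ, fderiv ℝ W (s', x') (0, 1)
      = Real.exp (-lam * (s' + aa)) * deriv φ x' := by
    intro s' x'
    have ha := hasDerivAt_slice (hWd (s', x')) (curve_x s' x') rfl
    have hb := ((hφ1 x').hasDerivAt).const_mul (Real.exp (-lam * (s' + aa)))
    exact ha.unique hb
  refine ⟨hW2, hW10 s x, hW01 s x, ?_, ?_, ?_, ?_⟩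
  · -- ss
    have ha := hasDerivAt_fderiv_slice (hfd (s, x)) (1, 0) (curve_s s x) rfl
    have heq : (fun t' => fderiv ℝ W (t', x) (1, 0))
        = fun t' => -lam * (Real.exp (-lam * (t' + aa)) * φ x) := funext fun t' => hW10 t' x
    rw [heq] at ha
    have hb := ((hE' s).mul_const (φ x)).const_mul (-lam)
    have := ha.unique hb
    rw [this]; ring
  · -- xs : outer (0,1), inner (1,0)
    have ha := hasDerivAt_fderiv_slice (hfd (s, x)) (1, 0) (curve_x s x) rfl
    have heq : (fun x' => fderiv ℝ W (s, x') (1, 0))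
        = fun x' => -lam * (Real.exp (-lam * (s + aa)) * φ x') := funext fun x' => hW10 s x'
    rw [heq] at ha
    have hb := (((hφ1 x).hasDerivAt).const_mul (Real.exp (-lam * (s + aa)))).const_mul (-lam)
    have heq2 := ha.unique hb
    rw [heq2]; try ring
  · -- sx : outer (1,0), inner (0,1)
    have ha := hasDerivAt_fderiv_slice (hfd (s, x)) (0, 1) (curve_s s x) rfl
    have heq : (fun t' => fderiv ℝ W (t', x) (0, 1))
        = fun t' => Real.exp (-lam * (t' + aa)) * deriv φ x := funext fun t' => hW01 t' x
    rw [heq] at ha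
    have hb := (hE' s).mul_const (deriv φ x)
    have := ha.unique hb
    rw [this]; ring
  · -- xx
    have ha := hasDerivAt_fderiv_slice (hfd (s, x)) (0, 1) (curve_x s x) rfl
    have heq : (fun x' => fderiv ℝ W (s, x') (0, 1))
        = fun x' => Real.exp (-lam * (s + aa)) * deriv φ x' := funext fun x' => hW01 s x'
    rw [heq] at ha
    have hb := ((hφ'1 x).hasDerivAt).const_mul (Real.exp (-lam * (s + aa)))
    exact ha.unique hb

private lemma bilin_expand (B : (ℝ × ℝ) →L[ℝ] (ℝ × ℝ) →L[ℝ] ℝ) :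
    B (1, 1) (1, 1) = B (1, 0) (1, 0) + B (1, 0) (0, 1) + B (0, 1) (1, 0) + B (0, 1) (0, 1) := by
  have h : ((1, 1) : ℝ × ℝ) = (1, 0) + (0, 1) := by simp [Prod.ext_iff]
  rw [h, map_add]
  simp only [ContinuousLinearMap.add_apply, map_add]
  ring

set_option maxHeartbeats 1000000 in
private lemma no_interior_touch
    {a lam cb c eps k : ℝ} (hlam : 0 < lam) (hccb : cb ≤ c) (heps : 0 < eps) (hk : 0 < k)
    (r μf φ χ : ℝ → ℝ)
    (hμpos : ∀ x, 0 < μf x)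
    (hφ : ContDiff ℝ 2 φ) (hφpos : ∀ x, 0 < φ x)
    (hφeq : ∀ x, -(deriv (deriv φ) x) + 2 * lam * deriv φ x
        + lam * (cb - (1 + eps) * lam) * φ x - ((r x - μf x) * φ x + μf x * χ x) = 0)
    (w w' : ℝ → ℝ → ℝ)
    (hw_reg : ContDiffOn ℝ 2 (Function.uncurry w) (Ioo (-a) a ×ˢ univ))
    (G : ℝ → ℝ → ℝ)
    (hw_eq : ∀ s ∈ Ioo (-a) a, ∀ x : ℝ,
      -(pdxx w s x) - 2 * pdxs w s x - (1 + eps) * pdss w s x - c * pds w s x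
        = w s x * r x - G s x * w s x + μf x * (w' s x - w s x))
    (s₀ x₀ : ℝ) (hs₀ : s₀ ∈ Ioo (-a) a)
    (hGpos : 0 < w s₀ x₀ → 0 < G s₀ x₀)
    (h_dom : ∀ s ∈ Ioo (-a) a, ∀ x : ℝ,
      w s x ≤ k * (Real.exp (-lam * (s + a)) * φ x)
      ∧ w' s x ≤ k * (Real.exp (-lam * (s + a)) * χ x))
    (h_touch : w s₀ x₀ = k * (Real.exp (-lam * (s₀ + a)) * φ x₀)) : False := by
  classical
  set U : Set (ℝ × ℝ) := Ioo (-a) a ×ˢ univ with hUdef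
  have hU : IsOpen U := isOpen_Ioo.prod isOpen_univ
  set z₀ : ℝ × ℝ := (s₀, x₀) with hz₀def
  have hz₀ : z₀ ∈ U := ⟨hs₀, mem_univ _⟩
  set W : ℝ × ℝ → ℝ := fun wz => Real.exp (-lam * (wz.1 + a)) * φ wz.2 with hWdef
  obtain ⟨hW2, hW10, hW01, hWss, hWxs, hWsx, hWxx⟩ := W_calc lam a hφ s₀ x₀
  set F : ℝ × ℝ → ℝ := Function.uncurry w with hFdef
  set H : ℝ × ℝ → ℝ := fun zz => k * W zz - F zz with hHdef
  have hWdiff : Differentiable ℝ W := hW2.differentiable two_ne_zero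
  have hWfd : Differentiable ℝ (fderiv ℝ W) :=
    (hW2.fderiv_right (m := 1) (by norm_num)).differentiable one_ne_zero
  have hFdiff : ∀ zz ∈ U, DifferentiableAt ℝ F zz := fun zz hzz =>
    (hw_reg.contDiffAt (hU.mem_nhds hzz)).differentiableAt two_ne_zero
  have hFfd : DifferentiableAt ℝ (fderiv ℝ F) z₀ :=
    ((hw_reg.contDiffAt (hU.mem_nhds hz₀)).fderiv_right (m := 1)
      (by norm_num)).differentiableAt one_ne_zero
  have hH_reg : ContDiffOn ℝ 2 H U :=
    ((contDiff_const.mul hW2).contDiffOn).sub hw_reg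
  -- interior local minimum of H at z₀ with value 0
  have hHmin : IsLocalMin H z₀ := by
    have hH0 : H z₀ = 0 := by
      simp only [hHdef]
      rw [show F z₀ = w s₀ x₀ from rfl, h_touch]
      ring
    refine Filter.eventually_of_mem (hU.mem_nhds hz₀) (fun zz hzz => ?_)
    rw [hH0]
    have := (h_dom zz.1 hzz.1 zz.2).1
    have hFzz : F zz = w zz.1 zz.2 := rfl
    simp only [hHdef]
    rw [hFzz]
    have hWzz : W zz = Real.exp (-lam * (zz.1 + a)) * φ zz.2 := rfl
    rw [hWzz]
    linarith
  -- first-order condition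
  have hfirst : fderiv ℝ H z₀ (1, 0) = 0 :=
    fderiv_zero_at_min ((hH_reg.contDiffAt (hU.mem_nhds hz₀)).differentiableAt two_ne_zero)
      hHmin (1, 0)
  -- second-order conditions
  have hquad1 : 0 ≤ fderiv ℝ (fderiv ℝ H) z₀ (1, 1) (1, 1) :=
    quad_nonneg_at_min hU hH_reg hz₀ hHmin (1, 1)
  have hquad2 : 0 ≤ fderiv ℝ (fderiv ℝ H) z₀ (1, 0) (1, 0) :=
    quad_nonneg_at_min hU hH_reg hz₀ hHmin (1, 0)
  -- split the derivatives of H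
  have hsplit1 : ∀ d : ℝ × ℝ, fderiv ℝ H z₀ d = k * fderiv ℝ W z₀ d - fderiv ℝ F z₀ d := by
    intro d
    have h1 : HasFDerivAt H (k • fderiv ℝ W z₀ - fderiv ℝ F z₀) z₀ :=
      (((hWdiff z₀).hasFDerivAt.const_mul k)).sub (hFdiff z₀ hz₀).hasFDerivAt
    rw [h1.fderiv]
    simp [ContinuousLinearMap.sub_apply, ContinuousLinearMap.smul_apply, smul_eq_mul]
  have hsplit2 : ∀ d d' : ℝ × ℝ, fderiv ℝ (fderiv ℝ H) z₀ d d'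
      = k * fderiv ℝ (fderiv ℝ W) z₀ d d' - fderiv ℝ (fderiv ℝ F) z₀ d d' := by
    intro d d'
    have hev : fderiv ℝ H =ᶠ[nhds z₀] fun zz => k • fderiv ℝ W zz - fderiv ℝ F zz := by
      refine Filter.eventually_of_mem (hU.mem_nhds hz₀) (fun zz hzz => ?_)
      have h1 : HasFDerivAt H (k • fderiv ℝ W zz - fderiv ℝ F zz) zz :=
        (((hWdiff zz).hasFDerivAt.const_mul k)).sub (hFdiff zz hzz).hasFDerivAt
      exact h1.fderiv
    rw [hev.fderiv_eq]
    have h2 : HasFDerivAt (fun zz => k • fderiv ℝ W zz - fderiv ℝ F zz)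
        (k • fderiv ℝ (fderiv ℝ W) z₀ - fderiv ℝ (fderiv ℝ F) z₀) z₀ :=
      ((hWfd z₀).hasFDerivAt.const_smul k).sub hFfd.hasFDerivAt
    rw [h2.fderiv]
    simp [ContinuousLinearMap.sub_apply, ContinuousLinearMap.smul_apply, smul_eq_mul]
  -- identification of the pd-derivatives of w
  obtain ⟨hpds, hpdss, hpdxx, hpdxs⟩ := pd_repr hw_reg hs₀
  -- symmetry of the second derivative of F
  have hsym : fderiv ℝ (fderiv ℝ F) z₀ (1, 0) (0, 1) = fderiv ℝ (fderiv ℝ F) z₀ (0, 1) (1, 0) :=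
    (hw_reg.contDiffAt (hU.mem_nhds hz₀)).isSymmSndFDerivAt (by simp) (1, 0) (0, 1)
  set e : ℝ := Real.exp (-lam * (s₀ + a)) with hedef
  have hepos : 0 < e := Real.exp_pos _
  set A : ℝ := k * (e * φ x₀) with hAdef
  have hApos : 0 < A := by
    have := hφpos x₀
    rw [hAdef]; positivity
  -- value of pds w
  have hpds_val : pds w s₀ x₀ = k * (-lam * (e * φ x₀)) := by
    have h0 := hsplit1 (1, 0)
    rw [hfirst] at h0
    rw [hpds]
    rw [hW10] at h0
    linarith
  -- bound on the elliptic combination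
  have hBF11 : fderiv ℝ (fderiv ℝ F) z₀ (1, 1) (1, 1)
      ≤ k * fderiv ℝ (fderiv ℝ W) z₀ (1, 1) (1, 1) := by
    have := hsplit2 (1, 1) (1, 1); linarith [hquad1]
  have hBF10 : fderiv ℝ (fderiv ℝ F) z₀ (1, 0) (1, 0)
      ≤ k * fderiv ℝ (fderiv ℝ W) z₀ (1, 0) (1, 0) := by
    have := hsplit2 (1, 0) (1, 0); linarith [hquad2]
  have hexpF := bilin_expand (fderiv ℝ (fderiv ℝ F) z₀)
  have hexpW := bilin_expand (fderiv ℝ (fderiv ℝ W) z₀)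
  have hquadform : pdxx w s₀ x₀ + 2 * pdxs w s₀ x₀ + (1 + eps) * pdss w s₀ x₀
      ≤ k * (e * deriv (deriv φ) x₀ - 2 * lam * (e * deriv φ x₀)
          + (1 + eps) * lam ^ 2 * (e * φ x₀)) := by
    rw [hpdxx, hpdxs, hpdss]
    have h1 : fderiv ℝ (fderiv ℝ F) z₀ (0, 1) (0, 1)
        + 2 * fderiv ℝ (fderiv ℝ F) z₀ (0, 1) (1, 0)
        + (1 + eps) * fderiv ℝ (fderiv ℝ F) z₀ (1, 0) (1, 0)
        = fderiv ℝ (fderiv ℝ F) z₀ (1, 1) (1, 1)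
          + eps * fderiv ℝ (fderiv ℝ F) z₀ (1, 0) (1, 0) := by
      rw [hexpF, ← hsym]; ring
    have h2 := hWss
    have h3 := hWxx
    have h4 := hWxs
    have h5 := hWsx
    have hWq : fderiv ℝ (fderiv ℝ W) z₀ (1, 1) (1, 1)
        + eps * fderiv ℝ (fderiv ℝ W) z₀ (1, 0) (1, 0)
        = e * deriv (deriv φ) x₀ - 2 * lam * (e * deriv φ x₀)
          + (1 + eps) * lam ^ 2 * (e * φ x₀) := by
      rw [hexpW, h2, h3, h4, h5]; ring
    calc fderiv ℝ (fderiv ℝ F) z₀ (0, 1) (0, 1)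
        + 2 * fderiv ℝ (fderiv ℝ F) z₀ (0, 1) (1, 0)
        + (1 + eps) * fderiv ℝ (fderiv ℝ F) z₀ (1, 0) (1, 0)
        = fderiv ℝ (fderiv ℝ F) z₀ (1, 1) (1, 1)
          + eps * fderiv ℝ (fderiv ℝ F) z₀ (1, 0) (1, 0) := h1
      _ ≤ k * fderiv ℝ (fderiv ℝ W) z₀ (1, 1) (1, 1)
          + eps * (k * fderiv ℝ (fderiv ℝ W) z₀ (1, 0) (1, 0)) := by
          have h6 : eps * fderiv ℝ (fderiv ℝ F) z₀ (1, 0) (1, 0)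
              ≤ eps * (k * fderiv ℝ (fderiv ℝ W) z₀ (1, 0) (1, 0)) :=
            mul_le_mul_of_nonneg_left hBF10 heps.le
          linarith [hBF11]
      _ = k * (fderiv ℝ (fderiv ℝ W) z₀ (1, 1) (1, 1)
          + eps * fderiv ℝ (fderiv ℝ W) z₀ (1, 0) (1, 0)) := by ring
      _ = _ := by rw [hWq]
  -- put everything into the equation
  have heq := hw_eq s₀ hs₀ x₀
  have hφx := hφeq x₀
  have hw'le := (h_dom s₀ hs₀ x₀).2
  have hwval : w s₀ x₀ = A := h_touch
  have hG := hGpos (by rw [hwval]; exact hApos)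
  have hμ := hμpos x₀
  -- LHS lower bound
  have hLHS : -(pdxx w s₀ x₀) - 2 * pdxs w s₀ x₀ - (1 + eps) * pdss w s₀ x₀ - c * pds w s₀ x₀
      ≥ k * e * ((r x₀ - μf x₀) * φ x₀ + μf x₀ * χ x₀ + lam * (c - cb) * φ x₀) := by
    rw [hpds_val]
    have key : k * e * (-(deriv (deriv φ) x₀) + 2 * lam * deriv φ x₀
        + lam * (cb - (1 + eps) * lam) * φ x₀
        - ((r x₀ - μf x₀) * φ x₀ + μf x₀ * χ x₀)) = 0 := by
      rw [hφx]; ring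
    linarith [hquadform, key]
  rw [heq] at hLHS
  rw [hwval] at hLHS
  have hw'A : μf x₀ * w' s₀ x₀ ≤ μf x₀ * (k * (e * χ x₀)) :=
    mul_le_mul_of_nonneg_left hw'le hμ.le
  have hfin : lam * (c - cb) * A + G s₀ x₀ * A ≤ 0 := by
    rw [hAdef] at hLHS ⊢
    linarith [hLHS, hw'A]
  have hpos : 0 < lam * (c - cb) * A + G s₀ x₀ * A := by
    have h1 : 0 ≤ lam * (c - cb) * A := by
      have : 0 ≤ c - cb := by linarith
      positivity
    have h2 : 0 < G s₀ x₀ * A := mul_pos hG hApos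
    linarith
  linarith

set_option maxHeartbeats 2000000 in
/-- for `a ≥ a₀ + ā` and `c ≥ c̄`, solutions along the first homotopy satisfy
`sup_{(-a₀,a₀)×ℝ} (u+v) < ν/2`. -/
theorem stmt10
    (L : ℝ) (hL : 0 < L)
    (ru rv γu γv μ : ℝ → ℝ)
    (hru : ContDiff ℝ (⊤ : ℕ∞) ru) (hrv : ContDiff ℝ (⊤ : ℕ∞) rv)
    (hγu : ContDiff ℝ (⊤ : ℕ∞) γu) (hγv : ContDiff ℝ (⊤ : ℕ∞) γv) (hμ : ContDiff ℝ (⊤ : ℕ∞) μ)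
    (hru_per : ∀ x, ru (x + L) = ru x) (hrv_per : ∀ x, rv (x + L) = rv x)
    (hγu_per : ∀ x, γu (x + L) = γu x) (hγv_per : ∀ x, γv (x + L) = γv x)
    (hμ_per : ∀ x, μ (x + L) = μ x)
    (hγu_pos : ∀ x, 0 < γu x) (hγv_pos : ∀ x, 0 < γv x) (hμ_pos : ∀ x, 0 < μ x)
    -- a positive L-periodic C² steady state (p,q)
    (p q : ℝ → ℝ)
    (hp : ContDiff ℝ 2 p) (hq : ContDiff ℝ 2 q)
    (hp_per : ∀ x, p (x + L) = p x) (hq_per : ∀ x, q (x + L) = q x)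
    (hp_pos : ∀ x, 0 < p x) (hq_pos : ∀ x, 0 < q x)
    (hp_eq : ∀ x, -(deriv (deriv p) x)
        = (ru x - γu x * (p x + q x)) * p x + μ x * (q x - p x))
    (hq_eq : ∀ x, -(deriv (deriv q) x)
        = (rv x - γv x * (p x + q x)) * q x + μ x * (p x - q x))
    -- parameters
    (K ν a0 a ε : ℝ) (hK : 0 < K) (hν : 0 < ν) (ha0 : 0 < a0) (ha0a : a0 < a)
    (hε : ε ∈ Ioo (0:ℝ) 1)
    -- the eigen-data (c̄, λ₀, Φ₀)
    (cb lam0 : ℝ) (hcb : 0 ≤ cb) (hlam0 : 0 < lam0)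
    (Φu Φv : ℝ → ℝ)
    (hΦu : ContDiff ℝ 2 Φu) (hΦv : ContDiff ℝ 2 Φv)
    (hΦu_pos : ∀ x, 0 < Φu x) (hΦv_pos : ∀ x, 0 < Φv x)
    (hΦu_per : ∀ x, Φu (x + L) = Φu x) (hΦv_per : ∀ x, Φv (x + L) = Φv x)
    (hΦu_eq : ∀ x, -(deriv (deriv Φu) x) + 2 * lam0 * deriv Φu x
        + lam0 * (cb - (1 + ε) * lam0) * Φu x
        - ((ru x - μ x) * Φu x + μ x * Φv x) = 0)
    (hΦv_eq : ∀ x, -(deriv (deriv Φv) x) + 2 * lam0 * deriv Φv x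
        + lam0 * (cb - (1 + ε) * lam0) * Φv x
        - ((rv x - μ x) * Φv x + μ x * Φu x) = 0)
    (hΦ_norm : max (sSup (range Φu)) (sSup (range Φv)) = 1)
    -- the condition on a and c
    (ha : a ≥ a0 + max (-(1 / lam0) * Real.log (ν * sInf (range fun x => min (Φu x) (Φv x))
        / (4 * K * sSup (range fun x => max (p x) (q x))))) 1)
    (c : ℝ) (hc : c ≥ cb)
    -- the homotopy parameter
    (τ : ℝ) (hτ : τ ∈ Icc (0:ℝ) 1)
    -- a nonnegative classical solution of the first-homotopy problem
    (u v : ℝ → ℝ → ℝ)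
    (hu_reg : ContDiffOn ℝ 2 (Function.uncurry u) (Icc (-a) a ×ˢ univ))
    (hv_reg : ContDiffOn ℝ 2 (Function.uncurry v) (Icc (-a) a ×ˢ univ))
    (h_per : ∀ s x, u s (x + L) = u s x ∧ v s (x + L) = v s x)
    (h_nonneg : ∀ s ∈ Icc (-a) a, ∀ x : ℝ, 0 ≤ u s x ∧ 0 ≤ v s x)
    (hu_eq : ∀ s ∈ Ioo (-a) a, ∀ x : ℝ,
      -(pdxx u s x) - 2 * pdxs u s x - (1 + ε) * pdss u s x - c * pds u s x
        = u s x * (ru x - γu x * (u s x + (τ * v s x + (1 - τ) * q x / K)))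
          + μ x * (v s x - u s x))
    (hv_eq : ∀ s ∈ Ioo (-a) a, ∀ x : ℝ,
      -(pdxx v s x) - 2 * pdxs v s x - (1 + ε) * pdss v s x - c * pds v s x
        = v s x * (rv x - γv x * ((τ * u s x + (1 - τ) * p x / K) + v s x))
          + μ x * (u s x - v s x))
    (h_bc_left : ∀ x : ℝ, u (-a) x = K * p x ∧ v (-a) x = K * q x)
    (h_bc_right : ∀ x : ℝ, u a x = 0 ∧ v a x = 0) :
    ∃ m : ℝ, m < ν / 2 ∧ ∀ s ∈ Ioo (-a0) a0, ∀ x : ℝ, u s x + v s x ≤ m := by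
  classical
  have haa : 0 < a := lt_trans ha0 ha0a
  have hIccIoo : Icc (-a0) a0 ⊆ Ioo (-a) a :=
    fun t ht => ⟨lt_of_lt_of_le (by linarith) ht.1, lt_of_le_of_lt ht.2 (by linarith)⟩
  have hprodIoo : (Ioo (-a) a ×ˢ (univ : Set ℝ)) ⊆ (Icc (-a) a ×ˢ (univ : Set ℝ)) :=
    prod_mono Ioo_subset_Icc_self subset_rfl
  have hu_reg' : ContDiffOn ℝ 2 (Function.uncurry u) (Ioo (-a) a ×ˢ univ) := hu_reg.mono hprodIoo
  have hv_reg' : ContDiffOn ℝ 2 (Function.uncurry v) (Ioo (-a) a ×ˢ univ) := hv_reg.mono hprodIoo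
  have hτ0 : 0 ≤ τ := hτ.1
  have hτ1 : τ ≤ 1 := hτ.2
  -- extrema of the periodic data
  set M : ℝ := sSup (range fun x => max (p x) (q x)) with hMdef
  set φm : ℝ := sInf (range fun x => min (Φu x) (Φv x)) with hφmdef
  obtain ⟨xM, hxM_ub, hxM_eq⟩ := periodic_max hL (f := fun x => max (p x) (q x))
    ((hp.continuous).max (hq.continuous)) (fun t => by simp [hp_per, hq_per])
  obtain ⟨xm, hxm_lb, hxm_eq⟩ := periodic_min hL (f := fun x => min (Φu x) (Φv x))
    ((hΦu.continuous).min (hΦv.continuous)) (fun t => by simp [hΦu_per, hΦv_per])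
  have hMp : ∀ x, p x ≤ M := fun x => by
    rw [hMdef, hxM_eq]; exact le_trans (le_max_left _ _) (hxM_ub x)
  have hMq : ∀ x, q x ≤ M := fun x => by
    rw [hMdef, hxM_eq]; exact le_trans (le_max_right _ _) (hxM_ub x)
  have hMpos : 0 < M := lt_of_lt_of_le (hp_pos xM) (hMp xM)
  have hφmu : ∀ x, φm ≤ Φu x := fun x => by
    rw [hφmdef, hxm_eq]; exact le_trans (hxm_lb x) (min_le_left _ _)
  have hφmv : ∀ x, φm ≤ Φv x := fun x => by
    rw [hφmdef, hxm_eq]; exact le_trans (hxm_lb x) (min_le_right _ _)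
  have hφmpos : 0 < φm := by
    rw [hφmdef, hxm_eq]; exact lt_min (hΦu_pos xm) (hΦv_pos xm)
  -- Φu, Φv are bounded by 1
  obtain ⟨xu, hxu_ub, hxu_eq⟩ := periodic_max hL (f := Φu) hΦu.continuous hΦu_per
  obtain ⟨xv, hxv_ub, hxv_eq⟩ := periodic_max hL (f := Φv) hΦv.continuous hΦv_per
  have hΦu1 : ∀ x, Φu x ≤ 1 := fun x => by
    calc Φu x ≤ Φu xu := hxu_ub x
    _ = sSup (range Φu) := hxu_eq.symm
    _ ≤ max (sSup (range Φu)) (sSup (range Φv)) := le_max_left _ _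
    _ = 1 := hΦ_norm
  have hΦv1 : ∀ x, Φv x ≤ 1 := fun x => by
    calc Φv x ≤ Φv xv := hxv_ub x
    _ = sSup (range Φv) := hxv_eq.symm
    _ ≤ max (sSup (range Φu)) (sSup (range Φv)) := le_max_right _ _
    _ = 1 := hΦ_norm
  set C₀ : ℝ := K * M / φm with hC₀def
  have hC₀pos : 0 < C₀ := by rw [hC₀def]; positivity
  have hC₀φm : C₀ * φm = K * M := by
    rw [hC₀def]; field_simp
  -- the exponential weight
  have hepos : ∀ s : ℝ, 0 < Real.exp (-lam0 * (s + a)) := fun s => Real.exp_pos _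
  have hele1 : ∀ s : ℝ, -a ≤ s → Real.exp (-lam0 * (s + a)) ≤ 1 := fun s hs => by
    rw [show (1:ℝ) = Real.exp 0 by simp]
    exact Real.exp_le_exp.2 (by nlinarith)
  have helow : ∀ s : ℝ, s ≤ a → Real.exp (-lam0 * (a + a)) ≤ Real.exp (-lam0 * (s + a)) :=
    fun s hs => Real.exp_le_exp.2 (by nlinarith)
  -- no interior touching for u and for v
  have touch_u : ∀ k : ℝ, 0 < k →
      (∀ s ∈ Ioo (-a) a, ∀ x : ℝ, u s x ≤ k * (Real.exp (-lam0 * (s + a)) * Φu x)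
        ∧ v s x ≤ k * (Real.exp (-lam0 * (s + a)) * Φv x)) →
      ∀ s₀ ∈ Ioo (-a) a, ∀ x₀ : ℝ,
        u s₀ x₀ = k * (Real.exp (-lam0 * (s₀ + a)) * Φu x₀) → False := by
    intro k hk hdom s₀ hs₀ x₀ htouch
    refine no_interior_touch hlam0 hc hε.1 hk ru μ Φu Φv hμ_pos hΦu hΦu_pos hΦu_eq u v hu_reg'
      (fun s x => γu x * (u s x + (τ * v s x + (1 - τ) * q x / K)))
      (fun s hs x => by rw [hu_eq s hs x]; ring)
      s₀ x₀ hs₀ ?_ hdom htouch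
    intro hupos
    have hv0 : 0 ≤ v s₀ x₀ := (h_nonneg s₀ (Ioo_subset_Icc_self hs₀) x₀).2
    have h1 : 0 ≤ τ * v s₀ x₀ := mul_nonneg hτ0 hv0
    have h2 : 0 ≤ (1 - τ) * q x₀ / K :=
      div_nonneg (mul_nonneg (by linarith) (hq_pos x₀).le) hK.le
    exact mul_pos (hγu_pos x₀) (by linarith)
  have touch_v : ∀ k : ℝ, 0 < k →
      (∀ s ∈ Ioo (-a) a, ∀ x : ℝ, u s x ≤ k * (Real.exp (-lam0 * (s + a)) * Φu x)
        ∧ v s x ≤ k * (Real.exp (-lam0 * (s + a)) * Φv x)) →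
      ∀ s₀ ∈ Ioo (-a) a, ∀ x₀ : ℝ,
        v s₀ x₀ = k * (Real.exp (-lam0 * (s₀ + a)) * Φv x₀) → False := by
    intro k hk hdom s₀ hs₀ x₀ htouch
    refine no_interior_touch hlam0 hc hε.1 hk rv μ Φv Φu hμ_pos hΦv hΦv_pos hΦv_eq v u hv_reg'
      (fun s x => γv x * ((τ * u s x + (1 - τ) * p x / K) + v s x))
      (fun s hs x => by rw [hv_eq s hs x]; ring)
      s₀ x₀ hs₀ ?_ (fun s hs x => ⟨(hdom s hs x).2, (hdom s hs x).1⟩) htouch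
    intro hvpos
    have hu0 : 0 ≤ u s₀ x₀ := (h_nonneg s₀ (Ioo_subset_Icc_self hs₀) x₀).1
    have h1 : 0 ≤ τ * u s₀ x₀ := mul_nonneg hτ0 hu0
    have h2 : 0 ≤ (1 - τ) * p x₀ / K :=
      div_nonneg (mul_nonneg (by linarith) (hp_pos x₀).le) hK.le
    exact mul_pos (hγv_pos x₀) (by linarith)
  -- global bounds for u, v on the strip
  have hu_cont : ContinuousOn (Function.uncurry u) (Icc (-a) a ×ˢ univ) := hu_reg.continuousOn
  have hv_cont : ContinuousOn (Function.uncurry v) (Icc (-a) a ×ˢ univ) := hv_reg.continuousOn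
  obtain ⟨zu, hzu_mem, hzu⟩ := strip_max hL (by linarith : -a ≤ a) hu_cont
    (fun s x => (h_per s x).1)
  obtain ⟨zv, hzv_mem, hzv⟩ := strip_max hL (by linarith : -a ≤ a) hv_cont
    (fun s x => (h_per s x).2)
  set Bu : ℝ := Function.uncurry u zu with hBudef
  set Bv : ℝ := Function.uncurry v zv with hBvdef
  set e₀ : ℝ := Real.exp (-lam0 * (a + a)) with he₀def
  have he₀pos : 0 < e₀ := Real.exp_pos _
  set w₀ : ℝ := C₀ * (e₀ * φm) with hw₀def
  have hw₀pos : 0 < w₀ := by rw [hw₀def]; positivity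
  -- lower bound of the comparison weight on the strip
  have hWlow : ∀ s ∈ Icc (-a) a, ∀ x : ℝ,
      w₀ ≤ C₀ * (Real.exp (-lam0 * (s + a)) * Φu x)
      ∧ w₀ ≤ C₀ * (Real.exp (-lam0 * (s + a)) * Φv x) := by
    intro s hs x
    constructor
    · rw [hw₀def]
      apply mul_le_mul_of_nonneg_left _ hC₀pos.le
      exact mul_le_mul (helow s hs.2) (hφmu x) hφmpos.le (hepos s).le
    · rw [hw₀def]
      apply mul_le_mul_of_nonneg_left _ hC₀pos.le
      exact mul_le_mul (helow s hs.2) (hφmv x) hφmpos.le (hepos s).le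
  -- upper bound of the comparison weight
  have hWup : ∀ s ∈ Icc (-a) a, ∀ x : ℝ,
      C₀ * (Real.exp (-lam0 * (s + a)) * Φu x) ≤ C₀
      ∧ C₀ * (Real.exp (-lam0 * (s + a)) * Φv x) ≤ C₀ := by
    intro s hs x
    constructor
    · nth_rewrite 2 [show C₀ = C₀ * 1 by ring]
      apply mul_le_mul_of_nonneg_left _ hC₀pos.le
      exact mul_le_one₀ (hele1 s hs.1) (hΦu_pos x).le (hΦu1 x)
    · nth_rewrite 2 [show C₀ = C₀ * 1 by ring]
      apply mul_le_mul_of_nonneg_left _ hC₀pos.le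
      exact mul_le_one₀ (hele1 s hs.1) (hΦv_pos x).le (hΦv1 x)
  -- the set of admissible multiples
  set T : Set ℝ := {θ | 1 ≤ θ ∧ ∀ s ∈ Icc (-a) a, ∀ x : ℝ,
      u s x ≤ θ * C₀ * (Real.exp (-lam0 * (s + a)) * Φu x)
      ∧ v s x ≤ θ * C₀ * (Real.exp (-lam0 * (s + a)) * Φv x)} with hTdef
  have hT_ne : T.Nonempty := by
    refine ⟨max 1 (max Bu Bv / w₀), le_max_left _ _, fun s hs x => ?_⟩
    set θ₁ : ℝ := max 1 (max Bu Bv / w₀)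
    have hθ₁pos : (0:ℝ) < θ₁ := lt_of_lt_of_le one_pos (le_max_left _ _)
    have hmaxB : max Bu Bv ≤ θ₁ * w₀ := by
      have h1 : max Bu Bv / w₀ ≤ θ₁ := le_max_right _ _
      calc max Bu Bv = max Bu Bv / w₀ * w₀ := by field_simp
        _ ≤ θ₁ * w₀ := mul_le_mul_of_nonneg_right h1 hw₀pos.le
    constructor
    · have h2 : θ₁ * w₀ ≤ θ₁ * (C₀ * (Real.exp (-lam0 * (s + a)) * Φu x)) :=
        mul_le_mul_of_nonneg_left (hWlow s hs x).1 hθ₁pos.le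
      have h3 : u s x ≤ Bu := hzu s hs x
      have h4 : Bu ≤ max Bu Bv := le_max_left _ _
      have h5 : θ₁ * (C₀ * (Real.exp (-lam0 * (s + a)) * Φu x))
          = θ₁ * C₀ * (Real.exp (-lam0 * (s + a)) * Φu x) := by ring
      linarith
    · have h2 : θ₁ * w₀ ≤ θ₁ * (C₀ * (Real.exp (-lam0 * (s + a)) * Φv x)) :=
        mul_le_mul_of_nonneg_left (hWlow s hs x).2 hθ₁pos.le
      have h3 : v s x ≤ Bv := hzv s hs x
      have h4 : Bv ≤ max Bu Bv := le_max_right _ _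
      have h5 : θ₁ * (C₀ * (Real.exp (-lam0 * (s + a)) * Φv x))
          = θ₁ * C₀ * (Real.exp (-lam0 * (s + a)) * Φv x) := by ring
      linarith
  have hT_bdd : BddBelow T := ⟨1, fun θ hθ => hθ.1⟩
  set θs : ℝ := sInf T with hθsdef
  have hθs1 : 1 ≤ θs := le_csInf hT_ne (fun θ hθ => hθ.1)
  have hθsT : θs ∈ T := by
    refine ⟨hθs1, fun s hs x => ?_⟩
    have hposu : 0 < C₀ * (Real.exp (-lam0 * (s + a)) * Φu x) := by
      have := hΦu_pos x; have := hepos s; positivity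
    have hposv : 0 < C₀ * (Real.exp (-lam0 * (s + a)) * Φv x) := by
      have := hΦv_pos x; have := hepos s; positivity
    constructor
    · have hlb : u s x / (C₀ * (Real.exp (-lam0 * (s + a)) * Φu x)) ≤ θs := by
        refine le_csInf hT_ne (fun θ hθ => ?_)
        rw [div_le_iff₀ hposu]
        have := (hθ.2 s hs x).1
        linarith [mul_assoc θ C₀ (Real.exp (-lam0 * (s + a)) * Φu x)]
      rw [div_le_iff₀ hposu] at hlb
      linarith [mul_assoc θs C₀ (Real.exp (-lam0 * (s + a)) * Φu x)]
    · have hlb : v s x / (C₀ * (Real.exp (-lam0 * (s + a)) * Φv x)) ≤ θs := by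
        refine le_csInf hT_ne (fun θ hθ => ?_)
        rw [div_le_iff₀ hposv]
        have := (hθ.2 s hs x).2
        linarith [mul_assoc θ C₀ (Real.exp (-lam0 * (s + a)) * Φv x)]
      rw [div_le_iff₀ hposv] at hlb
      linarith [mul_assoc θs C₀ (Real.exp (-lam0 * (s + a)) * Φv x)]
  -- continuity of the gap function
  have hecont : Continuous (fun zz : ℝ × ℝ => Real.exp (-lam0 * (zz.1 + a))) :=
    Real.continuous_exp.comp (continuous_const.mul (continuous_fst.add continuous_const))
  have hθs_eq1 : θs = 1 := by
    by_contra hne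
    have hθsgt : 1 < θs := lt_of_le_of_ne hθs1 (Ne.symm hne)
    set D : ℝ × ℝ → ℝ := fun zz =>
      min (θs * C₀ * (Real.exp (-lam0 * (zz.1 + a)) * Φu zz.2) - Function.uncurry u zz)
        (θs * C₀ * (Real.exp (-lam0 * (zz.1 + a)) * Φv zz.2) - Function.uncurry v zz) with hDdef
    have hD_cont : ContinuousOn D (Icc (-a) a ×ˢ univ) := by
      apply ContinuousOn.inf
      · exact ((continuous_const.mul
          (hecont.mul (hΦu.continuous.comp continuous_snd))).continuousOn).sub hu_cont
      · exact ((continuous_const.mul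
          (hecont.mul (hΦv.continuous.comp continuous_snd))).continuousOn).sub hv_cont
    have hD_per : ∀ s x, D (s, x + L) = D (s, x) := by
      intro s x
      have h1 : Function.uncurry u (s, x + L) = Function.uncurry u (s, x) := (h_per s x).1
      have h2 : Function.uncurry v (s, x + L) = Function.uncurry v (s, x) := (h_per s x).2
      simp only [hDdef]
      rw [hΦu_per, hΦv_per, h1, h2]
    obtain ⟨z₀, hz₀mem, hz₀min⟩ := strip_min hL (by linarith : -a ≤ a) hD_cont hD_per
    obtain ⟨s₀, x₀⟩ := z₀
    have hs₀Icc : s₀ ∈ Icc (-a) a := hz₀mem.1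
    have hDz₀nonneg : 0 ≤ D (s₀, x₀) := by
      have h1 := (hθsT.2 s₀ hs₀Icc x₀).1
      have h2 := (hθsT.2 s₀ hs₀Icc x₀).2
      exact le_min (by simpa using sub_nonneg.2 h1) (by simpa using sub_nonneg.2 h2)
    by_cases hm₀ : 0 < D (s₀, x₀)
    · -- we can decrease θs : contradiction with the infimum
      set δ : ℝ := min (D (s₀, x₀) / C₀) (θs - 1) with hδdef
      have hδpos : 0 < δ := lt_min (by positivity) (by linarith)
      have hδC₀ : δ * C₀ ≤ D (s₀, x₀) := by
        have h1 : δ ≤ D (s₀, x₀) / C₀ := min_le_left _ _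
        calc δ * C₀ ≤ D (s₀, x₀) / C₀ * C₀ := mul_le_mul_of_nonneg_right h1 hC₀pos.le
          _ = D (s₀, x₀) := by field_simp
      have hθ'T : θs - δ ∈ T := by
        refine ⟨by have := min_le_right (D (s₀, x₀) / C₀) (θs - 1); rw [hδdef]; linarith, ?_⟩
        intro s hs x
        have hDlow := hz₀min s hs x
        have hD1 : D (s, x) ≤ θs * C₀ * (Real.exp (-lam0 * (s + a)) * Φu x) - u s x :=
          min_le_left _ _
        have hD2 : D (s, x) ≤ θs * C₀ * (Real.exp (-lam0 * (s + a)) * Φv x) - v s x :=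
          min_le_right _ _
        have hWu_le := (hWup s hs x).1
        have hWv_le := (hWup s hs x).2
        have hδWu : δ * (C₀ * (Real.exp (-lam0 * (s + a)) * Φu x)) ≤ δ * C₀ := by
          have := mul_le_mul_of_nonneg_left hWu_le hδpos.le
          linarith [mul_assoc δ C₀ (Real.exp (-lam0 * (s + a)) * Φu x)]
        have hδWv : δ * (C₀ * (Real.exp (-lam0 * (s + a)) * Φv x)) ≤ δ * C₀ := by
          have := mul_le_mul_of_nonneg_left hWv_le hδpos.le
          linarith [mul_assoc δ C₀ (Real.exp (-lam0 * (s + a)) * Φv x)]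
        constructor
        · have hr : (θs - δ) * C₀ * (Real.exp (-lam0 * (s + a)) * Φu x)
              = θs * C₀ * (Real.exp (-lam0 * (s + a)) * Φu x)
                - δ * (C₀ * (Real.exp (-lam0 * (s + a)) * Φu x)) := by ring
          rw [hr]
          linarith
        · have hr : (θs - δ) * C₀ * (Real.exp (-lam0 * (s + a)) * Φv x)
              = θs * C₀ * (Real.exp (-lam0 * (s + a)) * Φv x)
                - δ * (C₀ * (Real.exp (-lam0 * (s + a)) * Φv x)) := by ring
          rw [hr]
          linarith
      have := csInf_le hT_bdd hθ'T
      rw [← hθsdef] at this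
      linarith
    · -- touching point: it cannot be on the boundary, and interior touch is impossible
      have hD0 : D (s₀, x₀) = 0 := le_antisymm (not_lt.1 hm₀) hDz₀nonneg
      have hKM : K * M < θs * C₀ * φm := by
        have : θs * C₀ * φm = θs * (C₀ * φm) := by ring
        rw [this, hC₀φm]
        nlinarith [mul_pos hK hMpos]
      have hs₀ne1 : s₀ ≠ -a := by
        intro hEq
        have hea : Real.exp (-lam0 * (s₀ + a)) = 1 := by rw [hEq]; simp
        have hbc := h_bc_left x₀
        have hu1 : Function.uncurry u (s₀, x₀) = K * p x₀ := by
          rw [show Function.uncurry u (s₀, x₀) = u s₀ x₀ from rfl, hEq, hbc.1]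
        have hv1 : Function.uncurry v (s₀, x₀) = K * q x₀ := by
          rw [show Function.uncurry v (s₀, x₀) = v s₀ x₀ from rfl, hEq, hbc.2]
        have hcomp1 : 0 < θs * C₀ * (Real.exp (-lam0 * (s₀ + a)) * Φu x₀)
            - Function.uncurry u (s₀, x₀) := by
          rw [hea, hu1]
          have h1 : θs * C₀ * φm ≤ θs * C₀ * Φu x₀ :=
            mul_le_mul_of_nonneg_left (hφmu x₀) (by positivity)
          have h2 : K * p x₀ ≤ K * M := mul_le_mul_of_nonneg_left (hMp x₀) hK.le
          simp only [one_mul]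
          linarith
        have hcomp2 : 0 < θs * C₀ * (Real.exp (-lam0 * (s₀ + a)) * Φv x₀)
            - Function.uncurry v (s₀, x₀) := by
          rw [hea, hv1]
          have h1 : θs * C₀ * φm ≤ θs * C₀ * Φv x₀ :=
            mul_le_mul_of_nonneg_left (hφmv x₀) (by positivity)
          have h2 : K * q x₀ ≤ K * M := mul_le_mul_of_nonneg_left (hMq x₀) hK.le
          simp only [one_mul]
          linarith
        have : 0 < D (s₀, x₀) := lt_min hcomp1 hcomp2
        linarith
      have hs₀ne2 : s₀ ≠ a := by
        intro hEq
        have hbc := h_bc_right x₀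
        have hu1 : Function.uncurry u (s₀, x₀) = 0 := by
          rw [show Function.uncurry u (s₀, x₀) = u s₀ x₀ from rfl, hEq, hbc.1]
        have hv1 : Function.uncurry v (s₀, x₀) = 0 := by
          rw [show Function.uncurry v (s₀, x₀) = v s₀ x₀ from rfl, hEq, hbc.2]
        have hcomp1 : 0 < θs * C₀ * (Real.exp (-lam0 * (s₀ + a)) * Φu x₀)
            - Function.uncurry u (s₀, x₀) := by
          rw [hu1]
          have := hΦu_pos x₀; have := hepos s₀
          have : 0 < θs * C₀ * (Real.exp (-lam0 * (s₀ + a)) * Φu x₀) := by positivity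
          linarith
        have hcomp2 : 0 < θs * C₀ * (Real.exp (-lam0 * (s₀ + a)) * Φv x₀)
            - Function.uncurry v (s₀, x₀) := by
          rw [hv1]
          have := hΦv_pos x₀; have := hepos s₀
          have : 0 < θs * C₀ * (Real.exp (-lam0 * (s₀ + a)) * Φv x₀) := by positivity
          linarith
        have : 0 < D (s₀, x₀) := lt_min hcomp1 hcomp2
        linarith
      have hs₀Ioo : s₀ ∈ Ioo (-a) a :=
        ⟨lt_of_le_of_ne hs₀Icc.1 (Ne.symm hs₀ne1), lt_of_le_of_ne hs₀Icc.2 hs₀ne2⟩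
      -- one of the two components vanishes
      have hdom' : ∀ s ∈ Ioo (-a) a, ∀ x : ℝ,
          u s x ≤ θs * C₀ * (Real.exp (-lam0 * (s + a)) * Φu x)
          ∧ v s x ≤ θs * C₀ * (Real.exp (-lam0 * (s + a)) * Φv x) :=
        fun s hs x => hθsT.2 s (Ioo_subset_Icc_self hs) x
      have hθsC₀pos : 0 < θs * C₀ := by positivity
      rcases min_eq_iff.1 hD0 with ⟨h0, -⟩ | ⟨h0, -⟩
      · have htch : u s₀ x₀ = θs * C₀ * (Real.exp (-lam0 * (s₀ + a)) * Φu x₀) := by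
          have : Function.uncurry u (s₀, x₀) = u s₀ x₀ := rfl
          linarith [h0]
        exact touch_u (θs * C₀) hθsC₀pos hdom' s₀ hs₀Ioo x₀ htch
      · have htch : v s₀ x₀ = θs * C₀ * (Real.exp (-lam0 * (s₀ + a)) * Φv x₀) := by
          have : Function.uncurry v (s₀, x₀) = v s₀ x₀ := rfl
          linarith [h0]
        exact touch_v (θs * C₀) hθsC₀pos hdom' s₀ hs₀Ioo x₀ htch
  -- Claim A: comparison bound with k = C₀
  have key_bound : ∀ s ∈ Icc (-a) a, ∀ x : ℝ,
      u s x ≤ C₀ * (Real.exp (-lam0 * (s + a)) * Φu x)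
      ∧ v s x ≤ C₀ * (Real.exp (-lam0 * (s + a)) * Φv x) := by
    intro s hs x
    have h := hθsT.2 s hs x
    rw [hθs_eq1] at h
    exact ⟨by simpa using h.1, by simpa using h.2⟩
  have hdomC : ∀ s ∈ Ioo (-a) a, ∀ x : ℝ,
      u s x ≤ C₀ * (Real.exp (-lam0 * (s + a)) * Φu x)
      ∧ v s x ≤ C₀ * (Real.exp (-lam0 * (s + a)) * Φv x) :=
    fun s hs x => key_bound s (Ioo_subset_Icc_self hs) x
  have strict_u : ∀ s ∈ Ioo (-a) a, ∀ x : ℝ,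
      u s x < C₀ * (Real.exp (-lam0 * (s + a)) * Φu x) := by
    intro s hs x
    rcases lt_or_eq_of_le (hdomC s hs x).1 with h | h
    · exact h
    · exact (touch_u C₀ hC₀pos hdomC s hs x h).elim
  -- maximum of u+v over the inner strip
  have hsub2 : (Icc (-a0) a0 ×ˢ (univ : Set ℝ)) ⊆ (Icc (-a) a ×ˢ (univ : Set ℝ)) :=
    prod_mono (Icc_subset_Icc (by linarith) (by linarith)) subset_rfl
  have hsum_cont : ContinuousOn (fun zz : ℝ × ℝ => Function.uncurry u zz + Function.uncurry v zz)
      (Icc (-a0) a0 ×ˢ univ) := (hu_cont.mono hsub2).add (hv_cont.mono hsub2)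
  obtain ⟨z₁, hz₁mem, hz₁max⟩ := strip_max hL (by linarith : -a0 ≤ a0) hsum_cont
    (fun s x => by
      show u s (x + L) + v s (x + L) = u s x + v s x
      rw [(h_per s x).1, (h_per s x).2])
  obtain ⟨s₁, x₁⟩ := z₁
  have hs₁ : s₁ ∈ Icc (-a0) a0 := hz₁mem.1
  have hs₁Ioo : s₁ ∈ Ioo (-a) a := hIccIoo hs₁
  refine ⟨u s₁ x₁ + v s₁ x₁, ?_, fun s hs x => hz₁max s (Ioo_subset_Icc_self hs) x⟩
  -- the maximum is less than ν/2
  have h1 : u s₁ x₁ < C₀ * (Real.exp (-lam0 * (s₁ + a)) * Φu x₁) := strict_u s₁ hs₁Ioo x₁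
  have h2 : v s₁ x₁ ≤ C₀ * (Real.exp (-lam0 * (s₁ + a)) * Φv x₁) := (hdomC s₁ hs₁Ioo x₁).2
  have h3 : C₀ * (Real.exp (-lam0 * (s₁ + a)) * Φu x₁) ≤ C₀ * Real.exp (-lam0 * (s₁ + a)) := by
    have := mul_le_of_le_one_right (hepos s₁).le (hΦu1 x₁)
    exact mul_le_mul_of_nonneg_left this hC₀pos.le
  have h4 : C₀ * (Real.exp (-lam0 * (s₁ + a)) * Φv x₁) ≤ C₀ * Real.exp (-lam0 * (s₁ + a)) := by
    have := mul_le_of_le_one_right (hepos s₁).le (hΦv1 x₁)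
    exact mul_le_mul_of_nonneg_left this hC₀pos.le
  have h5 : Real.exp (-lam0 * (s₁ + a)) ≤ Real.exp (-lam0 * (a - a0)) := by
    apply Real.exp_le_exp.2
    have hh : 0 ≤ lam0 * (s₁ + a0) := mul_nonneg hlam0.le (by linarith [hs₁.1])
    nlinarith
  set R : ℝ := ν * φm / (4 * K * M) with hRdef
  have hRpos : 0 < R := by rw [hRdef]; positivity
  have habar : a - a0 ≥ max (-(1 / lam0) * Real.log R) 1 := by linarith [ha]
  have h6 : Real.exp (-lam0 * (a - a0)) ≤ R := by
    have hlog : -(1 / lam0) * Real.log R ≤ a - a0 := le_trans (le_max_left _ _) habar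
    have h7 : -lam0 * (a - a0) ≤ Real.log R := by
      have hmul := mul_le_mul_of_nonneg_left hlog hlam0.le
      have hx : lam0 * (-(1 / lam0) * Real.log R) = -Real.log R := by
        field_simp
      linarith [hmul, hx]
    calc Real.exp (-lam0 * (a - a0)) ≤ Real.exp (Real.log R) := Real.exp_le_exp.2 h7
      _ = R := Real.exp_log hRpos
  have hKne : (K:ℝ) ≠ 0 := hK.ne'
  have hMne : M ≠ 0 := hMpos.ne'
  have hφne : φm ≠ 0 := hφmpos.ne'
  have h8 : C₀ * R = ν / 4 := by
    rw [hC₀def, hRdef]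
    field_simp
  have h9 : C₀ * Real.exp (-lam0 * (s₁ + a)) ≤ ν / 4 := by
    calc C₀ * Real.exp (-lam0 * (s₁ + a)) ≤ C₀ * Real.exp (-lam0 * (a - a0)) :=
        mul_le_mul_of_nonneg_left h5 hC₀pos.le
      _ ≤ C₀ * R := mul_le_mul_of_nonneg_left h6 hC₀pos.le
      _ = ν / 4 := h8
  linarith [h1, h2, h3, h4, h9]
end

section
/- Set C := max(2r^∞/γ⁰, K·max_x(p(x)+q(x))) and 𝒞 := -min_x min(r_u(x) - γ_u(x)(q(x)/K + C) - μ(x), r_v(x) - γ_v(x)(p(x)/K + C) - μ(x), 0). Then there exists c̲ = c̲(a) ≥ 0 such that for every τ ∈ [0,1], every c ≤ -c̲(a), and every nonnegative classical solution (u,v), L-periodic in x, on (-a,a)×ℝ of the second-homotopy system L_ε u - c u_s = τ(u(r_u - γ_u q/K - μ - γ_u u) + μ v) - (1-τ)𝒞u, L_ε v - c v_s = τ(v(r_v - γ_v p/K - μ - γ_v v) + μ u) - (1-τ)𝒞v, with (u,v)(-a,x) = (Kp(x), Kq(x)) and (u,v)(a,x) = (0,0), one has sup_{(s,x) ∈ (-a₀,a₀)×ℝ}(u(s,x)+v(s,x))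 > ν. -/
open Set Function

lemma periodic_bdd {f : ℝ → ℝ} {L : ℝ} (hL : 0 < L) (hc : Continuous f)
    (hper : ∀ x, f (x + L) = f x) : BddAbove (range f) ∧ BddBelow (range f) := by
  have hper' : Function.Periodic f L := hper
  have himg : f '' Icc 0 (0 + L) = range f := hper'.image_Icc hL 0
  have hcpt : IsCompact (f '' Icc 0 (0 + L)) := isCompact_Icc.image hc
  rw [himg] at hcpt
  exact ⟨hcpt.bddAbove, hcpt.bddBelow⟩

section machinery
variable {f : ℝ → ℝ → ℝ} {a : ℝ}

lemma hOopen {a : ℝ} : IsOpen (Ioo (-a) a ×ˢ (univ : Set ℝ)) := isOpen_Ioo.prod isOpen_univ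

variable (hf : ContDiffOn ℝ 2 (uncurry f) (Icc (-a) a ×ˢ (univ : Set ℝ)))
include hf

lemma hfO : ContDiffOn ℝ 2 (uncurry f) (Ioo (-a) a ×ˢ (univ : Set ℝ)) :=
  hf.mono (prod_mono Ioo_subset_Icc_self subset_rfl)

lemma M0 {s x : ℝ} (hs : s ∈ Ioo (-a) a) :
    HasFDerivAt (uncurry f) (fderiv ℝ (uncurry f) (s, x)) (s, x) :=
  (((hfO hf).differentiableOn (by norm_num)).differentiableAt
    (hOopen.mem_nhds ⟨hs, mem_univ x⟩)).hasFDerivAt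

lemma M0' {s x : ℝ} (hs : s ∈ Ioo (-a) a) :
    HasFDerivAt (fderiv ℝ (uncurry f)) (fderiv ℝ (fderiv ℝ (uncurry f)) (s, x)) (s, x) := by
  have h1 : ContDiffOn ℝ 1 (fderiv ℝ (uncurry f)) (Ioo (-a) a ×ˢ (univ : Set ℝ)) :=
    (hfO hf).fderiv_of_isOpen hOopen (by norm_num)
  exact ((h1.differentiableOn (by norm_num)).differentiableAt
    (hOopen.mem_nhds ⟨hs, mem_univ x⟩)).hasFDerivAt

lemma M1 {s x : ℝ} (hs : s ∈ Ioo (-a) a) :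
    HasDerivAt (fun s' => f s' x) (fderiv ℝ (uncurry f) (s, x) (1, 0)) s := by
  have hg : HasDerivAt (fun s' : ℝ => ((s', x) : ℝ × ℝ)) ((1 : ℝ), (0 : ℝ)) s :=
    (hasDerivAt_id s).prodMk (hasDerivAt_const s x)
  exact HasFDerivAt.comp_hasDerivAt_of_eq _ (M0 hf hs) hg rfl

lemma M1' {s x : ℝ} (hs : s ∈ Ioo (-a) a) :
    pds f s x = fderiv ℝ (uncurry f) (s, x) (1, 0) := (M1 hf hs).deriv

lemma M2 {s x : ℝ} (hs : s ∈ Ioo (-a) a) :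
    HasDerivAt (fun x' => f s x') (fderiv ℝ (uncurry f) (s, x) (0, 1)) x := by
  have hg : HasDerivAt (fun x' : ℝ => ((s, x') : ℝ × ℝ)) ((0 : ℝ), (1 : ℝ)) x :=
    (hasDerivAt_const x s).prodMk (hasDerivAt_id x)
  exact HasFDerivAt.comp_hasDerivAt_of_eq _ (M0 hf hs) hg rfl

lemma M2' {s x : ℝ} (hs : s ∈ Ioo (-a) a) :
    deriv (f s) x = fderiv ℝ (uncurry f) (s, x) (0, 1) := (M2 hf hs).deriv

lemma MgradS {s x : ℝ} (hs : s ∈ Ioo (-a) a) (w : ℝ × ℝ) :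
    HasDerivAt (fun s' : ℝ => fderiv ℝ (uncurry f) (s', x) w)
      (fderiv ℝ (fderiv ℝ (uncurry f)) (s, x) (1, 0) w) s := by
  have hg : HasDerivAt (fun s' : ℝ => ((s', x) : ℝ × ℝ)) ((1 : ℝ), (0 : ℝ)) s :=
    (hasDerivAt_id s).prodMk (hasDerivAt_const s x)
  have h1 : HasDerivAt (fun s' : ℝ => fderiv ℝ (uncurry f) (s', x))
      (fderiv ℝ (fderiv ℝ (uncurry f)) (s, x) (1, 0)) s :=
    HasFDerivAt.comp_hasDerivAt_of_eq _ (M0' hf hs) hg rfl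
  simpa using h1.clm_apply (hasDerivAt_const s w)

lemma MgradX {s x : ℝ} (hs : s ∈ Ioo (-a) a) (w : ℝ × ℝ) :
    HasDerivAt (fun x' : ℝ => fderiv ℝ (uncurry f) (s, x') w)
      (fderiv ℝ (fderiv ℝ (uncurry f)) (s, x) (0, 1) w) x := by
  have hg : HasDerivAt (fun x' : ℝ => ((s, x') : ℝ × ℝ)) ((0 : ℝ), (1 : ℝ)) x :=
    (hasDerivAt_const x s).prodMk (hasDerivAt_id x)
  have h1 : HasDerivAt (fun x' : ℝ => fderiv ℝ (uncurry f) (s, x'))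
      (fderiv ℝ (fderiv ℝ (uncurry f)) (s, x) (0, 1)) x :=
    HasFDerivAt.comp_hasDerivAt_of_eq _ (M0' hf hs) hg rfl
  simpa using h1.clm_apply (hasDerivAt_const x w)

-- second s-derivative
lemma M3 {s x : ℝ} (hs : s ∈ Ioo (-a) a) :
    HasDerivAt (fun s' => pds f s' x)
      (fderiv ℝ (fderiv ℝ (uncurry f)) (s, x) (1, 0) (1, 0)) s := by
  apply (MgradS hf hs ((1:ℝ), (0:ℝ))).congr_of_eventuallyEq
  filter_upwards [isOpen_Ioo.mem_nhds hs] with s' hs'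
  exact M1' hf hs'

lemma M3' {s x : ℝ} (hs : s ∈ Ioo (-a) a) :
    pdss f s x = fderiv ℝ (fderiv ℝ (uncurry f)) (s, x) (1, 0) (1, 0) := (M3 hf hs).deriv

lemma M4 {s x : ℝ} (hs : s ∈ Ioo (-a) a) :
    HasDerivAt (fun x' => pds f s x')
      (fderiv ℝ (fderiv ℝ (uncurry f)) (s, x) (0, 1) (1, 0)) x := by
  apply (MgradX hf hs ((1:ℝ), (0:ℝ))).congr_of_eventuallyEq
  filter_upwards with x'
  exact M1' hf hs

lemma M4' {s x : ℝ} (hs : s ∈ Ioo (-a) a) :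
    pdxs f s x = fderiv ℝ (fderiv ℝ (uncurry f)) (s, x) (0, 1) (1, 0) := (M4 hf hs).deriv

lemma M5 {s x : ℝ} (hs : s ∈ Ioo (-a) a) :
    HasDerivAt (deriv (f s))
      (fderiv ℝ (fderiv ℝ (uncurry f)) (s, x) (0, 1) (0, 1)) x := by
  apply (MgradX hf hs ((0:ℝ), (1:ℝ))).congr_of_eventuallyEq
  filter_upwards with x'
  exact M2' hf hs

lemma M5' {s x : ℝ} (hs : s ∈ Ioo (-a) a) :
    pdxx f s x = fderiv ℝ (fderiv ℝ (uncurry f)) (s, x) (0, 1) (0, 1) := (M5 hf hs).deriv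

-- symmetry of second derivative
lemma Msymm {s x : ℝ} (hs : s ∈ Ioo (-a) a) (w w' : ℝ × ℝ) :
    fderiv ℝ (fderiv ℝ (uncurry f)) (s, x) w w'
      = fderiv ℝ (fderiv ℝ (uncurry f)) (s, x) w' w := by
  have hev : ∀ᶠ z in nhds ((s, x) : ℝ × ℝ), HasFDerivAt (uncurry f) (fderiv ℝ (uncurry f) z) z := by
    filter_upwards [hOopen.mem_nhds (⟨hs, mem_univ x⟩ :
      ((s, x) : ℝ × ℝ) ∈ Ioo (-a) a ×ˢ (univ : Set ℝ))] with z hz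
    have : HasFDerivAt (uncurry f) (fderiv ℝ (uncurry f) (z.1, z.2)) (z.1, z.2) := M0 hf hz.1
    simpa using this
  exact second_derivative_symmetric_of_eventually hev (M0' hf hs) w w'

-- continuity of the partial derivatives on the open strip
lemma Mc1 : ContinuousOn (fun z : ℝ × ℝ => pds f z.1 z.2) (Ioo (-a) a ×ˢ (univ : Set ℝ)) := by
  have h1 : ContinuousOn (fderiv ℝ (uncurry f)) (Ioo (-a) a ×ˢ (univ : Set ℝ)) :=
    (hfO hf).continuousOn_fderiv_of_isOpen hOopen (by norm_num)
  have h2 : ContinuousOn (fun z : ℝ × ℝ => fderiv ℝ (uncurry f) z ((1:ℝ), (0:ℝ)))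
      (Ioo (-a) a ×ˢ (univ : Set ℝ)) := h1.clm_apply continuousOn_const
  apply h2.congr
  intro z hz
  have : pds f z.1 z.2 = fderiv ℝ (uncurry f) (z.1, z.2) (1, 0) := M1' hf hz.1
  simpa using this

lemma Mc2cont : ContinuousOn (fderiv ℝ (fderiv ℝ (uncurry f))) (Ioo (-a) a ×ˢ (univ : Set ℝ)) :=
  ((hfO hf).fderiv_of_isOpen (m := 1) hOopen (by norm_num)).continuousOn_fderiv_of_isOpen hOopen
    le_rfl

lemma Mc3 : ContinuousOn (fun z : ℝ × ℝ => pdss f z.1 z.2) (Ioo (-a) a ×ˢ (univ : Set ℝ)) := by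
  have h2 : ContinuousOn
      (fun z : ℝ × ℝ => fderiv ℝ (fderiv ℝ (uncurry f)) z ((1:ℝ), (0:ℝ)) ((1:ℝ), (0:ℝ)))
      (Ioo (-a) a ×ˢ (univ : Set ℝ)) := ((Mc2cont hf).clm_apply continuousOn_const).clm_apply
        continuousOn_const
  apply h2.congr
  intro z hz
  have : pdss f z.1 z.2 = fderiv ℝ (fderiv ℝ (uncurry f)) (z.1, z.2) (1, 0) (1, 0) := M3' hf hz.1
  simpa using this

end machinery

lemma MgradD {f : ℝ → ℝ → ℝ} {a : ℝ}
    (hf : ContDiffOn ℝ 2 (uncurry f) (Icc (-a) a ×ˢ (univ : Set ℝ)))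
    {s x : ℝ} (hs : s ∈ Ioo (-a) a) (w : ℝ × ℝ) :
    HasDerivAt (fun t : ℝ => fderiv ℝ (uncurry f) (s + t, x + t) w)
      (fderiv ℝ (fderiv ℝ (uncurry f)) (s, x) (1, 1) w) 0 := by
  have hg : HasDerivAt (fun t : ℝ => ((s + t, x + t) : ℝ × ℝ)) ((1 : ℝ), (1 : ℝ)) 0 :=
    ((hasDerivAt_id (0:ℝ)).const_add s).prodMk ((hasDerivAt_id (0:ℝ)).const_add x)
  have h1 : HasDerivAt (fun t : ℝ => fderiv ℝ (uncurry f) (s + t, x + t))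
      (fderiv ℝ (fderiv ℝ (uncurry f)) (s, x) (1, 1)) 0 :=
    HasFDerivAt.comp_hasDerivAt_of_eq _ (M0' hf hs) hg (by norm_num)
  simpa using h1.clm_apply (hasDerivAt_const (0:ℝ) w)

lemma second_deriv_test_max {g h : ℝ → ℝ} {t0 D : ℝ}
    (hg : ∀ᶠ t in nhds t0, HasDerivAt g (h t) t)
    (hh : HasDerivAt h D t0) (hm : IsLocalMax g t0) : D ≤ 0 := by
  by_contra hD
  push_neg at hD
  have h0 : h t0 = 0 := hm.hasDerivAt_eq_zero hg.self_of_nhds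
  have hsl : Filter.Tendsto (slope h t0) (nhdsWithin t0 {t0}ᶜ) (nhds D) :=
    hasDerivAt_iff_tendsto_slope.1 hh
  have hev : ∀ᶠ t in nhdsWithin t0 {t0}ᶜ, (0:ℝ) < slope h t0 t :=
    hsl.eventually (eventually_gt_nhds hD)
  have hg' : ∀ᶠ t in nhdsWithin t0 {t0}ᶜ, HasDerivAt g (h t) t :=
    nhdsWithin_le_nhds hg
  obtain ⟨η, hη, hP⟩ := Metric.eventually_nhds_iff.1 (eventually_nhdsWithin_iff.1 (hev.and hg'))
  have hsub : ∀ t ∈ Icc t0 (t0 + η/2), t ≠ t0 → (0 < slope h t0 t ∧ HasDerivAt g (h t) t) := by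
    intro t ht hne
    apply hP ?_ hne
    rw [Real.dist_eq, abs_lt]
    constructor <;> [linarith [ht.1]; linarith [ht.2]]
  have hcont : ContinuousOn g (Icc t0 (t0 + η/2)) := by
    intro t ht
    rcases eq_or_ne t t0 with rfl | hne
    · exact hg.self_of_nhds.continuousAt.continuousWithinAt
    · exact ((hsub t ht hne).2).continuousAt.continuousWithinAt
  have hmono : StrictMonoOn g (Icc t0 (t0 + η/2)) := by
    apply strictMonoOn_of_deriv_pos (convex_Icc _ _) hcont
    intro t ht
    rw [interior_Icc] at ht
    have hne : t ≠ t0 := ne_of_gt ht.1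
    have h2 := hsub t ⟨ht.1.le, ht.2.le⟩ hne
    rw [h2.2.deriv]
    have hslope : slope h t0 t = h t / (t - t0) := by
      rw [slope_def_field, h0, sub_zero]
    have hpos := h2.1
    rw [hslope] at hpos
    have htpos : 0 < t - t0 := by linarith [ht.1]
    exact (div_pos_iff.1 hpos).resolve_right (fun hc => absurd htpos (by linarith [hc.2])) |>.1
  obtain ⟨r, hr, hB⟩ := Metric.eventually_nhds_iff.1 hm
  set y := t0 + min (η/2) r / 2 with hy
  have h2' : 0 < min (η/2) r := lt_min (by linarith) hr
  have hy1 : t0 < y := by simp only [hy]; linarith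
  have hy2 : y ≤ t0 + η/2 := by
    have := min_le_left (η/2) r; simp only [hy]; linarith
  have hlt := hmono (left_mem_Icc.2 (by linarith)) ⟨hy1.le, hy2⟩ hy1
  have hd : dist y t0 < r := by
    rw [Real.dist_eq, hy]
    have h1 : min (η/2) r ≤ r := min_le_right _ _
    rw [abs_of_pos (by linarith)]
    linarith
  exact absurd (hB hd) (by linarith)

lemma max_interior {f : ℝ → ℝ → ℝ} {a ε : ℝ} (hε : 0 < ε)
    (hf : ContDiffOn ℝ 2 (uncurry f) (Icc (-a) a ×ˢ (univ : Set ℝ)))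
    {s x : ℝ} (hs : s ∈ Ioo (-a) a)
    (hmax : IsLocalMax (fun z : ℝ × ℝ => f z.1 z.2) (s, x)) :
    pds f s x = 0 ∧ pdxx f s x + 2 * pdxs f s x + (1 + ε) * pdss f s x ≤ 0 := by
  have hts : Filter.Tendsto (fun s' : ℝ => ((s', x) : ℝ × ℝ)) (nhds s) (nhds (s, x)) := by
    have hc : Continuous (fun s' : ℝ => ((s', x) : ℝ × ℝ)) := by fun_prop
    exact hc.tendsto' s (s, x) rfl
  have hmax1 : IsLocalMax (fun s' => f s' x) s := hts.eventually hmax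
  have hpds0 : pds f s x = 0 := by
    rw [M1' hf hs]
    exact hmax1.hasDerivAt_eq_zero (M1 hf hs)
  refine ⟨hpds0, ?_⟩
  have hgev : ∀ᶠ s' in nhds s, HasDerivAt (fun s'' => f s'' x) (pds f s' x) s' := by
    filter_upwards [isOpen_Ioo.mem_nhds hs] with s' hs'
    have h := M1 (x := x) hf hs'
    rwa [← M1' (x := x) hf hs'] at h
  have hh : HasDerivAt (fun s' => pds f s' x) (pdss f s x) s := by
    have h := M3 (x := x) hf hs; rwa [← M3' (x := x) hf hs] at h
  have hDss : pdss f s x ≤ 0 := second_deriv_test_max hgev hh hmax1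
  have htd : Filter.Tendsto (fun t : ℝ => ((s + t, x + t) : ℝ × ℝ)) (nhds 0) (nhds (s, x)) := by
    have hc : Continuous (fun t : ℝ => ((s + t, x + t) : ℝ × ℝ)) := by fun_prop
    have := hc.tendsto' 0 (s + 0, x + 0) rfl
    simpa using this
  have hmaxd : IsLocalMax (fun t : ℝ => f (s + t) (x + t)) 0 := by
    have h := htd.eventually hmax
    show ∀ᶠ t in nhds (0:ℝ), f (s + t) (x + t) ≤ f (s + 0) (x + 0)
    simpa using h
  have hgevd : ∀ᶠ t in nhds (0:ℝ), HasDerivAt (fun t' : ℝ => f (s + t') (x + t'))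
      (fderiv ℝ (uncurry f) (s + t, x + t) ((1:ℝ), (1:ℝ))) t := by
    have hsnb : ∀ᶠ t : ℝ in nhds 0, s + t ∈ Ioo (-a) a := by
      have hc : Continuous (fun t : ℝ => s + t) := by fun_prop
      have ht' : Filter.Tendsto (fun t : ℝ => s + t) (nhds 0) (nhds s) := by
        have := hc.tendsto' 0 (s + 0) rfl; simpa using this
      exact ht'.eventually (isOpen_Ioo.eventually_mem hs)
    filter_upwards [hsnb] with t ht
    have hg : HasDerivAt (fun t' : ℝ => ((s + t', x + t') : ℝ × ℝ)) ((1 : ℝ), (1 : ℝ)) t :=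
      ((hasDerivAt_id t).const_add s).prodMk ((hasDerivAt_id t).const_add x)
    exact HasFDerivAt.comp_hasDerivAt_of_eq _ (M0 hf ht) hg rfl
  have hDd : fderiv ℝ (fderiv ℝ (uncurry f)) (s, x) ((1:ℝ), (1:ℝ)) ((1:ℝ), (1:ℝ)) ≤ 0 :=
    second_deriv_test_max hgevd (MgradD hf hs ((1:ℝ), (1:ℝ))) hmaxd
  have e11 : ((1:ℝ), (1:ℝ)) = ((1:ℝ), (0:ℝ)) + ((0:ℝ), (1:ℝ)) := by
    rw [Prod.mk_add_mk]; norm_num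
  have hsplit2 : fderiv ℝ (fderiv ℝ (uncurry f)) (s, x) ((1:ℝ), (1:ℝ))
      = fderiv ℝ (fderiv ℝ (uncurry f)) (s, x) ((1:ℝ), (0:ℝ))
        + fderiv ℝ (fderiv ℝ (uncurry f)) (s, x) ((0:ℝ), (1:ℝ)) := by
    rw [e11, map_add]
  have hsplit : ∀ A : ℝ × ℝ →L[ℝ] ℝ, A ((1:ℝ), (1:ℝ)) = A ((1:ℝ), (0:ℝ)) + A ((0:ℝ), (1:ℝ)) := by
    intro A; rw [e11, map_add]
  rw [hsplit2, ContinuousLinearMap.add_apply, hsplit, hsplit] at hDd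
  have hsym : fderiv ℝ (fderiv ℝ (uncurry f)) (s, x) ((1:ℝ), (0:ℝ)) ((0:ℝ), (1:ℝ))
      = fderiv ℝ (fderiv ℝ (uncurry f)) (s, x) ((0:ℝ), (1:ℝ)) ((1:ℝ), (0:ℝ)) :=
    Msymm hf hs _ _
  rw [hsym] at hDd
  rw [M3' hf hs, M4' hf hs, M5' hf hs]
  have hss' : fderiv ℝ (fderiv ℝ (uncurry f)) (s, x) ((1:ℝ), (0:ℝ)) ((1:ℝ), (0:ℝ)) ≤ 0 := by
    rwa [M3' hf hs] at hDss
  nlinarith [hDd, hss', mul_nonpos_of_nonneg_of_nonpos hε.le hss']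

section decomp
variable {u v : ℝ → ℝ → ℝ} {a δ : ℝ}
variable (hu : ContDiffOn ℝ 2 (uncurry u) (Icc (-a) a ×ˢ (univ : Set ℝ)))
variable (hv : ContDiffOn ℝ 2 (uncurry v) (Icc (-a) a ×ˢ (univ : Set ℝ)))
include hu hv

lemma D1 {s x : ℝ} (hs : s ∈ Ioo (-a) a) :
    pds (fun s x => u s x + v s x - δ * (s + a)) s x = pds u s x + pds v s x - δ := by
  have h1 : HasDerivAt (fun s' => u s' x + v s' x - δ * (s' + a))
      (pds u s x + pds v s x - δ) s := by
    have hu1 := M1 (x := x) hu hs; rw [← M1' (x := x) hu hs] at hu1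
    have hv1 := M1 (x := x) hv hs; rw [← M1' (x := x) hv hs] at hv1
    have haff : HasDerivAt (fun s' : ℝ => δ * (s' + a)) δ s := by
      simpa using ((hasDerivAt_id s).add_const a).const_mul δ
    exact (hu1.add hv1).sub haff
  exact h1.deriv

lemma D2 {s x : ℝ} (hs : s ∈ Ioo (-a) a) :
    pdss (fun s x => u s x + v s x - δ * (s + a)) s x = pdss u s x + pdss v s x := by
  have h1 : HasDerivAt (fun s' => pds u s' x + pds v s' x - δ)
      (pdss u s x + pdss v s x) s := by
    have hu1 := M3 (x := x) hu hs; rw [← M3' (x := x) hu hs] at hu1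
    have hv1 := M3 (x := x) hv hs; rw [← M3' (x := x) hv hs] at hv1
    simpa using (hu1.add hv1).sub_const δ
  have h2 : HasDerivAt (fun s' => pds (fun s x => u s x + v s x - δ * (s + a)) s' x)
      (pdss u s x + pdss v s x) s := by
    apply h1.congr_of_eventuallyEq
    filter_upwards [isOpen_Ioo.mem_nhds hs] with s' hs'
    exact D1 hu hv hs'
  exact h2.deriv

lemma D3 {s x : ℝ} (hs : s ∈ Ioo (-a) a) :
    pdxs (fun s x => u s x + v s x - δ * (s + a)) s x = pdxs u s x + pdxs v s x := by
  have h1 : HasDerivAt (fun x' => pds u s x' + pds v s x' - δ)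
      (pdxs u s x + pdxs v s x) x := by
    have hu1 := M4 (x := x) hu hs; rw [← M4' (x := x) hu hs] at hu1
    have hv1 := M4 (x := x) hv hs; rw [← M4' (x := x) hv hs] at hv1
    simpa using (hu1.add hv1).sub_const δ
  have h2 : HasDerivAt (fun x' => pds (fun s x => u s x + v s x - δ * (s + a)) s x')
      (pdxs u s x + pdxs v s x) x := by
    apply h1.congr_of_eventuallyEq
    filter_upwards with x'
    exact D1 hu hv hs
  exact h2.deriv

lemma D4 {s x : ℝ} (hs : s ∈ Ioo (-a) a) :
    pdxx (fun s x => u s x + v s x - δ * (s + a)) s x = pdxx u s x + pdxx v s x := by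
  have hder : deriv (fun x' => u s x' + v s x' - δ * (s + a))
      = fun x' => deriv (u s) x' + deriv (v s) x' := by
    funext x'
    have hu1 := M2 (x := x') hu hs; rw [← M2' (x := x') hu hs] at hu1
    have hv1 := M2 (x := x') hv hs; rw [← M2' (x := x') hv hs] at hv1
    exact ((hu1.add hv1).sub_const _).deriv
  have h1 : HasDerivAt (fun x' => deriv (u s) x' + deriv (v s) x')
      (pdxx u s x + pdxx v s x) x := by
    have hu1 := M5 (x := x) hu hs; rw [← M5' (x := x) hu hs] at hu1
    have hv1 := M5 (x := x) hv hs; rw [← M5' (x := x) hv hs] at hv1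
    exact hu1.add hv1
  show deriv (deriv (fun x' => u s x' + v s x' - δ * (s + a))) x = _
  rw [hder]
  exact h1.deriv

end decomp

/-- A priori sup bound via the maximum principle. -/
lemma apriori {u v : ℝ → ℝ → ℝ} {a ε L Cb c : ℝ} (hL : 0 < L) (ha : 0 < a) (hε : 0 < ε)
    (hc : c < 0) (hCb : 0 ≤ Cb)
    (hu : ContDiffOn ℝ 2 (uncurry u) (Icc (-a) a ×ˢ (univ : Set ℝ)))
    (hv : ContDiffOn ℝ 2 (uncurry v) (Icc (-a) a ×ˢ (univ : Set ℝ)))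
    (hper : ∀ s x, u s (x + L) = u s x ∧ v s (x + L) = v s x)
    (hbdry1 : ∀ x, u (-a) x + v (-a) x ≤ Cb)
    (hbdry2 : ∀ x, u a x + v a x ≤ Cb)
    (hRHS : ∀ s ∈ Ioo (-a) a, ∀ x : ℝ, Cb < u s x + v s x →
      (-(pdxx u s x) - 2 * pdxs u s x - (1 + ε) * pdss u s x - c * pds u s x)
        + (-(pdxx v s x) - 2 * pdxs v s x - (1 + ε) * pdss v s x - c * pds v s x) ≤ 0) :
    ∀ s ∈ Icc (-a) a, ∀ x : ℝ, u s x + v s x ≤ Cb := by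
  have key : ∀ δ : ℝ, 0 < δ → ∀ s ∈ Icc (-a) a, ∀ x : ℝ,
      u s x + v s x - δ * (s + a) ≤ Cb := by
    intro δ hδ
    set f : ℝ → ℝ → ℝ := fun s x => u s x + v s x - δ * (s + a) with hfdef
    have hcf : ContDiffOn ℝ 2 (uncurry f) (Icc (-a) a ×ˢ (univ : Set ℝ)) := by
      have haff : ContDiff ℝ 2 (fun z : ℝ × ℝ => δ * (z.1 + a)) :=
        contDiff_const.mul (contDiff_fst.add contDiff_const)
      exact (hu.add hv).sub haff.contDiffOn
    have hFc : ContinuousOn (fun z : ℝ × ℝ => f z.1 z.2) (Icc (-a) a ×ˢ (univ : Set ℝ)) := by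
      have := hcf.continuousOn
      exact this
    have hRc : IsCompact (Icc (-a) a ×ˢ Icc (0:ℝ) L) := isCompact_Icc.prod isCompact_Icc
    have hRne : (Icc (-a) a ×ˢ Icc (0:ℝ) L).Nonempty :=
      ⟨(-a, 0), ⟨left_mem_Icc.2 (by linarith), left_mem_Icc.2 hL.le⟩⟩
    obtain ⟨z0, hz0R, hmax⟩ := hRc.exists_isMaxOn hRne
      (hFc.mono (prod_mono subset_rfl (subset_univ _)))
    have hmaxS : ∀ s ∈ Icc (-a) a, ∀ x : ℝ, f s x ≤ f z0.1 z0.2 := by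
      intro s hs x
      have hperf : Function.Periodic (fun x' => f s x') L := by
        intro x'
        simp only [hfdef, (hper s x').1, (hper s x').2]
      have himg := hperf.image_Icc hL 0
      have hmem : f s x ∈ range (fun x' => f s x') := mem_range_self x
      rw [← himg] at hmem
      obtain ⟨x', hx', heq⟩ := hmem
      rw [← heq]
      have : (s, x') ∈ Icc (-a) a ×ˢ Icc (0:ℝ) L := ⟨hs, by simpa using hx'⟩
      exact hmax this
    have hz0le : f z0.1 z0.2 ≤ Cb := by
      rcases eq_or_lt_of_le hz0R.1.1 with h1 | h1
      · -- z0.1 = -a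
        have : f z0.1 z0.2 = u (-a) z0.2 + v (-a) z0.2 - δ * (-a + a) := by rw [← h1]
        rw [this]
        have := hbdry1 z0.2
        have h0 : δ * (-a + a) = 0 := by ring_nf
        linarith
      rcases eq_or_lt_of_le hz0R.1.2 with h2 | h2
      · -- z0.1 = a
        have heqa : f z0.1 z0.2 = u a z0.2 + v a z0.2 - δ * (a + a) := by rw [h2]
        rw [heqa]
        have hb2 := hbdry2 z0.2
        have hnn2 : 0 ≤ δ * (a + a) := mul_nonneg hδ.le (by linarith)
        linarith only [hb2, hnn2]
      -- interior case
      have hz0I : z0.1 ∈ Ioo (-a) a := ⟨h1, h2⟩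
      have hloc : IsLocalMax (fun z : ℝ × ℝ => f z.1 z.2) (z0.1, z0.2) := by
        have hnb : (Ioo (-a) a ×ˢ (univ : Set ℝ)) ∈ nhds ((z0.1, z0.2) : ℝ × ℝ) :=
          hOopen.mem_nhds ⟨hz0I, mem_univ _⟩
        filter_upwards [hnb] with z hz
        exact hmaxS z.1 (Ioo_subset_Icc_self hz.1) z.2
      obtain ⟨hfirst, hsecond⟩ := max_interior hε hcf hz0I hloc
      rw [D1 hu hv hz0I] at hfirst
      rw [D2 hu hv hz0I] at hsecond
      rw [D3 hu hv hz0I] at hsecond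
      rw [D4 hu hv hz0I] at hsecond
      -- now suppose the value exceeds Cb and derive a contradiction
      by_contra hgt
      push_neg at hgt
      have hwgt : Cb < u z0.1 z0.2 + v z0.1 z0.2 := by
        have hδnn : 0 ≤ δ * (z0.1 + a) := by
          apply mul_nonneg hδ.le; linarith [hz0I.1]
        simp only [hfdef] at hgt
        linarith
      have hR0 := hRHS z0.1 hz0I z0.2 hwgt
      have hsum0 : pds u z0.1 z0.2 + pds v z0.1 z0.2 = δ := by linarith only [hfirst]
      have hcd : c * pds u z0.1 z0.2 + c * pds v z0.1 z0.2 = c * δ := by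
        have : c * (pds u z0.1 z0.2 + pds v z0.1 z0.2) = c * δ := by rw [hsum0]
        linarith only [this]
      have hcdpos : 0 < -c * δ := mul_pos (neg_pos.2 hc) hδ
      linarith only [hR0, hsecond, hcd, hcdpos]
    intro s hs x
    exact le_trans (hmaxS s hs x) hz0le
  intro s hs x
  by_contra hgt
  push_neg at hgt
  have h2a : 0 < 4 * a + 1 := by linarith
  set δ := (u s x + v s x - Cb) / (4 * a + 1) with hδdef
  have hδ : 0 < δ := div_pos (by linarith) h2a
  have := key δ hδ s hs x
  have hsa : s + a ≤ 2 * a := by linarith [hs.2]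
  have hbound : δ * (s + a) ≤ δ * (2 * a) := by
    apply mul_le_mul_of_nonneg_left hsa hδ.le
  have hlt : δ * (2 * a) < u s x + v s x - Cb := by
    rw [hδdef]
    rw [div_mul_eq_mul_div, div_lt_iff₀ h2a]
    nlinarith
  linarith

section integration
variable {f : ℝ → ℝ → ℝ} {a L : ℝ}

lemma Mc4 (hf : ContDiffOn ℝ 2 (uncurry f) (Icc (-a) a ×ˢ (univ : Set ℝ))) :
    ContinuousOn (fun z : ℝ × ℝ => pdxs f z.1 z.2) (Ioo (-a) a ×ˢ (univ : Set ℝ)) := by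
  have h2 : ContinuousOn
      (fun z : ℝ × ℝ => fderiv ℝ (fderiv ℝ (uncurry f)) z ((0:ℝ), (1:ℝ)) ((1:ℝ), (0:ℝ)))
      (Ioo (-a) a ×ˢ (univ : Set ℝ)) := ((Mc2cont hf).clm_apply continuousOn_const).clm_apply
        continuousOn_const
  apply h2.congr
  intro z hz
  have : pdxs f z.1 z.2 = fderiv ℝ (fderiv ℝ (uncurry f)) (z.1, z.2) (0, 1) (1, 0) := M4' hf hz.1
  simpa using this

lemma Mc5 (hf : ContDiffOn ℝ 2 (uncurry f) (Icc (-a) a ×ˢ (univ : Set ℝ))) :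
    ContinuousOn (fun z : ℝ × ℝ => pdxx f z.1 z.2) (Ioo (-a) a ×ˢ (univ : Set ℝ)) := by
  have h2 : ContinuousOn
      (fun z : ℝ × ℝ => fderiv ℝ (fderiv ℝ (uncurry f)) z ((0:ℝ), (1:ℝ)) ((0:ℝ), (1:ℝ)))
      (Ioo (-a) a ×ˢ (univ : Set ℝ)) := ((Mc2cont hf).clm_apply continuousOn_const).clm_apply
        continuousOn_const
  apply h2.congr
  intro z hz
  have : pdxx f z.1 z.2 = fderiv ℝ (fderiv ℝ (uncurry f)) (z.1, z.2) (0, 1) (0, 1) := M5' hf hz.1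
  simpa using this

/-- slice continuity -/
lemma slice_cont {g : ℝ × ℝ → ℝ} {s : ℝ} (hg : ContinuousOn g (Ioo (-a) a ×ˢ (univ : Set ℝ)))
    (hs : s ∈ Ioo (-a) a) : Continuous (fun x => g (s, x)) := by
  apply hg.comp_continuous (by fun_prop)
  intro x
  exact ⟨hs, mem_univ x⟩

/-- generic differentiation under the interval integral -/
lemma Igen {F F' : ℝ → ℝ → ℝ} (hL : 0 < L) {s0 η C : ℝ} (hη : 0 < η)
    (hmeas : ∀ s ∈ Metric.ball s0 η, Continuous (F s))
    (hmeas' : Continuous (F' s0))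
    (hb : ∀ t ∈ Icc (0:ℝ) L, ∀ s ∈ Metric.ball s0 η, |F' s t| ≤ C)
    (hdiff : ∀ t : ℝ, ∀ s ∈ Metric.ball s0 η, HasDerivAt (fun s' => F s' t) (F' s t) s) :
    HasDerivAt (fun s => ∫ x in (0:ℝ)..L, F s x) (∫ x in (0:ℝ)..L, F' s0 x) s0 := by
  have h := intervalIntegral.hasDerivAt_integral_of_dominated_loc_of_deriv_le
    (F := F) (F' := F') (x₀ := s0) (bound := fun _ => C) (a := 0) (b := L) (μ := MeasureTheory.volume) (Metric.ball_mem_nhds s0 hη)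
    ?_ ?_ ?_ ?_ ?_ ?_
  · exact h.2
  · filter_upwards [Metric.ball_mem_nhds s0 hη] with s hs
    exact (hmeas s hs).aestronglyMeasurable
  · exact (hmeas s0 (Metric.mem_ball_self hη)).intervalIntegrable 0 L
  · exact hmeas'.aestronglyMeasurable
  · apply MeasureTheory.ae_of_all
    intro t ht s hs
    rw [Real.norm_eq_abs]
    apply hb t _ s hs
    rw [uIoc_of_le hL.le] at ht
    exact Ioc_subset_Icc_self ht
  · exact intervalIntegrable_const
  · apply MeasureTheory.ae_of_all
    intro t _ s hs
    exact hdiff t s hs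

lemma ball_subset_Ioo {s0 : ℝ} (hs0 : s0 ∈ Ioo (-a) a) :
    Metric.ball s0 (min (a - s0) (s0 + a) / 2) ⊆ Ioo (-a) a := by
  intro s hs
  rw [Metric.mem_ball, Real.dist_eq, abs_lt] at hs
  have h1 := min_le_left (a - s0) (s0 + a)
  have h2 := min_le_right (a - s0) (s0 + a)
  constructor <;> [linarith [hs.1]; linarith [hs.2]]

lemma Icc_subset_Ioo' {s0 : ℝ} (hs0 : s0 ∈ Ioo (-a) a) :
    Icc (s0 - min (a - s0) (s0 + a) / 2) (s0 + min (a - s0) (s0 + a) / 2) ⊆ Ioo (-a) a := by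
  intro s hs
  have h1 := min_le_left (a - s0) (s0 + a)
  have h2 := min_le_right (a - s0) (s0 + a)
  have h3 : 0 < min (a - s0) (s0 + a) := lt_min (by linarith [hs0.2]) (by linarith [hs0.1])
  constructor <;> [linarith [hs.1]; linarith [hs.2]]

lemma Ideriv1 (hL : 0 < L) (hf : ContDiffOn ℝ 2 (uncurry f) (Icc (-a) a ×ˢ (univ : Set ℝ)))
    {s0 : ℝ} (hs0 : s0 ∈ Ioo (-a) a) :
    HasDerivAt (fun s => ∫ x in (0:ℝ)..L, f s x) (∫ x in (0:ℝ)..L, pds f s0 x) s0 := by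
  set η := min (a - s0) (s0 + a) / 2 with hηdef
  have hη : 0 < η := by
    have h3 : 0 < min (a - s0) (s0 + a) := lt_min (by linarith [hs0.2]) (by linarith [hs0.1])
    positivity
  have hcpt : IsCompact (Icc (s0 - η) (s0 + η) ×ˢ Icc (0:ℝ) L) := isCompact_Icc.prod isCompact_Icc
  have hsubK : Icc (s0 - η) (s0 + η) ×ˢ Icc (0:ℝ) L ⊆ Ioo (-a) a ×ˢ (univ : Set ℝ) :=
    prod_mono (Icc_subset_Ioo' hs0) (subset_univ _)
  obtain ⟨C, hC⟩ := hcpt.exists_bound_of_continuousOn ((Mc1 hf).mono hsubK)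
  apply Igen hL hη (C := C)
  · intro s hs
    have hsIoo : s ∈ Ioo (-a) a := ball_subset_Ioo hs0 hs
    have : Continuous (fun x => (uncurry f) (s, x)) :=
      (hf.mono (prod_mono Ioo_subset_Icc_self subset_rfl)).continuousOn.comp_continuous
        (by fun_prop) (fun x => ⟨hsIoo, mem_univ x⟩)
    exact this
  · exact slice_cont (Mc1 hf) hs0
  · intro t ht s hs
    have hmemK : ((s, t) : ℝ × ℝ) ∈ Icc (s0 - η) (s0 + η) ×ˢ Icc (0:ℝ) L := by
      refine ⟨?_, ht⟩
      rw [Metric.mem_ball, Real.dist_eq, abs_lt] at hs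
      exact ⟨by linarith [hs.1], by linarith [hs.2]⟩
    have := hC (s, t) hmemK
    rwa [Real.norm_eq_abs] at this
  · intro t s hs
    have hsIoo : s ∈ Ioo (-a) a := ball_subset_Ioo hs0 hs
    have h := M1 (x := t) hf hsIoo
    rwa [← M1' (x := t) hf hsIoo] at h

lemma Ideriv2 (hL : 0 < L) (hf : ContDiffOn ℝ 2 (uncurry f) (Icc (-a) a ×ˢ (univ : Set ℝ)))
    {s0 : ℝ} (hs0 : s0 ∈ Ioo (-a) a) :
    HasDerivAt (fun s => ∫ x in (0:ℝ)..L, pds f s x) (∫ x in (0:ℝ)..L, pdss f s0 x) s0 := by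
  set η := min (a - s0) (s0 + a) / 2 with hηdef
  have hη : 0 < η := by
    have h3 : 0 < min (a - s0) (s0 + a) := lt_min (by linarith [hs0.2]) (by linarith [hs0.1])
    positivity
  have hcpt : IsCompact (Icc (s0 - η) (s0 + η) ×ˢ Icc (0:ℝ) L) := isCompact_Icc.prod isCompact_Icc
  have hsubK : Icc (s0 - η) (s0 + η) ×ˢ Icc (0:ℝ) L ⊆ Ioo (-a) a ×ˢ (univ : Set ℝ) :=
    prod_mono (Icc_subset_Ioo' hs0) (subset_univ _)
  obtain ⟨C, hC⟩ := hcpt.exists_bound_of_continuousOn ((Mc3 hf).mono hsubK)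
  apply Igen hL hη (C := C)
  · intro s hs
    exact slice_cont (Mc1 hf) (ball_subset_Ioo hs0 hs)
  · exact slice_cont (Mc3 hf) hs0
  · intro t ht s hs
    have hmemK : ((s, t) : ℝ × ℝ) ∈ Icc (s0 - η) (s0 + η) ×ˢ Icc (0:ℝ) L := by
      refine ⟨?_, ht⟩
      rw [Metric.mem_ball, Real.dist_eq, abs_lt] at hs
      exact ⟨by linarith [hs.1], by linarith [hs.2]⟩
    have := hC (s, t) hmemK
    rwa [Real.norm_eq_abs] at this
  · intro t s hs
    have hsIoo : s ∈ Ioo (-a) a := ball_subset_Ioo hs0 hs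
    have h := M3 (x := t) hf hsIoo
    rwa [← M3' (x := t) hf hsIoo] at h

lemma Ixx (hL : 0 < L) (hf : ContDiffOn ℝ 2 (uncurry f) (Icc (-a) a ×ˢ (univ : Set ℝ)))
    (hper : ∀ s x, f s (x + L) = f s x) {s : ℝ} (hs : s ∈ Ioo (-a) a) :
    ∫ x in (0:ℝ)..L, pdxx f s x = 0 := by
  have hdiff : ∀ x ∈ uIcc (0:ℝ) L, DifferentiableAt ℝ (deriv (f s)) x :=
    fun x _ => (M5 (x := x) hf hs).differentiableAt
  have hint : IntervalIntegrable (deriv (deriv (f s))) MeasureTheory.volume 0 L := by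
    have : Continuous (fun x => pdxx f s x) := slice_cont (Mc5 hf) hs
    exact this.intervalIntegrable 0 L
  have h := intervalIntegral.integral_deriv_eq_sub hdiff hint
  have hPd : ∀ x, deriv (f s) (x + L) = deriv (f s) x := by
    intro x
    have hfun : (fun y => f s (y + L)) = f s := funext fun y => hper s y
    calc deriv (f s) (x + L) = deriv (fun y => f s (y + L)) x := (deriv_comp_add_const _ _ _).symm
      _ = deriv (f s) x := by rw [hfun]
  have : ∫ x in (0:ℝ)..L, pdxx f s x = deriv (f s) L - deriv (f s) 0 := h
  rw [this]
  have := hPd 0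
  rw [zero_add] at this
  rw [this]
  ring

lemma Ixs (hL : 0 < L) (hf : ContDiffOn ℝ 2 (uncurry f) (Icc (-a) a ×ˢ (univ : Set ℝ)))
    (hper : ∀ s x, f s (x + L) = f s x) {s : ℝ} (hs : s ∈ Ioo (-a) a) :
    ∫ x in (0:ℝ)..L, pdxs f s x = 0 := by
  have hdiff : ∀ x ∈ uIcc (0:ℝ) L, DifferentiableAt ℝ (fun x' => pds f s x') x := by
    intro x _
    have h := M4 (x := x) hf hs
    exact h.differentiableAt
  have hint : IntervalIntegrable (deriv (fun x' => pds f s x')) MeasureTheory.volume 0 L := by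
    have hcc : Continuous (fun x => pdxs f s x) := slice_cont (Mc4 hf) hs
    exact hcc.intervalIntegrable 0 L
  have h := intervalIntegral.integral_deriv_eq_sub hdiff hint
  have hkey : ∫ x in (0:ℝ)..L, pdxs f s x = pds f s L - pds f s 0 := h
  rw [hkey]
  have hfun : (fun s' => f s' L) = (fun s' => f s' 0) := by
    funext s'
    have := hper s' 0
    rw [zero_add] at this
    exact this
  show deriv (fun s' => f s' L) s - deriv (fun s' => f s' 0) s = 0
  rw [hfun]
  ring

end integration

/-- 1-D propagation: once the derivative is very negative, strong concavity keeps it so,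
forcing a quadratic drop. -/
lemma ode_drop {W W1 W2 : ℝ → ℝ} {aL aR s1 t d κ : ℝ}
    (hI : ∀ s ∈ Ioo aL aR, HasDerivAt W (W1 s) s)
    (hI2 : ∀ s ∈ Ioo aL aR, HasDerivAt W1 (W2 s) s)
    (hs1 : s1 ∈ Ioo aL aR) (ht : t ∈ Ioo aL aR) (hs1t : s1 < t)
    (hd : 0 < d) (hκ : 0 ≤ κ) (hW1s1 : W1 s1 ≤ -d)
    (hW2 : ∀ s ∈ Ioo aL aR, W1 s ≤ -d/2 → W2 s ≤ -κ) :
    W t ≤ W s1 - d * (t - s1) - κ * (t - s1)^2 / 2 := by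
  have hsub : Icc s1 t ⊆ Ioo aL aR := fun r hr => ⟨lt_of_lt_of_le hs1.1 hr.1, lt_of_le_of_lt hr.2 ht.2⟩
  have hcontW1 : ContinuousOn W1 (Icc s1 t) :=
    fun r hr => ((hI2 r (hsub hr)).continuousAt).continuousWithinAt
  -- (A) the derivative stays below -d on [s1, t]
  have hA : ∀ r ∈ Icc s1 t, W1 r ≤ -d := by
    set A := {r ∈ Icc s1 t | ∀ s ∈ Icc s1 r, W1 s ≤ -d} with hAdef
    have hs1A : s1 ∈ A := by
      refine ⟨⟨le_refl _, hs1t.le⟩, ?_⟩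
      intro s hs
      have : s = s1 := le_antisymm hs.2 hs.1
      rwa [this]
    have hbdd : BddAbove A := ⟨t, fun r hr => hr.1.2⟩
    set S := sSup A with hSdef
    have hS1 : s1 ≤ S := le_csSup hbdd hs1A
    have hSt : S ≤ t := csSup_le ⟨s1, hs1A⟩ (fun r hr => hr.1.2)
    have hSmem : ∀ s ∈ Icc s1 S, W1 s ≤ -d := by
      intro s hs
      rcases lt_or_eq_of_le hs.2 with hlt | heq
      · -- s < S : s is not an upper bound
        by_contra hgt
        push_neg at hgt
        have hub : ∀ r ∈ A, r ≤ s := by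
          intro r hr
          by_contra hrs
          push_neg at hrs
          exact absurd (hr.2 s ⟨hs.1, hrs.le⟩) (by linarith)
        exact absurd (csSup_le ⟨s1, hs1A⟩ hub) (by linarith)
      · -- s = S : continuity
        by_contra hgt
        push_neg at hgt
        rcases eq_or_lt_of_le hs.1 with heq1 | hlt1
        · rw [← heq1] at hgt; linarith
        have hsmem : s ∈ Icc s1 t := ⟨hs.1, by rw [heq]; exact hSt⟩
        have hc : ContinuousWithinAt W1 (Icc s1 t) s := hcontW1 s hsmem
        have hev : ∀ᶠ r in nhdsWithin s (Icc s1 t), -d < W1 r :=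
          hc.eventually (eventually_gt_nhds hgt)
        rw [eventually_nhdsWithin_iff] at hev
        obtain ⟨δ, hδ, hball⟩ := Metric.eventually_nhds_iff.1 hev
        set r := max s1 (s - δ/2) with hrdef
        have hr1 : s1 ≤ r := le_max_left _ _
        have hrs : r < s := max_lt hlt1 (by linarith)
        have hrt : r ≤ t := le_trans hrs.le hsmem.2
        have hdist : dist r s < δ := by
          rw [Real.dist_eq, abs_lt]
          constructor
          · have := le_max_right s1 (s - δ/2); linarith
          · linarith
        have hgt2 := hball hdist ⟨hr1, hrt⟩
        -- but r < S so W1 r ≤ -d by the first case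
        have : W1 r ≤ -d := by
          by_contra hgt3
          push_neg at hgt3
          have hub : ∀ r' ∈ A, r' ≤ r := by
            intro r' hr'
            by_contra hrr
            push_neg at hrr
            exact absurd (hr'.2 r ⟨hr1, hrr.le⟩) (by linarith)
          have hSr : S ≤ r := csSup_le ⟨s1, hs1A⟩ hub
          have hrS : r < S := by rw [← heq]; exact hrs
          linarith
        linarith
    have hSA : S = t := by
      by_contra hne
      have hStlt : S < t := lt_of_le_of_ne hSt hne
      have hW1S : W1 S ≤ -d := hSmem S ⟨hS1, le_refl _⟩
      have hc : ContinuousWithinAt W1 (Icc s1 t) S := hcontW1 S ⟨hS1, hSt⟩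
      have hev : ∀ᶠ r in nhdsWithin S (Icc s1 t), W1 r < -d/2 :=
        hc.eventually (eventually_lt_nhds (by linarith))
      rw [eventually_nhdsWithin_iff] at hev
      obtain ⟨δ, hδ, hball⟩ := Metric.eventually_nhds_iff.1 hev
      set t2 := min t (S + δ/2) with ht2def
      have hSt2 : S < t2 := lt_min hStlt (by linarith)
      have ht2t : t2 ≤ t := min_le_left _ _
      have hsmall : ∀ r ∈ Icc S t2, W1 r < -d/2 := by
        intro r hr
        rcases eq_or_lt_of_le hr.1 with heq | hlt
        · rw [← heq]; linarith
        apply hball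
        · rw [Real.dist_eq, abs_lt]
          have := hr.2
          have h2 := min_le_right t (S + δ/2)
          constructor <;> [linarith; linarith]
        · exact ⟨le_trans hS1 hr.1, le_trans hr.2 ht2t⟩
      have hanti : AntitoneOn W1 (Icc S t2) := by
        apply antitoneOn_of_deriv_nonpos (convex_Icc _ _)
        · exact hcontW1.mono (fun r hr => ⟨le_trans hS1 hr.1, le_trans hr.2 ht2t⟩)
        · intro r hr
          rw [interior_Icc] at hr
          have hrIoo : r ∈ Ioo aL aR := hsub ⟨le_trans hS1 hr.1.le, le_trans hr.2.le ht2t⟩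
          exact (hI2 r hrIoo).differentiableAt.differentiableWithinAt
        · intro r hr
          rw [interior_Icc] at hr
          have hrIoo : r ∈ Ioo aL aR := hsub ⟨le_trans hS1 hr.1.le, le_trans hr.2.le ht2t⟩
          rw [(hI2 r hrIoo).deriv]
          have := hW2 r hrIoo (le_of_lt (hsmall r ⟨hr.1.le, hr.2.le⟩))
          linarith
      have ht2A : t2 ∈ A := by
        refine ⟨⟨le_trans hS1 hSt2.le, ht2t⟩, ?_⟩
        intro s hsm
        rcases le_or_gt s S with hsS | hSs
        · exact hSmem s ⟨hsm.1, hsS⟩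
        · have h1 := hanti (left_mem_Icc.2 hSt2.le) ⟨hSs.le, hsm.2⟩ hSs.le
          linarith [hW1S]
      have := le_csSup hbdd ht2A
      linarith
    intro r hr
    exact hSmem r ⟨hr.1, by rw [hSA]; exact hr.2⟩
  -- (B) quadratic drop
  have hB1 : ∀ s ∈ Icc s1 t, W1 s ≤ -d - κ * (s - s1) := by
    have hanti : AntitoneOn (fun s => W1 s + κ * s) (Icc s1 t) := by
      apply antitoneOn_of_deriv_nonpos (convex_Icc _ _)
      · exact hcontW1.add (continuous_const.mul continuous_id).continuousOn
      · intro r hr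
        rw [interior_Icc] at hr
        have hrIoo : r ∈ Ioo aL aR := hsub ⟨hr.1.le, hr.2.le⟩
        exact (((hI2 r hrIoo).add ((hasDerivAt_id r).const_mul κ)).differentiableAt).differentiableWithinAt
      · intro r hr
        rw [interior_Icc] at hr
        have hrIoo : r ∈ Ioo aL aR := hsub ⟨hr.1.le, hr.2.le⟩
        have hD : HasDerivAt (fun s => W1 s + κ * s) (W2 r + κ) r := by
          exact ((hI2 r hrIoo).add ((hasDerivAt_id' r).const_mul κ)).congr_deriv (by ring)
        rw [hD.deriv]
        have hle := hW2 r hrIoo (by linarith [hA r ⟨hr.1.le, hr.2.le⟩])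
        linarith
    intro s hs
    have := hanti (left_mem_Icc.2 hs1t.le) hs hs.1
    have h2 := hA s1 (left_mem_Icc.2 hs1t.le)
    simp only at this
    nlinarith
  have hanti2 : AntitoneOn (fun s => W s + d * s + κ * (s - s1)^2 / 2) (Icc s1 t) := by
    apply antitoneOn_of_deriv_nonpos (convex_Icc _ _)
    · have hcW : ContinuousOn W (Icc s1 t) :=
        fun r hr => ((hI r (hsub hr)).continuousAt).continuousWithinAt
      apply (hcW.add (continuous_const.mul continuous_id).continuousOn).add
      exact (Continuous.continuousOn (by fun_prop))
    · intro r hr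
      rw [interior_Icc] at hr
      have hrIoo : r ∈ Ioo aL aR := hsub ⟨hr.1.le, hr.2.le⟩
      have hD : HasDerivAt (fun s => W s + d * s + κ * (s - s1)^2 / 2)
          (W1 r + d + κ * (r - s1)) r := by
        have h1 : HasDerivAt (fun s : ℝ => κ * (s - s1)^2 / 2) (κ * (r - s1)) r := by
          have h2 : HasDerivAt (fun s : ℝ => (s - s1)^2) (2 * (r - s1)) r := by
            exact (((hasDerivAt_id' r).sub_const s1).pow 2).congr_deriv (by norm_num)
          have := (h2.const_mul κ).div_const 2
          exact this.congr_deriv (by ring)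
        exact (((hI r hrIoo).add ((hasDerivAt_id' r).const_mul d)).add h1).congr_deriv (by ring)
      exact hD.differentiableAt.differentiableWithinAt
    · intro r hr
      rw [interior_Icc] at hr
      have hrIoo : r ∈ Ioo aL aR := hsub ⟨hr.1.le, hr.2.le⟩
      have hD : HasDerivAt (fun s => W s + d * s + κ * (s - s1)^2 / 2)
          (W1 r + d + κ * (r - s1)) r := by
        have h1 : HasDerivAt (fun s : ℝ => κ * (s - s1)^2 / 2) (κ * (r - s1)) r := by
          have h2 : HasDerivAt (fun s : ℝ => (s - s1)^2) (2 * (r - s1)) r := by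
            exact (((hasDerivAt_id' r).sub_const s1).pow 2).congr_deriv (by norm_num)
          have := (h2.const_mul κ).div_const 2
          exact this.congr_deriv (by ring)
        exact (((hI r hrIoo).add ((hasDerivAt_id' r).const_mul d)).add h1).congr_deriv (by ring)
      rw [hD.deriv]
      have := hB1 r ⟨hr.1.le, hr.2.le⟩
      linarith
  have := hanti2 (left_mem_Icc.2 hs1t.le) (right_mem_Icc.2 hs1t.le) hs1t.le
  simp only at this
  nlinarith


set_option maxHeartbeats 2000000

/-- along the second homotopy, for very negative speeds the normalization is
exceeded: `sup_{(-a₀,a₀)×ℝ}(u+v) > ν`. -/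
theorem stmt13
    (L : ℝ) (hL : 0 < L)
    (ru rv γu γv μ : ℝ → ℝ)
    (hru : ContDiff ℝ (⊤ : ℕ∞) ru) (hrv : ContDiff ℝ (⊤ : ℕ∞) rv)
    (hγu : ContDiff ℝ (⊤ : ℕ∞) γu) (hγv : ContDiff ℝ (⊤ : ℕ∞) γv) (hμ : ContDiff ℝ (⊤ : ℕ∞) μ)
    (hru_per : ∀ x, ru (x + L) = ru x) (hrv_per : ∀ x, rv (x + L) = rv x)
    (hγu_per : ∀ x, γu (x + L) = γu x) (hγv_per : ∀ x, γv (x + L) = γv x)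
    (hμ_per : ∀ x, μ (x + L) = μ x)
    (hγu_pos : ∀ x, 0 < γu x) (hγv_pos : ∀ x, 0 < γv x) (hμ_pos : ∀ x, 0 < μ x)
    -- bounds on the coefficients
    (γ0 rinfty : ℝ) (hγ0 : 0 < γ0)
    (hγ0_le : ∀ x, γ0 ≤ γu x ∧ γ0 ≤ γv x)
    (hr_le : ∀ x, ru x ≤ rinfty ∧ rv x ≤ rinfty)
    -- a positive L-periodic C² steady state (p,q)
    (p q : ℝ → ℝ)
    (hp : ContDiff ℝ 2 p) (hq : ContDiff ℝ 2 q)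
    (hp_per : ∀ x, p (x + L) = p x) (hq_per : ∀ x, q (x + L) = q x)
    (hp_pos : ∀ x, 0 < p x) (hq_pos : ∀ x, 0 < q x)
    (hp_eq : ∀ x, -(deriv (deriv p) x)
        = (ru x - γu x * (p x + q x)) * p x + μ x * (q x - p x))
    (hq_eq : ∀ x, -(deriv (deriv q) x)
        = (rv x - γv x * (p x + q x)) * q x + μ x * (p x - q x))
    -- parameters
    (K ν a0 a ε : ℝ) (hK : 1 ≤ K)
    (hν0 : 0 < ν) (hν : ν < sInf (range fun x => min (p x) (q x)))
    (ha0 : 0 < a0) (ha0a : a0 < a) (hε : ε ∈ Ioo (0:ℝ) 1) :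
    -- with C and 𝒞 as prescribed:
    ∀ Cb CC : ℝ,
      Cb = max (2 * rinfty / γ0) (K * sSup (range fun x => p x + q x)) →
      CC = -(sInf (range fun x =>
        min (ru x - γu x * (q x / K + Cb) - μ x)
          (min (rv x - γv x * (p x / K + Cb) - μ x) 0))) →
      ∃ cund : ℝ, 0 ≤ cund ∧ ∀ τ ∈ Icc (0:ℝ) 1, ∀ c ≤ -cund,
        ∀ u v : ℝ → ℝ → ℝ,
          ContDiffOn ℝ 2 (Function.uncurry u) (Icc (-a) a ×ˢ univ) →
          ContDiffOn ℝ 2 (Function.uncurry v) (Icc (-a) a ×ˢ univ) →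
          (∀ s x, u s (x + L) = u s x ∧ v s (x + L) = v s x) →
          (∀ s ∈ Icc (-a) a, ∀ x : ℝ, 0 ≤ u s x ∧ 0 ≤ v s x) →
          (∀ s ∈ Ioo (-a) a, ∀ x : ℝ,
            -(pdxx u s x) - 2 * pdxs u s x - (1 + ε) * pdss u s x - c * pds u s x
              = τ * (u s x * (ru x - γu x * q x / K - μ x - γu x * u s x) + μ x * v s x)
                - (1 - τ) * CC * u s x) →
          (∀ s ∈ Ioo (-a) a, ∀ x : ℝ,
            -(pdxx v s x) - 2 * pdxs v s x - (1 + ε) * pdss v s x - c * pds v s x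
              = τ * (v s x * (rv x - γv x * p x / K - μ x - γv x * v s x) + μ x * u s x)
                - (1 - τ) * CC * v s x) →
          (∀ x : ℝ, u (-a) x = K * p x ∧ v (-a) x = K * q x) →
          (∀ x : ℝ, u a x = 0 ∧ v a x = 0) →
          ∃ s ∈ Ioo (-a0) a0, ∃ x : ℝ, ν < u s x + v s x := by
  intro Cb CC hCb hCC
  have ha : 0 < a := lt_trans ha0 ha0a
  have hKpos : 0 < K := lt_of_lt_of_le one_pos hK
  -- basic continuity facts
  have hruc : Continuous ru := hru.continuous
  have hrvc : Continuous rv := hrv.continuous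
  have hγuc : Continuous γu := hγu.continuous
  have hγvc : Continuous γv := hγv.continuous
  have hμc : Continuous μ := hμ.continuous
  have hpc : Continuous p := hp.continuous
  have hqc : Continuous q := hq.continuous
  -- sup of p + q
  have hpqc : Continuous fun x => p x + q x := hpc.add hqc
  have hpqper : ∀ x, p (x + L) + q (x + L) = p x + q x := by
    intro x; rw [hp_per, hq_per]
  have hpqbdd := (periodic_bdd hL hpqc hpqper).1
  have hSpq_ge : ∀ x, p x + q x ≤ sSup (range fun x => p x + q x) :=
    fun x => le_csSup hpqbdd (mem_range_self x)
  have hSpq_pos : 0 < sSup (range fun x => p x + q x) :=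
    lt_of_lt_of_le (by linarith only [hp_pos 0, hq_pos 0]) (hSpq_ge 0)
  have hCbpos : 0 < Cb := by
    rw [hCb]
    exact lt_of_lt_of_le (mul_pos hKpos hSpq_pos) (le_max_right _ _)
  have hCb2r : 2 * rinfty / γ0 ≤ Cb := hCb ▸ le_max_left _ _
  have hCbK : K * sSup (range fun x => p x + q x) ≤ Cb := hCb ▸ le_max_right _ _
  have h2rg : 2 * rinfty ≤ γ0 * Cb := by
    rw [div_le_iff₀ hγ0] at hCb2r; linarith
  -- CC is nonnegative
  have hCC0 : 0 ≤ CC := by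
    rw [hCC]
    set F := fun x => min (ru x - γu x * (q x / K + Cb) - μ x)
      (min (rv x - γv x * (p x / K + Cb) - μ x) 0) with hFdef
    have hFc : Continuous F := by
      apply Continuous.min
      · fun_prop
      · exact Continuous.min (by fun_prop) continuous_const
    have hFper : ∀ x, F (x + L) = F x := by
      intro x
      simp only [hFdef, hru_per, hrv_per, hγu_per, hγv_per, hμ_per, hp_per, hq_per]
    have hFbdd := (periodic_bdd hL hFc hFper).2
    have h1 : sInf (range F) ≤ F 0 := csInf_le hFbdd (mem_range_self 0)
    have h2 : F 0 ≤ 0 := le_trans (min_le_right _ _) (min_le_right _ _)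
    linarith only [h1, h2]
  -- pointwise lower bound on p, q
  have hνx : ∀ x, ν < min (p x) (q x) := by
    intro x
    have hmc : Continuous fun x => min (p x) (q x) := hpc.min hqc
    have hmper : ∀ x', min (p (x' + L)) (q (x' + L)) = min (p x') (q x') := by
      intro x'; rw [hp_per, hq_per]
    have hbdd := (periodic_bdd hL hmc hmper).2
    exact lt_of_lt_of_le hν (csInf_le hbdd (mem_range_self x))
  -- the constants Su, Sv, Λ
  set Au := fun x => |ru x| + γu x * q x / K + μ x + γu x * Cb with hAudef
  set Av := fun x => |rv x| + γv x * p x / K + μ x + γv x * Cb with hAvdef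
  have hAuc : Continuous Au := by fun_prop
  have hAvc : Continuous Av := by fun_prop
  have hAuper : ∀ x, Au (x + L) = Au x := by
    intro x; simp only [hAudef, hru_per, hγu_per, hμ_per, hq_per]
  have hAvper : ∀ x, Av (x + L) = Av x := by
    intro x; simp only [hAvdef, hrv_per, hγv_per, hμ_per, hp_per]
  set Su := sSup (range Au) with hSudef
  set Sv := sSup (range Av) with hSvdef
  have hSu_ge : ∀ x, Au x ≤ Su := fun x => le_csSup (periodic_bdd hL hAuc hAuper).1 (mem_range_self x)
  have hSv_ge : ∀ x, Av x ≤ Sv := fun x => le_csSup (periodic_bdd hL hAvc hAvper).1 (mem_range_self x)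
  have hAu0 : ∀ x, 0 ≤ Au x := by
    intro x
    have h1 : 0 ≤ |ru x| := abs_nonneg _
    have h2 : 0 ≤ γu x * q x / K := by
      apply div_nonneg _ hKpos.le
      exact mul_nonneg (hγu_pos x).le (hq_pos x).le
    have h3 := (hμ_pos x).le
    have h4 : 0 ≤ γu x * Cb := mul_nonneg (hγu_pos x).le hCbpos.le
    simp only [hAudef]; linarith only [h1, h2, h3, h4]
  have hAv0 : ∀ x, 0 ≤ Av x := by
    intro x
    have h1 : 0 ≤ |rv x| := abs_nonneg _
    have h2 : 0 ≤ γv x * p x / K := by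
      apply div_nonneg _ hKpos.le
      exact mul_nonneg (hγv_pos x).le (hp_pos x).le
    have h3 := (hμ_pos x).le
    have h4 : 0 ≤ γv x * Cb := mul_nonneg (hγv_pos x).le hCbpos.le
    simp only [hAvdef]; linarith only [h1, h2, h3, h4]
  have hSu0 : 0 ≤ Su := le_trans (hAu0 0) (hSu_ge 0)
  have hSv0 : 0 ≤ Sv := le_trans (hAv0 0) (hSv_ge 0)
  set Λ := Su + Sv + CC with hΛdef
  have hΛ0 : 0 ≤ Λ := by simp only [hΛdef]; linarith only [hSu0, hSv0, hCC0]
  set d := ν * L / (2 * a) with hddef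
  have hd : 0 < d := by simp only [hddef]; positivity
  set ρ := (a + a0) / 2 with hρdef
  have hρ : 0 < ρ := by simp only [hρdef]; positivity
  set κ := 2 * (Cb * L) / ρ ^ 2 + 1 with hκdef
  have hκpos : 0 < κ := by
    have : 0 < 2 * (Cb * L) / ρ ^ 2 := by positivity
    simp only [hκdef]; linarith only [this]
  clear_value Au Av Su Sv Λ d ρ κ
  refine ⟨max 1 ((2 / d) * (Λ * (Cb * L) + 2 * κ)), le_trans zero_le_one (le_max_left _ _), ?_⟩
  intro τ hτ c hc u v hu hv hper2 hnn heq1 heq2 hbc1 hbc2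
  by_contra hcon
  push_neg at hcon
  have hc1 : c ≤ -1 := le_trans hc (neg_le_neg (le_max_left _ _))
  have hcneg : c < 0 := lt_of_le_of_lt hc1 (by norm_num)
  have hccund : c ≤ -((2 / d) * (Λ * (Cb * L) + 2 * κ)) :=
    le_trans hc (neg_le_neg (le_max_right _ _))
  -- STEP A : a priori bound
  have hAP : ∀ s ∈ Icc (-a) a, ∀ x : ℝ, u s x + v s x ≤ Cb := by
    apply apriori hL ha hε.1 hcneg hCbpos.le hu hv hper2
    · intro x
      rw [(hbc1 x).1, (hbc1 x).2]
      have h1 : K * (p x + q x) ≤ K * sSup (range fun x => p x + q x) :=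
        mul_le_mul_of_nonneg_left (hSpq_ge x) hKpos.le
      linarith only [h1, hCbK]
    · intro x
      rw [(hbc2 x).1, (hbc2 x).2]
      linarith only [hCbpos]
    · intro s hs x hgt
      rw [heq1 s hs x, heq2 s hs x]
      have hU0 : 0 ≤ u s x := (hnn s (Ioo_subset_Icc_self hs) x).1
      have hV0 : 0 ≤ v s x := (hnn s (Ioo_subset_Icc_self hs) x).2
      set U := u s x
      set V := v s x
      have hsum : τ * (U * (ru x - γu x * q x / K - μ x - γu x * U) + μ x * V)
            - (1 - τ) * CC * U
          + (τ * (V * (rv x - γv x * p x / K - μ x - γv x * V) + μ x * U)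
            - (1 - τ) * CC * V)
          = τ * (U * ru x + V * rv x - γu x * q x / K * U - γv x * p x / K * V
              - γu x * U^2 - γv x * V^2) - (1 - τ) * CC * (U + V) := by ring
      rw [hsum]
      have hB : U * ru x + V * rv x - γu x * q x / K * U - γv x * p x / K * V
          - γu x * U^2 - γv x * V^2 ≤ 0 := by
        have h1 : γ0 * U^2 ≤ γu x * U^2 := by
          have m := mul_nonneg (by linarith only [(hγ0_le x).1] : (0:ℝ) ≤ γu x - γ0) (sq_nonneg U)
          linarith only [m]
        have h2 : γ0 * V^2 ≤ γv x * V^2 := by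
          have m := mul_nonneg (by linarith only [(hγ0_le x).2] : (0:ℝ) ≤ γv x - γ0) (sq_nonneg V)
          linarith only [m]
        have h3 : U * ru x ≤ U * rinfty := mul_le_mul_of_nonneg_left (hr_le x).1 hU0
        have h4 : V * rv x ≤ V * rinfty := mul_le_mul_of_nonneg_left (hr_le x).2 hV0
        have h5 : 0 ≤ γu x * q x / K * U := by
          apply mul_nonneg _ hU0
          apply div_nonneg _ hKpos.le
          exact mul_nonneg (hγu_pos x).le (hq_pos x).le
        have h6 : 0 ≤ γv x * p x / K * V := by
          apply mul_nonneg _ hV0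
          apply div_nonneg _ hKpos.le
          exact mul_nonneg (hγv_pos x).le (hp_pos x).le
        have h7 : γ0 * (U + V)^2 / 2 ≤ γ0 * (U^2 + V^2) := by
          have m := mul_nonneg hγ0.le (sq_nonneg (U - V))
          linarith only [m]
        have h8 : 2 * rinfty ≤ γ0 * (U + V) := by
          have m := mul_le_mul_of_nonneg_left hgt.le hγ0.le
          linarith only [m, h2rg]
        have h9 : 0 ≤ (U + V) * (γ0 * (U + V) / 2 - rinfty) := by
          apply mul_nonneg (by linarith only [hU0, hV0])
          linarith only [h8]
        linarith only [h9, h1, h2, h3, h4, h5, h6, h7]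
      have hτ0 := hτ.1
      have hτ1 := hτ.2
      have hCCU : 0 ≤ (1 - τ) * CC * (U + V) := by
        apply mul_nonneg (mul_nonneg (by linarith only [hτ1]) hCC0)
          (by linarith only [hU0, hV0])
      have m := mul_nonneg hτ0 (neg_nonneg.2 hB)
      linarith only [m, hCCU]
  -- STEP B : integrated quantities
  have hperu : ∀ s x, u s (x + L) = u s x := fun s x => (hper2 s x).1
  have hperv : ∀ s x, v s (x + L) = v s x := fun s x => (hper2 s x).2
  have hsliceu : ∀ s ∈ Icc (-a) a, Continuous (fun x => u s x) := by
    intro s hs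
    have hg : Continuous fun x : ℝ => ((s, x) : ℝ × ℝ) := by fun_prop
    exact hu.continuousOn.comp_continuous hg (fun x => ⟨hs, mem_univ x⟩)
  have hslicev : ∀ s ∈ Icc (-a) a, Continuous (fun x => v s x) := by
    intro s hs
    have hg : Continuous fun x : ℝ => ((s, x) : ℝ × ℝ) := by fun_prop
    exact hv.continuousOn.comp_continuous hg (fun x => ⟨hs, mem_univ x⟩)
  set W : ℝ → ℝ := fun s => (∫ x in (0:ℝ)..L, u s x) + (∫ x in (0:ℝ)..L, v s x) with hWdef
  set W1 : ℝ → ℝ := fun s => (∫ x in (0:ℝ)..L, pds u s x) + (∫ x in (0:ℝ)..L, pds v s x)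
    with hW1def
  set W2 : ℝ → ℝ := fun s => (∫ x in (0:ℝ)..L, pdss u s x) + (∫ x in (0:ℝ)..L, pdss v s x)
    with hW2def
  have hWd : ∀ s ∈ Ioo (-a) a, HasDerivAt W (W1 s) s := by
    intro s hs
    exact (Ideriv1 hL hu hs).add (Ideriv1 hL hv hs)
  have hW1d : ∀ s ∈ Ioo (-a) a, HasDerivAt W1 (W2 s) s := by
    intro s hs
    exact (Ideriv2 hL hu hs).add (Ideriv2 hL hv hs)
  have hW_eq : ∀ s ∈ Icc (-a) a, W s = ∫ x in (0:ℝ)..L, (u s x + v s x) := by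
    intro s hs
    rw [intervalIntegral.integral_add ((hsliceu s hs).intervalIntegrable 0 L)
      ((hslicev s hs).intervalIntegrable 0 L)]
  clear_value W W1 W2
  have hW_nonneg : ∀ s ∈ Icc (-a) a, 0 ≤ W s := by
    intro s hs
    rw [hW_eq s hs]
    apply intervalIntegral.integral_nonneg hL.le
    intro x _
    exact add_nonneg (hnn s hs x).1 (hnn s hs x).2
  have hW_le : ∀ s ∈ Icc (-a) a, W s ≤ Cb * L := by
    intro s hs
    rw [hW_eq s hs]
    have h1 : (∫ x in (0:ℝ)..L, (u s x + v s x)) ≤ ∫ _x in (0:ℝ)..L, Cb := by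
      apply intervalIntegral.integral_mono_on hL.le
        (((hsliceu s hs).add (hslicev s hs)).intervalIntegrable 0 L)
        intervalIntegrable_const
      intro x _
      exact hAP s hs x
    rwa [intervalIntegral.integral_const, sub_zero, smul_eq_mul, mul_comm] at h1
  have hW0ν : W 0 ≤ ν * L := by
    have h0m : (0:ℝ) ∈ Icc (-a) a := ⟨by linarith only [ha], ha.le⟩
    rw [hW_eq 0 h0m]
    have h1 : (∫ x in (0:ℝ)..L, (u 0 x + v 0 x)) ≤ ∫ _x in (0:ℝ)..L, ν := by
      apply intervalIntegral.integral_mono_on hL.le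
        (((hsliceu 0 h0m).add (hslicev 0 h0m)).intervalIntegrable 0 L)
        intervalIntegrable_const
      intro x _
      exact hcon 0 ⟨by linarith only [ha0], ha0⟩ x
    rwa [intervalIntegral.integral_const, sub_zero, smul_eq_mul, mul_comm] at h1
  -- near the left boundary W is large
  have hFco : ContinuousOn (fun z : ℝ × ℝ => u z.1 z.2 + v z.1 z.2)
      (Icc (-a) a ×ˢ Icc (0:ℝ) L) := by
    have h1 : ContinuousOn (fun z : ℝ × ℝ => u z.1 z.2 + v z.1 z.2)
        (Icc (-a) a ×ˢ (univ : Set ℝ)) := hu.continuousOn.add hv.continuousOn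
    exact h1.mono (prod_mono subset_rfl (subset_univ _))
  have hUC := (isCompact_Icc.prod isCompact_Icc :
    IsCompact (Icc (-a) a ×ˢ Icc (0:ℝ) L)).uniformContinuousOn_of_continuous hFco
  rw [Metric.uniformContinuousOn_iff] at hUC
  obtain ⟨δ, hδpos, hδ⟩ := hUC (ν/2) (by positivity)
  set sL := -a + min δ a / 2 with hsLdef
  have hminpos : 0 < min δ a := lt_min hδpos ha
  have hsLmem1 : -a < sL := by simp only [hsLdef]; linarith only [hminpos]
  have hsLmem2 : sL < 0 := by
    have h := min_le_right δ a
    simp only [hsLdef]; linarith only [h, ha]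
  have hsLIcc : sL ∈ Icc (-a) a := ⟨hsLmem1.le, by linarith only [hsLmem2, ha]⟩
  clear_value sL
  have hWsL : 3/2 * ν * L ≤ W sL := by
    rw [hW_eq sL hsLIcc]
    have h1 : (∫ _x in (0:ℝ)..L, (3/2 * ν)) ≤ ∫ x in (0:ℝ)..L, (u sL x + v sL x) := by
      apply intervalIntegral.integral_mono_on hL.le intervalIntegrable_const
        (((hsliceu sL hsLIcc).add (hslicev sL hsLIcc)).intervalIntegrable 0 L)
      intro x hx
      have hmem1 : ((sL, x) : ℝ × ℝ) ∈ Icc (-a) a ×ˢ Icc (0:ℝ) L := ⟨hsLIcc, hx⟩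
      have hmem2 : ((-a, x) : ℝ × ℝ) ∈ Icc (-a) a ×ˢ Icc (0:ℝ) L :=
        ⟨⟨le_refl _, by show -a ≤ a; linarith only [ha]⟩, hx⟩
      have hdist : dist ((sL, x) : ℝ × ℝ) ((-a, x) : ℝ × ℝ) < δ := by
        rw [Prod.dist_eq, dist_self]
        have h2 : dist sL (-a) = min δ a / 2 := by
          rw [Real.dist_eq]
          have h3 : sL - (-a) = min δ a / 2 := by rw [hsLdef]; ring
          rw [h3, abs_of_pos (by linarith only [hminpos])]
        rw [h2]
        have h4 := min_le_left δ a
        rw [max_eq_left (by positivity : (0:ℝ) ≤ min δ a / 2)]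
        linarith only [h4, hminpos]
      have h3 := hδ _ hmem1 _ hmem2 hdist
      rw [Real.dist_eq] at h3
      have h3' : |u sL x + v sL x - (u (-a) x + v (-a) x)| < ν/2 := h3
      rw [(hbc1 x).1, (hbc1 x).2] at h3'
      have h4 := hνx x
      rw [lt_min_iff] at h4
      have h5 : p x + q x ≤ K * p x + K * q x := by nlinarith [hp_pos x, hq_pos x]
      rw [abs_lt] at h3'
      show 3/2 * ν ≤ u sL x + v sL x
      linarith only [h3'.1, h4.1, h4.2, h5]
    rw [intervalIntegral.integral_const, sub_zero, smul_eq_mul] at h1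
    linarith only [h1]
  -- mean value theorem between sL and 0
  have hWc : ContinuousOn W (Icc sL 0) := by
    intro r hr
    have hrIoo : r ∈ Ioo (-a) a := ⟨lt_of_lt_of_le hsLmem1 hr.1, lt_of_le_of_lt hr.2 ha⟩
    exact (hWd r hrIoo).continuousAt.continuousWithinAt
  obtain ⟨s1, hs1mem, hs1eq⟩ := exists_hasDerivAt_eq_slope W W1 hsLmem2 hWc
    (fun r hr => hWd r ⟨lt_of_lt_of_le hsLmem1 hr.1.le, lt_of_le_of_lt hr.2.le ha⟩)
  have hW1s1 : W1 s1 ≤ -d := by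
    rw [hs1eq]
    have hnum : W 0 - W sL ≤ -(ν * L) / 2 := by linarith only [hW0ν, hWsL]
    have hden : 0 < 0 - sL := by linarith only [hsLmem2]
    have hdenle : 0 - sL ≤ a := by linarith only [hsLmem1]
    rw [div_le_iff₀ hden]
    have hda : d * a = ν * L / 2 := by
      rw [hddef]; field_simp
    have h6 : d * (0 - sL) ≤ d * a := mul_le_mul_of_nonneg_left hdenle hd.le
    have h7 : -d * (0 - sL) = -(d * (0 - sL)) := by ring
    rw [h7]
    linarith only [hnum, h6, hda]
  -- STEP C : the differential inequality
  have hIneq : ∀ s ∈ Ioo (-a) a, W1 s ≤ -d/2 → W2 s ≤ -κ := by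
    intro s hs hW1s
    set Ru : ℝ → ℝ := fun x =>
      τ * (u s x * (ru x - γu x * q x / K - μ x - γu x * u s x) + μ x * v s x)
        - (1 - τ) * CC * u s x with hRudef
    set Rv : ℝ → ℝ := fun x =>
      τ * (v s x * (rv x - γv x * p x / K - μ x - γv x * v s x) + μ x * u s x)
        - (1 - τ) * CC * v s x with hRvdef
    clear_value Ru Rv
    have hsIcc := Ioo_subset_Icc_self hs
    have hcu : Continuous fun x => u s x := hsliceu s hsIcc
    have hcv : Continuous fun x => v s x := hslicev s hsIcc
    have hRuc : Continuous Ru := by rw [hRudef]; fun_prop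
    have hRvc : Continuous Rv := by rw [hRvdef]; fun_prop
    have hcpdsu : Continuous fun x => pds u s x := slice_cont (Mc1 hu) hs
    have hcpdsv : Continuous fun x => pds v s x := slice_cont (Mc1 hv) hs
    have hcpdssu : Continuous fun x => pdss u s x := slice_cont (Mc3 hu) hs
    have hcpdssv : Continuous fun x => pdss v s x := slice_cont (Mc3 hv) hs
    have hcpdxxu : Continuous fun x => pdxx u s x := slice_cont (Mc5 hu) hs
    have hcpdxxv : Continuous fun x => pdxx v s x := slice_cont (Mc5 hv) hs
    have hcpdxsu : Continuous fun x => pdxs u s x := slice_cont (Mc4 hu) hs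
    have hcpdxsv : Continuous fun x => pdxs v s x := slice_cont (Mc4 hv) hs
    -- the integrated identity for u
    have hcombu : (1+ε) * (∫ x in (0:ℝ)..L, pdss u s x) + c * (∫ x in (0:ℝ)..L, pds u s x)
        = -(∫ x in (0:ℝ)..L, Ru x) := by
      have hptu : ∀ x : ℝ, (1+ε) * pdss u s x + c * pds u s x
          = -(pdxx u s x) - 2 * pdxs u s x - Ru x := by
        intro x
        have h := heq1 s hs x
        simp only [hRudef]
        linarith only [h]
      have hI1 : ∫ x in (0:ℝ)..L, ((1+ε) * pdss u s x + c * pds u s x)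
          = ∫ x in (0:ℝ)..L, (-(pdxx u s x) - 2 * pdxs u s x - Ru x) := by
        apply intervalIntegral.integral_congr
        intro x _
        exact hptu x
      rw [intervalIntegral.integral_add (f := fun x => (1+ε) * pdss u s x) (g := fun x => c * pds u s x) ((continuous_const.mul hcpdssu).intervalIntegrable 0 L)
        ((continuous_const.mul hcpdsu).intervalIntegrable 0 L),
        intervalIntegral.integral_const_mul, intervalIntegral.integral_const_mul] at hI1
      rw [intervalIntegral.integral_sub
        (f := fun x => -(pdxx u s x) - 2 * pdxs u s x) (g := fun x => Ru x)
        (((hcpdxxu.neg).sub (continuous_const.mul hcpdxsu)).intervalIntegrable 0 L)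
        (hRuc.intervalIntegrable 0 L),
        intervalIntegral.integral_sub (f := fun x => -(pdxx u s x)) (g := fun x => 2 * pdxs u s x) ((hcpdxxu.neg).intervalIntegrable 0 L)
        ((continuous_const.mul hcpdxsu).intervalIntegrable 0 L),
        intervalIntegral.integral_neg, intervalIntegral.integral_const_mul,
        Ixx hL hu hperu hs, Ixs hL hu hperu hs] at hI1
      rw [hI1]
      ring
    have hcombv : (1+ε) * (∫ x in (0:ℝ)..L, pdss v s x) + c * (∫ x in (0:ℝ)..L, pds v s x)
        = -(∫ x in (0:ℝ)..L, Rv x) := by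
      have hptv : ∀ x : ℝ, (1+ε) * pdss v s x + c * pds v s x
          = -(pdxx v s x) - 2 * pdxs v s x - Rv x := by
        intro x
        have h := heq2 s hs x
        simp only [hRvdef]
        linarith only [h]
      have hI1 : ∫ x in (0:ℝ)..L, ((1+ε) * pdss v s x + c * pds v s x)
          = ∫ x in (0:ℝ)..L, (-(pdxx v s x) - 2 * pdxs v s x - Rv x) := by
        apply intervalIntegral.integral_congr
        intro x _
        exact hptv x
      rw [intervalIntegral.integral_add (f := fun x => (1+ε) * pdss v s x) (g := fun x => c * pds v s x) ((continuous_const.mul hcpdssv).intervalIntegrable 0 L)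
        ((continuous_const.mul hcpdsv).intervalIntegrable 0 L),
        intervalIntegral.integral_const_mul, intervalIntegral.integral_const_mul] at hI1
      rw [intervalIntegral.integral_sub
        (f := fun x => -(pdxx v s x) - 2 * pdxs v s x) (g := fun x => Rv x)
        (((hcpdxxv.neg).sub (continuous_const.mul hcpdxsv)).intervalIntegrable 0 L)
        (hRvc.intervalIntegrable 0 L),
        intervalIntegral.integral_sub (f := fun x => -(pdxx v s x)) (g := fun x => 2 * pdxs v s x) ((hcpdxxv.neg).intervalIntegrable 0 L)
        ((continuous_const.mul hcpdxsv).intervalIntegrable 0 L),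
        intervalIntegral.integral_neg, intervalIntegral.integral_const_mul,
        Ixx hL hv hperv hs, Ixs hL hv hperv hs] at hI1
      rw [hI1]
      ring
    -- lower bound for the reaction integral
    have hRlow : ∀ x ∈ Icc (0:ℝ) L, -(Λ * Cb) ≤ Ru x + Rv x := by
      intro x _
      have hU0 : 0 ≤ u s x := (hnn s hsIcc x).1
      have hV0 : 0 ≤ v s x := (hnn s hsIcc x).2
      have hUVCb : u s x + v s x ≤ Cb := hAP s hsIcc x
      have hUCb : u s x ≤ Cb := by linarith only [hUVCb, hV0]
      have hVCb : v s x ≤ Cb := by linarith only [hUVCb, hU0]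
      have hk1 : -(Au x) ≤ ru x - γu x * q x / K - μ x - γu x * u s x := by
        have h1 : -|ru x| ≤ ru x := neg_abs_le _
        have h2 : γu x * u s x ≤ γu x * Cb := mul_le_mul_of_nonneg_left hUCb (hγu_pos x).le
        simp only [hAudef]
        linarith only [h1, h2]
      have hk2 : -(Av x) ≤ rv x - γv x * p x / K - μ x - γv x * v s x := by
        have h1 : -|rv x| ≤ rv x := neg_abs_le _
        have h2 : γv x * v s x ≤ γv x * Cb := mul_le_mul_of_nonneg_left hVCb (hγv_pos x).le
        simp only [hAvdef]
        linarith only [h1, h2]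
      have hRu_low : -(u s x * (Su + CC)) ≤ Ru x := by
        have h3 : -(u s x * Au x) ≤ u s x * (ru x - γu x * q x / K - μ x - γu x * u s x) := by
          have m := mul_le_mul_of_nonneg_left hk1 hU0
          linarith only [m]
        have h4 : 0 ≤ μ x * v s x := mul_nonneg (hμ_pos x).le hV0
        have hAuS : u s x * Au x ≤ u s x * Su := mul_le_mul_of_nonneg_left (hSu_ge x) hU0
        have h5 : 0 ≤ u s x * Au x := mul_nonneg hU0 (hAu0 x)
        have hτ0 := hτ.1
        have hτ1 := hτ.2
        have h6 : τ * (u s x * (ru x - γu x * q x / K - μ x - γu x * u s x) + μ x * v s x)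
            ≥ -(u s x * Au x) := by
          have m1 : 0 ≤ τ * ((u s x * (ru x - γu x * q x / K - μ x - γu x * u s x) + μ x * v s x)
              + u s x * Au x) := mul_nonneg hτ0 (by linarith only [h3, h4])
          have m2 : 0 ≤ (1 - τ) * (u s x * Au x) :=
            mul_nonneg (by linarith only [hτ1]) h5
          linarith only [m1, m2]
        have h7 : (1 - τ) * CC * u s x ≤ CC * u s x := by
          have m := mul_nonneg hτ0 (mul_nonneg hCC0 hU0)
          linarith only [m]
        simp only [hRudef]
        linarith only [h6, h7, hAuS]
      have hRv_low : -(v s x * (Sv + CC)) ≤ Rv x := by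
        have h3 : -(v s x * Av x) ≤ v s x * (rv x - γv x * p x / K - μ x - γv x * v s x) := by
          have m := mul_le_mul_of_nonneg_left hk2 hV0
          linarith only [m]
        have h4 : 0 ≤ μ x * u s x := mul_nonneg (hμ_pos x).le hU0
        have hAvS : v s x * Av x ≤ v s x * Sv := mul_le_mul_of_nonneg_left (hSv_ge x) hV0
        have h5 : 0 ≤ v s x * Av x := mul_nonneg hV0 (hAv0 x)
        have hτ0 := hτ.1
        have hτ1 := hτ.2
        have h6 : τ * (v s x * (rv x - γv x * p x / K - μ x - γv x * v s x) + μ x * u s x)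
            ≥ -(v s x * Av x) := by
          have m1 : 0 ≤ τ * ((v s x * (rv x - γv x * p x / K - μ x - γv x * v s x) + μ x * u s x)
              + v s x * Av x) := mul_nonneg hτ0 (by linarith only [h3, h4])
          have m2 : 0 ≤ (1 - τ) * (v s x * Av x) :=
            mul_nonneg (by linarith only [hτ1]) h5
          linarith only [m1, m2]
        have h7 : (1 - τ) * CC * v s x ≤ CC * v s x := by
          have m := mul_nonneg hτ0 (mul_nonneg hCC0 hV0)
          linarith only [m]
        simp only [hRvdef]
        linarith only [h6, h7, hAvS]
      have h8 : u s x * (Su + CC) + v s x * (Sv + CC) ≤ Λ * Cb := by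
        have h9 : u s x * (Su + CC) ≤ u s x * Λ := by
          apply mul_le_mul_of_nonneg_left _ hU0
          simp only [hΛdef]; linarith only [hSv0]
        have h10 : v s x * (Sv + CC) ≤ v s x * Λ := by
          apply mul_le_mul_of_nonneg_left _ hV0
          simp only [hΛdef]; linarith only [hSu0]
        have h11 : u s x * Λ + v s x * Λ = (u s x + v s x) * Λ := by ring
        have h12 : (u s x + v s x) * Λ ≤ Cb * Λ := mul_le_mul_of_nonneg_right hUVCb hΛ0
        linarith only [h9, h10, h11, h12]
      linarith only [hRu_low, hRv_low, h8]
    have hIR : -(Λ * (Cb * L)) ≤ (∫ x in (0:ℝ)..L, Ru x) + (∫ x in (0:ℝ)..L, Rv x) := by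
      rw [← intervalIntegral.integral_add (hRuc.intervalIntegrable 0 L)
        (hRvc.intervalIntegrable 0 L)]
      have h1 : (∫ _x in (0:ℝ)..L, -(Λ * Cb)) ≤ ∫ x in (0:ℝ)..L, (Ru x + Rv x) := by
        apply intervalIntegral.integral_mono_on hL.le intervalIntegrable_const
          ((hRuc.add hRvc).intervalIntegrable 0 L)
        exact hRlow
      rw [intervalIntegral.integral_const, sub_zero, smul_eq_mul] at h1
      calc -(Λ * (Cb * L)) = L * -(Λ * Cb) := by ring
        _ ≤ _ := h1
    -- combine
    have hsum2 : (1+ε) * W2 s + c * W1 s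
        = -((∫ x in (0:ℝ)..L, Ru x) + (∫ x in (0:ℝ)..L, Rv x)) := by
      simp only [hW1def, hW2def]
      linarith only [hcombu, hcombv]
    have hmain : (1+ε) * W2 s + c * W1 s ≤ Λ * (Cb * L) := by
      rw [hsum2]; linarith only [hIR]
    set cund' := (2 / d) * (Λ * (Cb * L) + 2 * κ) with hcund'def
    clear_value cund'
    have hcW1 : cund' * (d/2) ≤ c * W1 s := by
      have hcund'0 : (0:ℝ) ≤ cund' := by
        rw [hcund'def]
        have m1 : (0:ℝ) ≤ Λ * (Cb * L) := mul_nonneg hΛ0 (by positivity)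
        have m2 : (0:ℝ) ≤ 2 / d := by positivity
        apply mul_nonneg m2
        linarith only [m1, hκpos]
      have t1 : 0 ≤ (-(c + cund')) * (-(W1 s)) :=
        mul_nonneg (by linarith only [hccund]) (by linarith only [hW1s, hd])
      have t2 : 0 ≤ cund' * (-(W1 s + d/2)) :=
        mul_nonneg hcund'0 (by linarith only [hW1s])
      linarith only [t1, t2]
    have hcundd : cund' * (d/2) = Λ * (Cb * L) + 2 * κ := by
      rw [hcund'def]
      field_simp
    have h1e : (1+ε) * W2 s ≤ -(2*κ) := by
      rw [hcundd] at hcW1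
      linarith only [hcW1, hmain]
    by_contra hW2c
    push_neg at hW2c
    have m1 : ε * (-κ) ≤ ε * W2 s := mul_le_mul_of_nonneg_left hW2c.le hε.1.le
    have m2 : 0 ≤ κ * (1 - ε) := mul_nonneg hκpos.le (by linarith only [hε.2])
    linarith only [h1e, m1, m2, hW2c]
  -- apply the ODE drop and conclude
  have hs1Ioo : s1 ∈ Ioo (-a) a := ⟨lt_trans hsLmem1 hs1mem.1, lt_trans hs1mem.2 ha⟩
  have htIoo : ρ ∈ Ioo (-a) a := by
    constructor
    · rw [hρdef]; linarith only [ha0, ha]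
    · rw [hρdef]; linarith only [ha0a, ha]
  have hst : s1 < ρ := lt_trans hs1mem.2 hρ
  have hdrop := ode_drop hWd hW1d hs1Ioo htIoo hst hd hκpos.le hW1s1 hIneq
  have hWt0 : 0 ≤ W ρ := hW_nonneg ρ (Ioo_subset_Icc_self htIoo)
  have hWs1le : W s1 ≤ Cb * L := hW_le s1 (Ioo_subset_Icc_self hs1Ioo)
  have hts1 : ρ ≤ ρ - s1 := by linarith only [hs1mem.2]
  have hκρ : κ * ρ^2 / 2 = Cb * L + ρ^2/2 := by
    rw [hκdef]
    field_simp
  have hsq : ρ^2 ≤ (ρ - s1)^2 := by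
    have m := mul_le_mul hts1 hts1 hρ.le (by linarith only [hρ, hts1])
    calc ρ^2 = ρ * ρ := sq ρ
      _ ≤ (ρ - s1) * (ρ - s1) := m
      _ = (ρ - s1)^2 := (sq (ρ - s1)).symm
  have hd1 : 0 ≤ d * (ρ - s1) := mul_nonneg hd.le (by linarith only [hst])
  have hκsq : κ * ρ^2 ≤ κ * (ρ - s1)^2 := mul_le_mul_of_nonneg_left hsq hκpos.le
  have hρ2 : (0:ℝ) < ρ^2 := by positivity
  linarith only [hdrop, hWt0, hWs1le, hd1, hκsq, hκρ, hρ2]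
end
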